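/- arXiv:2407.11889 — 10 statements merged into one kernel-verified Lean document; each statement's English description precedes it below -/
import Mathlib

section
/- If a, b, c are vectors of nonnegative reals, with b and c having entries summing to the same value, then emd(a+b, a+c) = emd(b,c); moreover for any nonnegative scalar λ, emd(λb, λc) = λ·emd(b,c). -/
open Finset

noncomputable section
open scoped Classical

/-- A transportation plan from x to y: nonnegative, with marginals x and y. -/
def IsPlan {n : ℕ} (x y : Fin n → ℝ) (f : Fin n → Fin n → ℝ) : Prop :=
  (∀ i j, 0 ≤ f i j) ∧ (∀ i, ∑ j, f i j = x i) ∧ (∀ j, ∑ i, f i j = y j)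

/-- Cost of a plan: moving value Δ from position i to position j costs Δ·|i−j|. -/
def planCost {n : ℕ} (f : Fin n → Fin n → ℝ) : ℝ :=
  ∑ i, ∑ j, f i j * |((i : ℕ) : ℝ) - ((j : ℕ) : ℝ)|

/-- Earth mover's distance: minimal cost over all transportation plans. -/
def emd {n : ℕ} (x y : Fin n → ℝ) : ℝ :=
  sInf {c | ∃ f, IsPlan x y f ∧ planCost f = c}


def pref {n : ℕ} (x : Fin n → ℝ) (k : Fin n) : ℝ := ∑ i, if i ≤ k then x i else 0

def emdD {n : ℕ} (x y : Fin n → ℝ) : ℝ := ∑ k, |pref x k - pref y k|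

lemma ind_sum {n : ℕ} (i : Fin n) :
    ∑ k, (if i ≤ k then (1:ℝ) else 0) = ((n : ℝ) - (i : ℕ)) := by
  rw [Finset.sum_ite, Finset.sum_const_zero, add_zero, Finset.sum_const, nsmul_eq_mul, mul_one]
  have : Finset.filter (fun k => i ≤ k) Finset.univ = Finset.Ici i := by
    ext k; simp
  rw [this, Fin.card_Ici]
  have : (i : ℕ) ≤ n := le_of_lt i.isLt
  push_cast [Nat.cast_sub this]
  ring

lemma abs_sub_eq_sum_aux {n : ℕ} (i j : Fin n) (hij : i ≤ j) :
    ∑ k, |(if i ≤ k then (1:ℝ) else 0) - (if j ≤ k then 1 else 0)| =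
      ((j : ℕ) : ℝ) - ((i : ℕ) : ℝ) := by
  have h1 : ∀ k : Fin n, |(if i ≤ k then (1:ℝ) else 0) - (if j ≤ k then 1 else 0)| =
      (if i ≤ k then (1:ℝ) else 0) - (if j ≤ k then 1 else 0) := by
    intro k
    rcases le_or_gt j k with h | h
    · simp [h, le_trans hij h]
    · rcases le_or_gt i k with h2 | h2
      · simp [h2, not_le.mpr h]
      · simp [not_le.mpr h, not_le.mpr h2]
  simp only [h1, Finset.sum_sub_distrib, ind_sum]
  ring

lemma abs_sub_eq_sum {n : ℕ} (i j : Fin n) :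
    |((i : ℕ) : ℝ) - ((j : ℕ) : ℝ)| =
      ∑ k, |(if i ≤ k then (1:ℝ) else 0) - (if j ≤ k then 1 else 0)| := by
  rcases le_total i j with h | h
  · rw [abs_sub_eq_sum_aux i j h, abs_sub_comm, abs_of_nonneg]
    have h2 : ((i:ℕ):ℝ) ≤ ((j:ℕ):ℝ) := Nat.cast_le.mpr (Fin.le_def.mp h)
    linarith
  · rw [abs_of_nonneg, ← abs_sub_eq_sum_aux j i h]
    · congr 1; ext k; rw [abs_sub_comm]
    · have := Fin.le_def.mp h
      have : ((j:ℕ):ℝ) ≤ ((i:ℕ):ℝ) := Nat.cast_le.mpr this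
      linarith

lemma emdD_le_planCost {n : ℕ} {x y : Fin n → ℝ} {f : Fin n → Fin n → ℝ}
    (hf : IsPlan x y f) : emdD x y ≤ planCost f := by
  obtain ⟨h0, hx, hy⟩ := hf
  have key : planCost f =
      ∑ k, ∑ i, ∑ j, |f i j * ((if i ≤ k then (1:ℝ) else 0) - (if j ≤ k then 1 else 0))| := by
    have : planCost f =
        ∑ i, ∑ j, ∑ k, |f i j * ((if i ≤ k then (1:ℝ) else 0) - (if j ≤ k then 1 else 0))| := by
      refine Finset.sum_congr rfl fun i _ => Finset.sum_congr rfl fun j _ => ?_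
      rw [abs_sub_eq_sum, Finset.mul_sum]
      refine Finset.sum_congr rfl fun k _ => ?_
      rw [abs_mul, abs_of_nonneg (h0 i j)]
    rw [this]
    rw [show (∑ i : Fin n, ∑ j : Fin n, ∑ k : Fin n,
          |f i j * ((if i ≤ k then (1:ℝ) else 0) - (if j ≤ k then 1 else 0))|)
        = ∑ i : Fin n, ∑ k : Fin n, ∑ j : Fin n,
          |f i j * ((if i ≤ k then (1:ℝ) else 0) - (if j ≤ k then 1 else 0))|
      from Finset.sum_congr rfl fun i _ => Finset.sum_comm]
    exact Finset.sum_comm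
  rw [key, emdD]
  refine Finset.sum_le_sum fun k _ => ?_
  have hval : pref x k - pref y k =
      ∑ i, ∑ j, f i j * ((if i ≤ k then (1:ℝ) else 0) - (if j ≤ k then 1 else 0)) := by
    have h1 : ∑ i, ∑ j, f i j * (if i ≤ k then (1:ℝ) else 0) = pref x k := by
      rw [pref]
      refine Finset.sum_congr rfl fun i _ => ?_
      rw [← Finset.sum_mul, hx i]
      by_cases h : i ≤ k <;> simp [h]
    have h2 : ∑ i, ∑ j, f i j * (if j ≤ k then (1:ℝ) else 0) = pref y k := by
      rw [Finset.sum_comm, pref]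
      refine Finset.sum_congr rfl fun j _ => ?_
      rw [← Finset.sum_mul, hy j]
      by_cases h : j ≤ k <;> simp [h]
    simp only [mul_sub, Finset.sum_sub_distrib, h1, h2]
  rw [hval]
  calc |∑ i, ∑ j, f i j * ((if i ≤ k then (1:ℝ) else 0) - (if j ≤ k then 1 else 0))|
      ≤ ∑ i, |∑ j, f i j * ((if i ≤ k then (1:ℝ) else 0) - (if j ≤ k then 1 else 0))| :=
        Finset.abs_sum_le_sum_abs _ _
    _ ≤ ∑ i, ∑ j, |f i j * ((if i ≤ k then (1:ℝ) else 0) - (if j ≤ k then 1 else 0))| :=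
        Finset.sum_le_sum fun i _ => Finset.abs_sum_le_sum_abs _ _

lemma pref_succ {n : ℕ} (x : Fin (n+2) → ℝ) (k : Fin (n+1)) :
    pref x k.succ = x 0 + pref (fun i => x i.succ) k := by
  rw [pref, pref, Fin.sum_univ_succ]
  simp [Fin.zero_le, Fin.succ_le_succ_iff]

lemma pref_zero {n : ℕ} (x : Fin (n+2) → ℝ) :
    pref x 0 = x 0 := by
  rw [pref, Fin.sum_univ_succ]
  simp [Fin.le_zero_iff, Fin.succ_ne_zero]

lemma core (n : ℕ)
    (IH : ∀ x y : Fin (n+1) → ℝ, (∀ i, 0 ≤ x i) → (∀ i, 0 ≤ y i) →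
      ∑ i, x i = ∑ i, y i → ∃ f, IsPlan x y f ∧ planCost f ≤ emdD x y)
    (x y : Fin (n+2) → ℝ) (hx : ∀ i, 0 ≤ x i) (hy : ∀ i, 0 ≤ y i)
    (hsum : ∑ i, x i = ∑ i, y i) (h0 : y 0 ≤ x 0) :
    ∃ f, IsPlan x y f ∧ planCost f ≤ emdD x y := by
  set e : ℝ := x 0 - y 0 with he_def
  have he : 0 ≤ e := by simp [he_def]; linarith
  set x' : Fin (n+1) → ℝ := fun i => x i.succ + if i = 0 then e else 0 with hx'_def
  set y' : Fin (n+1) → ℝ := fun j => y j.succ with hy'_def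
  have hx'0 : ∀ i, 0 ≤ x' i := by
    intro i; rw [hx'_def]; dsimp only
    have := hx i.succ; split <;> simp <;> linarith
  have hy'0 : ∀ i, 0 ≤ y' i := fun i => hy i.succ
  set s : ℝ := x' 0 with hs_def
  have hs : 0 ≤ s := hx'0 0
  have hes : e ≤ s := by
    have h1 : s = x 1 + e := by
      rw [hs_def, hx'_def]; simp [Fin.succ_zero_eq_one]
    have := hx 1; linarith
  set r : ℝ := if s = 0 then 0 else e / s with hr_def
  have hr0 : 0 ≤ r := by
    rw [hr_def]; split
    · exact le_refl 0
    · exact div_nonneg he hs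
  have hr1 : r ≤ 1 := by
    rw [hr_def]; split
    · norm_num
    · rename_i h; exact (div_le_one (lt_of_le_of_ne hs (Ne.symm h))).mpr hes
  have hrs : r * s = e := by
    rw [hr_def]; split
    · rename_i h; rw [h] at hes; simp; linarith
    · rename_i h; field_simp
  have hsum' : ∑ i, x' i = ∑ i, y' i := by
    rw [Fin.sum_univ_succ x, Fin.sum_univ_succ y] at hsum
    rw [hx'_def, hy'_def]
    rw [Finset.sum_add_distrib, Finset.sum_ite_eq' Finset.univ (0 : Fin (n+1))]
    simp only [Finset.mem_univ, if_true]
    linarith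
  obtain ⟨g, ⟨hg0, hgx, hgy⟩, hgc⟩ := IH x' y' hx'0 hy'0 hsum'
  set f : Fin (n+2) → Fin (n+2) → ℝ :=
    Fin.cons (Fin.cons (y 0) (fun j' => r * g 0 j'))
             (fun i' => Fin.cons 0 (fun j' => (if i' = 0 then 1 - r else 1) * g i' j'))
    with hf_def
  have f00 : f 0 0 = y 0 := by rw [hf_def]; simp
  have f0s : ∀ j : Fin (n+1), f 0 j.succ = r * g 0 j := by intro j; rw [hf_def]; simp
  have fs0 : ∀ i : Fin (n+1), f i.succ 0 = 0 := by intro i; rw [hf_def]; simp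
  have fss : ∀ i j : Fin (n+1), f i.succ j.succ = (if i = 0 then 1 - r else 1) * g i j := by
    intro i j; rw [hf_def]; simp
  have hcoef : ∀ i' : Fin (n+1), 0 ≤ (if i' = 0 then 1 - r else (1:ℝ)) := by
    intro i'; split <;> linarith
  have h1 : s = x 1 + e := by
    rw [hs_def, hx'_def]; simp [Fin.succ_zero_eq_one]
  have hplan : IsPlan x y f := by
    refine ⟨?_, ?_, ?_⟩
    · intro i j
      refine Fin.cases ?_ (fun i' => ?_) i <;> refine Fin.cases ?_ (fun j' => ?_) j
      · rw [f00]; exact hy 0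
      · rw [f0s]; exact mul_nonneg hr0 (hg0 0 j')
      · rw [fs0]
      · rw [fss]; exact mul_nonneg (hcoef i') (hg0 i' j')
    · intro i
      refine Fin.cases ?_ (fun i' => ?_) i
      · rw [Fin.sum_univ_succ, f00]
        simp only [f0s]
        rw [← Finset.mul_sum, hgx 0, ← hs_def, hrs, he_def]
        ring
      · rw [Fin.sum_univ_succ, fs0, zero_add]
        simp only [fss]
        rw [← Finset.mul_sum, hgx i']
        by_cases hi : i' = 0
        · subst hi
          rw [if_pos rfl, ← hs_def, Fin.succ_zero_eq_one]
          have hh : (1 - r) * s = s - e := by rw [sub_mul, one_mul, hrs]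
          linarith
        · rw [if_neg hi, one_mul, hx'_def]
          simp [hi]
    · intro j
      refine Fin.cases ?_ (fun j' => ?_) j
      · rw [Fin.sum_univ_succ, f00]
        simp only [fs0]
        simp
      · rw [Fin.sum_univ_succ, f0s]
        simp only [fss]
        rw [Fin.sum_univ_succ (fun i' : Fin (n+1) => (if i' = 0 then 1 - r else 1) * g i' j')]
        simp only [if_pos rfl, Fin.succ_ne_zero, if_false, if_true, eq_self_iff_true, one_mul]
        have hgy' := hgy j'
        rw [Fin.sum_univ_succ] at hgy'
        rw [hy'_def] at hgy'
        have hexp : r * g 0 j' + ((1 - r) * g 0 j' + ∑ i'' : Fin n, g i''.succ j')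
            = g 0 j' + ∑ i'' : Fin n, g i''.succ j' := by ring
        rw [hexp]
        exact hgy'
  have hA : (∑ j : Fin (n+2), f 0 j * |((((0:Fin (n+2)) : ℕ)):ℝ) - ((j:ℕ):ℝ)|)
      = ∑ j' : Fin (n+1), r * g 0 j' * (((j':ℕ):ℝ) + 1) := by
    rw [Fin.sum_univ_succ]
    simp only [f00, f0s, Fin.val_succ, Fin.val_zero, Nat.cast_zero]
    rw [show |(0:ℝ) - (0:ℝ)| = 0 by norm_num, mul_zero, zero_add]
    refine Finset.sum_congr rfl fun j' _ => ?_
    have habs : |(0:ℝ) - (((j' : ℕ) + 1 : ℕ):ℝ)| = ((j':ℕ):ℝ) + 1 := by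
      rw [abs_sub_comm, sub_zero]
      rw [abs_of_nonneg (by positivity)]
      push_cast; ring
    rw [habs]
  have hB : ∀ i' : Fin (n+1), (∑ j : Fin (n+2), f i'.succ j * |((i'.succ : ℕ):ℝ) - ((j:ℕ):ℝ)|)
      = (if i' = 0 then 1 - r else 1) * ∑ j' : Fin (n+1), g i' j' * |((i':ℕ):ℝ) - ((j':ℕ):ℝ)| := by
    intro i'
    rw [Fin.sum_univ_succ, fs0, zero_mul, zero_add, Finset.mul_sum]
    refine Finset.sum_congr rfl fun j' _ => ?_
    rw [fss]
    have habs : |((i'.succ : ℕ):ℝ) - ((j'.succ : ℕ):ℝ)| = |((i':ℕ):ℝ) - ((j':ℕ):ℝ)| := by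
      congr 1
      simp only [Fin.val_succ]
      push_cast; ring
    rw [habs]; ring
  have hS0 : (∑ j' : Fin (n+1), g 0 j' * |(((0:Fin (n+1)):ℕ):ℝ) - ((j':ℕ):ℝ)|)
      = ∑ j' : Fin (n+1), g 0 j' * ((j':ℕ):ℝ) := by
    refine Finset.sum_congr rfl fun j' _ => ?_
    congr 1
    simp only [Fin.val_zero, Nat.cast_zero]
    rw [abs_sub_comm, sub_zero, abs_of_nonneg (by positivity)]
  have hcost : planCost f = planCost g + e := by
    rw [planCost, Fin.sum_univ_succ, hA]
    rw [Finset.sum_congr rfl (fun i' _ => hB i')]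
    have hsplit : ∀ i' : Fin (n+1),
        (if i' = 0 then 1 - r else (1:ℝ)) * (∑ j' : Fin (n+1), g i' j' * |((i':ℕ):ℝ) - ((j':ℕ):ℝ)|)
        = (∑ j' : Fin (n+1), g i' j' * |((i':ℕ):ℝ) - ((j':ℕ):ℝ)|)
          - (if i' = 0 then r * (∑ j' : Fin (n+1), g 0 j' * |(((0:Fin (n+1)):ℕ):ℝ) - ((j':ℕ):ℝ)|) else 0) := by
      intro i'
      rcases eq_or_ne i' 0 with h | h
      · subst h; rw [if_pos rfl, if_pos rfl]; ring
      · simp only [if_neg h]; ring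
    rw [Finset.sum_congr rfl (fun i' _ => hsplit i'), Finset.sum_sub_distrib,
      Finset.sum_ite_eq' Finset.univ (0 : Fin (n+1))]
    simp only [Finset.mem_univ, if_true]
    rw [hS0, Finset.mul_sum]
    have : planCost g = ∑ i' : Fin (n+1), ∑ j' : Fin (n+1), g i' j' * |((i':ℕ):ℝ) - ((j':ℕ):ℝ)| := rfl
    rw [← this]
    have hcomb : (∑ j' : Fin (n+1), r * g 0 j' * (((j':ℕ):ℝ) + 1))
        - (∑ j' : Fin (n+1), r * (g 0 j' * ((j':ℕ):ℝ)))
        = r * ∑ j' : Fin (n+1), g 0 j' := by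
      rw [← Finset.sum_sub_distrib, Finset.mul_sum]
      refine Finset.sum_congr rfl fun j' _ => ?_
      ring
    have := hcomb
    rw [hgx 0, ← hs_def, hrs] at this
    linarith
  have hprefx' : ∀ k' : Fin (n+1), pref x' k' = pref (fun i => x i.succ) k' + e := by
    intro k'
    rw [pref, pref, hx'_def]
    have hsplit : ∀ i : Fin (n+1),
        (if i ≤ k' then (x i.succ + if i = 0 then e else 0) else 0)
        = (if i ≤ k' then x i.succ else 0) + (if i = 0 then e else 0) := by
      intro i
      rcases eq_or_ne i 0 with h | h
      · subst h; simp [Fin.zero_le]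
      · simp only [if_neg h, add_zero]
    rw [Finset.sum_congr rfl (fun i _ => hsplit i), Finset.sum_add_distrib,
      Finset.sum_ite_eq' Finset.univ (0 : Fin (n+1))]
    simp
  have hD : emdD x y = e + emdD x' y' := by
    rw [emdD, Fin.sum_univ_succ, emdD]
    congr 1
    · rw [pref_zero, pref_zero, he_def, abs_of_nonneg (by rw [← he_def]; exact he)]
    · refine Finset.sum_congr rfl fun k' _ => ?_
      rw [pref_succ x k', pref_succ y k', hprefx']
      have : pref y' k' = pref (fun i => y i.succ) k' := by rw [hy'_def]
      rw [this]
      congr 1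
      rw [he_def]; ring
  refine ⟨f, hplan, ?_⟩
  rw [hcost, hD]
  linarith


lemma plan_transpose {n : ℕ} {x y : Fin n → ℝ} {g : Fin n → Fin n → ℝ}
    (h : IsPlan y x g) : IsPlan x y (fun i j => g j i) :=
  ⟨fun i j => h.1 j i, fun i => h.2.2 i, fun j => h.2.1 j⟩

lemma planCost_transpose {n : ℕ} (g : Fin n → Fin n → ℝ) :
    planCost (fun i j => g j i) = planCost g := by
  rw [planCost, planCost, Finset.sum_comm]
  exact Finset.sum_congr rfl fun j _ => Finset.sum_congr rfl fun i _ => by rw [abs_sub_comm]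

lemma emdD_comm {n : ℕ} (x y : Fin n → ℝ) : emdD x y = emdD y x :=
  Finset.sum_congr rfl fun k _ => abs_sub_comm _ _

lemma exists_plan : ∀ (n : ℕ) (x y : Fin n → ℝ), (∀ i, 0 ≤ x i) → (∀ i, 0 ≤ y i) →
    ∑ i, x i = ∑ i, y i → ∃ f, IsPlan x y f ∧ planCost f ≤ emdD x y := by
  intro n
  induction n with
  | zero =>
    intro x y _ _ _
    exact ⟨fun _ _ => 0, ⟨fun i j => le_refl 0, fun i => i.elim0, fun j => j.elim0⟩,
      by simp [planCost, emdD]⟩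
  | succ m IHm =>
    cases m with
    | zero =>
      intro x y hx hy hsum
      have hxy : x 0 = y 0 := by simpa [Fin.sum_univ_one] using hsum
      refine ⟨fun _ _ => x 0, ⟨fun i j => hx 0, ?_, ?_⟩, ?_⟩
      · intro i; rw [Fin.sum_univ_one, Fin.fin_one_eq_zero i]
      · intro j; rw [Fin.sum_univ_one, hxy, Fin.fin_one_eq_zero j]
      · have hc : planCost (fun _ _ : Fin 1 => x 0) = 0 := by
          simp [planCost, Fin.sum_univ_one]
        rw [hc]
        exact Finset.sum_nonneg fun k _ => abs_nonneg _
    | succ m' =>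
      intro x y hx hy hsum
      rcases le_total (y 0) (x 0) with h | h
      · exact core m' IHm x y hx hy hsum h
      · obtain ⟨g, hg, hgc⟩ := core m' IHm y x hy hx hsum.symm h
        refine ⟨fun i j => g j i, plan_transpose hg, ?_⟩
        rw [planCost_transpose, emdD_comm]
        exact hgc

lemma emd_eq_emdD {n : ℕ} (x y : Fin n → ℝ) (hx : ∀ i, 0 ≤ x i) (hy : ∀ i, 0 ≤ y i)
    (hsum : ∑ i, x i = ∑ i, y i) : emd x y = emdD x y := by
  obtain ⟨f, hf, hfc⟩ := exists_plan n x y hx hy hsum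
  have hbdd : BddBelow {c | ∃ f, IsPlan x y f ∧ planCost f = c} := by
    refine ⟨emdD x y, ?_⟩
    rintro c ⟨f', hf', rfl⟩
    exact emdD_le_planCost hf'
  apply le_antisymm
  · exact le_trans (csInf_le hbdd ⟨f, hf, rfl⟩) hfc
  · refine le_csInf ⟨planCost f, f, hf, rfl⟩ ?_
    rintro c ⟨f', hf', rfl⟩
    exact emdD_le_planCost hf'

lemma pref_add {n : ℕ} (a b : Fin n → ℝ) (k : Fin n) :
    pref (fun i => a i + b i) k = pref a k + pref b k := by
  rw [pref, pref, pref, ← Finset.sum_add_distrib]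
  refine Finset.sum_congr rfl fun i _ => ?_
  split <;> simp

lemma pref_smul {n : ℕ} (lam : ℝ) (b : Fin n → ℝ) (k : Fin n) :
    pref (fun i => lam * b i) k = lam * pref b k := by
  rw [pref, pref, Finset.mul_sum]
  refine Finset.sum_congr rfl fun i _ => ?_
  split <;> simp

/-- For nonnegative vectors a, b, c with b and c of equal total mass:
emd(a+b, a+c) = emd(b,c), and for nonnegative λ, emd(λb, λc) = λ·emd(b,c). -/
theorem stmt1 {n : ℕ} (a b c : Fin n → ℝ) (lam : ℝ)
    (ha : ∀ i, 0 ≤ a i) (hb : ∀ i, 0 ≤ b i) (hc : ∀ i, 0 ≤ c i)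
    (hlam : 0 ≤ lam) (hsum : ∑ i, b i = ∑ i, c i) :
    emd (fun i => a i + b i) (fun i => a i + c i) = emd b c ∧
    emd (fun i => lam * b i) (fun i => lam * c i) = lam * emd b c := by
  have hbc := emd_eq_emdD b c hb hc hsum
  constructor
  · have hsum2 : ∑ i, (a i + b i) = ∑ i, (a i + c i) := by
      rw [Finset.sum_add_distrib, Finset.sum_add_distrib, hsum]
    rw [emd_eq_emdD _ _ (fun i => add_nonneg (ha i) (hb i)) (fun i => add_nonneg (ha i) (hc i)) hsum2,
      hbc, emdD, emdD]
    refine Finset.sum_congr rfl fun k _ => ?_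
    rw [pref_add, pref_add]
    congr 1
    ring
  · have hsum3 : ∑ i, lam * b i = ∑ i, lam * c i := by
      rw [← Finset.mul_sum, ← Finset.mul_sum, hsum]
    rw [emd_eq_emdD _ _ (fun i => mul_nonneg hlam (hb i)) (fun i => mul_nonneg hlam (hc i)) hsum3,
      hbc, emdD, emdD, Finset.mul_sum]
    refine Finset.sum_congr rfl fun k _ => ?_
    rw [pref_smul, pref_smul, ← mul_sub, abs_mul, abs_of_nonneg hlam]

end
end

section
/- Let X = (x_1,...,x_m) and Y = (y_1,...,y_m) be two m×m frequency matrices (columns are probability distributions over positions) such that the positionwise distance d_pos(X,Y) is achieved by the identity matching of columns, i.e., d_pos(X,Y) = Σ_{i=1}^m emd(x_i, y_i). Then for every α ∈ [0,1], d_pos(X,Y) = d_pos(X, αX + (1−α)Y) + d_pos(αX + (1−α)Y, Y). -/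
open Finset

noncomputable section
open scoped Classical

/-- Positionwise distance between m×m matrices given by their columns:
minimum over bijections of columns of the sum of EMDs of matched columns. -/
def dpos {m : ℕ} (X Y : Fin m → Fin m → ℝ) : ℝ :=
  ⨅ δ : Equiv.Perm (Fin m), ∑ i, emd (X i) (Y (δ i))

/-!
For every column pair the mixture `z = α x + (1 - α) y` lies on a geodesic of the earth mover's
distance: an optimal plan `f` from `x` to `y` splits into the plan `α diag x + (1 - α) f` from `x`
to `z`, of cost `(1 - α) cost f`, and the plan `α f + (1 - α) diag y` from `z` to `y`, of cost
`α cost f`. Together with the triangle inequality for `emd` (gluing plans through the middle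
marginal) this gives `emd x y = emd x z + emd z y` columnwise. Summing along the identity matching
bounds `dpos X Z + dpos Z Y` by `dpos X Y`; conversely, composing optimal matchings `X → Z → Y`
and applying the columnwise triangle inequality gives the reverse bound.
-/

section Plans

variable {n : ℕ} {x y z x' y' : Fin n → ℝ} {f g : Fin n → Fin n → ℝ}

lemma IsPlan.le_left (hf : IsPlan x y f) (i j : Fin n) : f i j ≤ x i :=
  hf.2.1 i ▸ single_le_sum (fun k _ => hf.1 i k) (mem_univ j)

lemma IsPlan.le_right (hf : IsPlan x y f) (i j : Fin n) : f i j ≤ y j :=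
  hf.2.2 j ▸ single_le_sum (fun k _ => hf.1 k j) (mem_univ i)

lemma IsPlan.nonneg_right (hf : IsPlan x y f) (j : Fin n) : 0 ≤ y j :=
  hf.2.2 j ▸ sum_nonneg fun i _ => hf.1 i j

lemma isPlan_mul (hx : x ∈ stdSimplex ℝ (Fin n)) (hy : y ∈ stdSimplex ℝ (Fin n)) :
    IsPlan x y (fun i j => x i * y j) :=
  ⟨fun i j => mul_nonneg (hx.1 i) (hy.1 j),
    fun i => by rw [← mul_sum, hy.2, mul_one], fun j => by rw [← sum_mul, hx.2, one_mul]⟩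

lemma isPlan_diag (hx : ∀ i, 0 ≤ x i) : IsPlan x x (fun i j => if i = j then x i else 0) :=
  ⟨fun i j => by by_cases h : i = j <;> simp [h, hx], fun i => by simp, fun j => by simp⟩

lemma planCost_diag : planCost (fun i j : Fin n => if i = j then x i else 0) = 0 :=
  sum_eq_zero fun i _ => sum_eq_zero fun j _ => by by_cases h : i = j <;> simp [h]

lemma IsPlan.convexComb (hf : IsPlan x y f) (hg : IsPlan x' y' g) {a b : ℝ} (ha : 0 ≤ a)
    (hb : 0 ≤ b) :
    IsPlan (fun i => a * x i + b * x' i) (fun j => a * y j + b * y' j)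
      (fun i j => a * f i j + b * g i j) :=
  ⟨fun i j => add_nonneg (mul_nonneg ha (hf.1 i j)) (mul_nonneg hb (hg.1 i j)),
    fun i => by rw [sum_add_distrib, ← mul_sum, ← mul_sum, hf.2.1, hg.2.1],
    fun j => by rw [sum_add_distrib, ← mul_sum, ← mul_sum, hf.2.2, hg.2.2]⟩

lemma planCost_convexComb (a b : ℝ) :
    planCost (fun i j => a * f i j + b * g i j) = a * planCost f + b * planCost g := by
  simp only [planCost, add_mul, sum_add_distrib, mul_assoc, ← mul_sum]

/-- Where `z k = 0` the junk value `_ / 0 = 0` is harmless: both `f _ k` and `g k _` vanish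
there. -/
def glue (z : Fin n → ℝ) (f g : Fin n → Fin n → ℝ) (i j : Fin n) : ℝ :=
  ∑ k, f i k * g k j / z k

lemma sum_mul_div_eq_left (hf : IsPlan x z f) (hg : IsPlan z y g) (i k : Fin n) :
    ∑ j, f i k * g k j / z k = f i k := by
  rw [← sum_div, ← mul_sum, hg.2.1]
  rcases eq_or_ne (z k) 0 with hz | hz
  · simp [hz, le_antisymm (hz ▸ hf.le_right i k) (hf.1 i k)]
  · exact mul_div_cancel_right₀ _ hz

lemma sum_mul_div_eq_right (hf : IsPlan x z f) (hg : IsPlan z y g) (k j : Fin n) :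
    ∑ i, f i k * g k j / z k = g k j := by
  rw [← sum_div, ← sum_mul, hf.2.2]
  rcases eq_or_ne (z k) 0 with hz | hz
  · simp [hz, le_antisymm (hz ▸ hg.le_left k j) (hg.1 k j)]
  · exact mul_div_cancel_left₀ _ hz

lemma isPlan_glue (hf : IsPlan x z f) (hg : IsPlan z y g) : IsPlan x y (glue z f g) := by
  refine ⟨fun i j => sum_nonneg fun k _ =>
      div_nonneg (mul_nonneg (hf.1 i k) (hg.1 k j)) (hf.nonneg_right k),
    fun i => ?_, fun j => ?_⟩
  · simp only [glue]
    rw [sum_comm]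
    simp only [sum_mul_div_eq_left hf hg, hf.2.1]
  · simp only [glue]
    rw [sum_comm]
    simp only [sum_mul_div_eq_right hf hg, hg.2.2]

lemma planCost_glue_le (hf : IsPlan x z f) (hg : IsPlan z y g) :
    planCost (glue z f g) ≤ planCost f + planCost g := by
  set t := fun i j k => f i k * g k j / z k
  have ht : ∀ i j k, 0 ≤ t i j k := fun i j k =>
    div_nonneg (mul_nonneg (hf.1 i k) (hg.1 k j)) (hf.nonneg_right k)
  let c : Fin n → Fin n → ℝ := fun i j => |((i : ℕ) : ℝ) - ((j : ℕ) : ℝ)|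
  calc planCost (glue z f g) = ∑ i, ∑ j, ∑ k, t i j k * c i j := by
        simp only [planCost, glue, sum_mul, t, c]
    _ ≤ ∑ i, ∑ j, ∑ k, t i j k * (c i k + c k j) := by
        gcongr with i _ j _ k _
        · exact ht i j k
        · exact abs_sub_le _ _ _
    _ = ∑ i, ∑ k, (∑ j, t i j k) * c i k + ∑ j, ∑ k, (∑ i, t i j k) * c k j := by
        simp only [mul_add, sum_add_distrib, sum_mul]
        rw [sum_comm (γ := Fin n) (f := fun i j => ∑ k, t i j k * c k j)]
        congr 1 <;> refine sum_congr rfl fun _ _ => sum_comm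
    _ = planCost f + planCost g := by
        simp only [t, sum_mul_div_eq_left hf hg, sum_mul_div_eq_right hf hg, planCost, c]
        rw [sum_comm (f := fun j k => g k j * _)]

end Plans

section Emd

variable {n : ℕ} {x y z : Fin n → ℝ}

lemma emd_le_planCost {f : Fin n → Fin n → ℝ} (hf : IsPlan x y f) : emd x y ≤ planCost f := by
  refine csInf_le ⟨0, ?_⟩ ⟨f, hf, rfl⟩
  rintro _ ⟨g, hg, rfl⟩
  exact sum_nonneg fun i _ => sum_nonneg fun j _ => mul_nonneg (hg.1 i j) (abs_nonneg _)

lemma le_emd (hxy : ∃ f, IsPlan x y f) {c : ℝ} (h : ∀ f, IsPlan x y f → c ≤ planCost f) :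
    c ≤ emd x y := by
  obtain ⟨f, hf⟩ := hxy
  refine le_csInf ⟨_, f, hf, rfl⟩ ?_
  rintro _ ⟨g, hg, rfl⟩
  exact h g hg

lemma emd_le_add (hxz : ∃ f, IsPlan x z f) (hzy : ∃ g, IsPlan z y g) :
    emd x y ≤ emd x z + emd z y := by
  have h : ∀ g, IsPlan z y g → emd x y - planCost g ≤ emd x z := fun g hg =>
    le_emd hxz fun f hf => sub_le_iff_le_add.2 <|
      (emd_le_planCost (isPlan_glue hf hg)).trans (planCost_glue_le hf hg)
  have := le_emd hzy fun g hg => sub_le_comm.1 (h g hg)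
  linarith

lemma emd_add_emd_convexComb_le (hx : ∀ i, 0 ≤ x i) (hy : ∀ i, 0 ≤ y i)
    (hxy : ∃ f, IsPlan x y f) {α : ℝ} (h0 : 0 ≤ α) (h1 : α ≤ 1) :
    emd x (fun i => α * x i + (1 - α) * y i) + emd (fun i => α * x i + (1 - α) * y i) y ≤
      emd x y := by
  refine le_emd hxy fun f hf => ?_
  have hxz := (isPlan_diag hx).convexComb hf h0 (sub_nonneg.2 h1)
  have hzy := hf.convexComb (isPlan_diag hy) h0 (sub_nonneg.2 h1)
  have hx_eq : (fun i => α * x i + (1 - α) * x i) = x := by funext; ring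
  have hy_eq : (fun i => α * y i + (1 - α) * y i) = y := by funext; ring
  rw [hx_eq] at hxz
  rw [hy_eq] at hzy
  calc _ ≤ (1 - α) * planCost f + α * planCost f := by
        refine add_le_add ((emd_le_planCost hxz).trans_eq ?_) ((emd_le_planCost hzy).trans_eq ?_)
        all_goals rw [planCost_convexComb, planCost_diag]; ring
    _ = planCost f := by ring

lemma emd_add_emd_convexComb (hx : x ∈ stdSimplex ℝ (Fin n)) (hy : y ∈ stdSimplex ℝ (Fin n))
    {α : ℝ} (h0 : 0 ≤ α) (h1 : α ≤ 1) :
    emd x (fun i => α * x i + (1 - α) * y i) + emd (fun i => α * x i + (1 - α) * y i) y =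
      emd x y := by
  have hz : (fun i => α * x i + (1 - α) * y i) ∈ stdSimplex ℝ (Fin n) :=
    convex_stdSimplex ℝ (Fin n) hx hy h0 (sub_nonneg.2 h1) (by ring)
  exact le_antisymm (emd_add_emd_convexComb_le hx.1 hy.1 ⟨_, isPlan_mul hx hy⟩ h0 h1)
    (emd_le_add ⟨_, isPlan_mul hx hz⟩ ⟨_, isPlan_mul hz hy⟩)

end Emd

section Dpos

variable {m : ℕ}

lemma dpos_le_sum (A B : Fin m → Fin m → ℝ) (δ : Equiv.Perm (Fin m)) :
    dpos A B ≤ ∑ i, emd (A i) (B (δ i)) :=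
  Finite.ciInf_le _ δ

lemma exists_perm_sum_eq_dpos (A B : Fin m → Fin m → ℝ) :
    ∃ δ : Equiv.Perm (Fin m), ∑ i, emd (A i) (B (δ i)) = dpos A B :=
  exists_eq_ciInf_of_finite

lemma dpos_le_add {A B C : Fin m → Fin m → ℝ}
    (h : ∀ i j k, emd (A i) (C k) ≤ emd (A i) (B j) + emd (B j) (C k)) :
    dpos A C ≤ dpos A B + dpos B C := by
  obtain ⟨δ, hδ⟩ := exists_perm_sum_eq_dpos A B
  obtain ⟨σ, hσ⟩ := exists_perm_sum_eq_dpos B C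
  calc dpos A C ≤ ∑ i, emd (A i) (C (σ (δ i))) := dpos_le_sum A C (δ.trans σ)
    _ ≤ ∑ i, (emd (A i) (B (δ i)) + emd (B (δ i)) (C (σ (δ i)))) :=
        sum_le_sum fun i _ => h _ _ _
    _ = dpos A B + dpos B C := by
        rw [sum_add_distrib, hδ, ← hσ, Equiv.sum_comp δ fun j => emd (B j) (C (σ j))]

end Dpos

/-- If the positionwise distance between frequency matrices X and Y is achieved by
the identity matching of columns, then every convex combination αX + (1−α)Y lies
exactly between X and Y. -/
theorem stmt2 {m : ℕ} (X Y : Fin m → Fin m → ℝ)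
    (hX : ∀ i j, 0 ≤ X i j) (hY : ∀ i j, 0 ≤ Y i j)
    (hXs : ∀ i, ∑ j, X i j = 1) (hYs : ∀ i, ∑ j, Y i j = 1)
    (hid : dpos X Y = ∑ i, emd (X i) (Y i)) :
    ∀ α : ℝ, α ∈ Set.Icc (0 : ℝ) 1 →
      dpos X Y =
        dpos X (fun i j => α * X i j + (1 - α) * Y i j) +
        dpos (fun i j => α * X i j + (1 - α) * Y i j) Y := by
  rintro α ⟨h0, h1⟩
  set Z : Fin m → Fin m → ℝ := fun i j => α * X i j + (1 - α) * Y i j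
  have hXΔ : ∀ i, X i ∈ stdSimplex ℝ (Fin m) := fun i => ⟨hX i, hXs i⟩
  have hYΔ : ∀ i, Y i ∈ stdSimplex ℝ (Fin m) := fun i => ⟨hY i, hYs i⟩
  have hZΔ : ∀ i, Z i ∈ stdSimplex ℝ (Fin m) := fun i =>
    convex_stdSimplex ℝ (Fin m) (hXΔ i) (hYΔ i) h0 (sub_nonneg.2 h1) (by ring)
  refine le_antisymm (dpos_le_add fun i j k =>
    emd_le_add ⟨_, isPlan_mul (hXΔ i) (hZΔ j)⟩ ⟨_, isPlan_mul (hZΔ j) (hYΔ k)⟩) ?_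
  calc dpos X Z + dpos Z Y ≤ ∑ i, emd (X i) (Z i) + ∑ i, emd (Z i) (Y i) :=
        add_le_add (dpos_le_sum X Z 1) (dpos_le_sum Z Y 1)
    _ = dpos X Y := by
        rw [hid, ← sum_add_distrib]
        exact sum_congr rfl fun i _ => emd_add_emd_convexComb (hXΔ i) (hYΔ i) h0 h1

end
end

section
/- The pairwise distance between elections, defined via weighted majority relations, satisfies the triangle inequality (and hence is a pseudometric). -/
open Finset

noncomputable section
open scoped Classical

/-- An election: each voter's ballot is a bijection sending candidates to positions.
`maj V c d` is the number of voters preferring candidate c to candidate d. -/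
def maj {m n : ℕ} (V : Fin n → Equiv.Perm (Fin m)) (c d : Fin m) : ℝ :=
  ((Finset.univ.filter (fun j : Fin n => V j c < V j d)).card : ℝ)

/-- Pairwise distance between elections: minimum over candidate bijections of the
ℓ1 distance between the weighted majority relations. -/
def dpair {m n : ℕ} (V₁ V₂ : Fin n → Equiv.Perm (Fin m)) : ℝ :=
  ⨅ δ : Equiv.Perm (Fin m), ∑ c, ∑ d, |maj V₁ c d - maj V₂ (δ c) (δ d)|

private lemma dpair_bdd {m n : ℕ} (V₁ V₂ : Fin n → Equiv.Perm (Fin m)) :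
    BddBelow (Set.range fun δ : Equiv.Perm (Fin m) =>
      ∑ c, ∑ d, |maj V₁ c d - maj V₂ (δ c) (δ d)|) :=
  ⟨0, by rintro x ⟨δ, rfl⟩; positivity⟩

private lemma dpair_le {m n : ℕ} (V₁ V₂ : Fin n → Equiv.Perm (Fin m))
    (δ : Equiv.Perm (Fin m)) :
    dpair V₁ V₂ ≤ ∑ c, ∑ d, |maj V₁ c d - maj V₂ (δ c) (δ d)| :=
  ciInf_le (dpair_bdd V₁ V₂) δ

private lemma dpair_nonneg {m n : ℕ} (V₁ V₂ : Fin n → Equiv.Perm (Fin m)) :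
    0 ≤ dpair V₁ V₂ :=
  le_ciInf fun δ => by positivity

/-- The pairwise distance satisfies the triangle inequality (and, being symmetric
with d(E,E) = 0, is a pseudometric). -/
theorem stmt4 {m n : ℕ} :
    (∀ V₁ V₂ V₃ : Fin n → Equiv.Perm (Fin m),
      dpair V₁ V₃ ≤ dpair V₁ V₂ + dpair V₂ V₃) ∧
    (∀ V₁ V₂ : Fin n → Equiv.Perm (Fin m), dpair V₁ V₂ = dpair V₂ V₁) ∧
    (∀ V : Fin n → Equiv.Perm (Fin m), dpair V V = 0) := by
  refine ⟨?_, ?_, ?_⟩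
  · intro V₁ V₂ V₃
    have key : ∀ δ₁ δ₂ : Equiv.Perm (Fin m),
        dpair V₁ V₃ ≤ (∑ c, ∑ d, |maj V₁ c d - maj V₂ (δ₁ c) (δ₁ d)|)
          + ∑ c, ∑ d, |maj V₂ c d - maj V₃ (δ₂ c) (δ₂ d)| := by
      intro δ₁ δ₂
      refine (dpair_le V₁ V₃ (δ₂ * δ₁)).trans ?_
      have h2 : (∑ c, ∑ d, |maj V₂ c d - maj V₃ (δ₂ c) (δ₂ d)|)
          = ∑ c, ∑ d, |maj V₂ (δ₁ c) (δ₁ d) - maj V₃ (δ₂ (δ₁ c)) (δ₂ (δ₁ d))| := by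
        rw [← Equiv.sum_comp δ₁ (fun c => ∑ d, |maj V₂ c d - maj V₃ (δ₂ c) (δ₂ d)|)]
        exact Finset.sum_congr rfl fun c _ => (Equiv.sum_comp δ₁ _).symm
      rw [h2, ← Finset.sum_add_distrib]
      refine Finset.sum_le_sum fun c _ => ?_
      rw [← Finset.sum_add_distrib]
      refine Finset.sum_le_sum fun d _ => ?_
      simpa [Equiv.Perm.mul_apply] using
        abs_sub_le (maj V₁ c d) (maj V₂ (δ₁ c) (δ₁ d)) (maj V₃ (δ₂ (δ₁ c)) (δ₂ (δ₁ d)))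
    obtain ⟨δ₁, hδ₁⟩ := Finite.exists_min
      (fun δ : Equiv.Perm (Fin m) => ∑ c, ∑ d, |maj V₁ c d - maj V₂ (δ c) (δ d)|)
    obtain ⟨δ₂, hδ₂⟩ := Finite.exists_min
      (fun δ : Equiv.Perm (Fin m) => ∑ c, ∑ d, |maj V₂ c d - maj V₃ (δ c) (δ d)|)
    have e₁ : dpair V₁ V₂ = ∑ c, ∑ d, |maj V₁ c d - maj V₂ (δ₁ c) (δ₁ d)| :=
      le_antisymm (dpair_le V₁ V₂ δ₁) (le_ciInf hδ₁)
    have e₂ : dpair V₂ V₃ = ∑ c, ∑ d, |maj V₂ c d - maj V₃ (δ₂ c) (δ₂ d)| :=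
      le_antisymm (dpair_le V₂ V₃ δ₂) (le_ciInf hδ₂)
    rw [e₁, e₂]
    exact key δ₁ δ₂
  · intro V₁ V₂
    have sym : ∀ (W₁ W₂ : Fin n → Equiv.Perm (Fin m)) (δ : Equiv.Perm (Fin m)),
        (∑ c, ∑ d, |maj W₁ c d - maj W₂ (δ c) (δ d)|)
          = ∑ c, ∑ d, |maj W₂ c d - maj W₁ (δ⁻¹ c) (δ⁻¹ d)| := by
      intro W₁ W₂ δ
      rw [← Equiv.sum_comp δ (fun c => ∑ d, |maj W₂ c d - maj W₁ (δ⁻¹ c) (δ⁻¹ d)|)]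
      refine Finset.sum_congr rfl fun c _ => ?_
      rw [← Equiv.sum_comp δ (fun d => |maj W₂ (δ c) d - maj W₁ (δ⁻¹ (δ c)) (δ⁻¹ d)|)]
      refine Finset.sum_congr rfl fun d _ => ?_
      simp [abs_sub_comm]
    refine le_antisymm ?_ ?_
    · exact le_ciInf fun δ => (dpair_le V₁ V₂ δ⁻¹).trans_eq (sym V₂ V₁ δ).symm
    · exact le_ciInf fun δ => (dpair_le V₂ V₁ δ⁻¹).trans_eq (sym V₁ V₂ δ).symm
  · intro V
    refine le_antisymm ?_ (dpair_nonneg V V)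
    have := dpair_le V V 1
    simpa using this

end
end

section
/- In the Pólya-Eggenberger urn model with contagion parameter α ≥ 0 over m candidates, after drawing n votes (with n ≤ m!), the expected number of distinct preference orders among the drawn votes is at most Σ_{i=1}^{n} 1/(1+(i−1)α). -/
open Finset

noncomputable section
open scoped Classical

/-- Probability of drawing the sequence `s` of votes in the Pólya–Eggenberger urn
model with contagion parameter α over m candidates. The urn starts with one copy
of each of the m! preference orders; after each draw, α·m! extra copies of the
drawn order are added. At step i (0-indexed), the probability of drawing order r
is (1 + α·m!·(#previous occurrences of r)) / (m!·(1 + i·α)). -/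
def urnDensity (m n : ℕ) (α : ℝ) (s : Fin n → Equiv.Perm (Fin m)) : ℝ :=
  ∏ i : Fin n,
    (1 + α * (Nat.factorial m : ℝ) *
        ((Finset.univ.filter (fun j : Fin n => j < i ∧ s j = s i)).card : ℝ)) /
      ((Nat.factorial m : ℝ) * (1 + ((i : ℕ) : ℝ) * α))

namespace Urn7

/-- count of previous occurrences of the i-th value -/
def cnt (m n : ℕ) (s : Fin n → Equiv.Perm (Fin m)) (i : Fin n) : ℕ :=
  (Finset.univ.filter (fun j : Fin n => j < i ∧ s j = s i)).card

/-- first-occurrence indicator -/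
def g (m n : ℕ) (i : Fin n) (s : Fin n → Equiv.Perm (Fin m)) : ℝ :=
  if cnt m n s i = 0 then 1 else 0

lemma cnt_snoc_castSucc (m n : ℕ) (s : Fin n → Equiv.Perm (Fin m))
    (r : Equiv.Perm (Fin m)) (i : Fin n) :
    cnt m (n+1) (Fin.snoc s r) i.castSucc = cnt m n s i := by
  unfold cnt
  rw [Finset.card_filter, Finset.card_filter, Fin.sum_univ_castSucc]
  have h1 : ¬ (Fin.last n < i.castSucc) := not_lt.mpr (Fin.castSucc_lt_last i).le
  simp only [Fin.snoc_castSucc, Fin.snoc_last, Fin.castSucc_lt_castSucc_iff, h1,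
    false_and, if_false, add_zero]

lemma cnt_snoc_last (m n : ℕ) (s : Fin n → Equiv.Perm (Fin m))
    (r : Equiv.Perm (Fin m)) :
    cnt m (n+1) (Fin.snoc s r) (Fin.last n)
      = (Finset.univ.filter (fun j : Fin n => s j = r)).card := by
  unfold cnt
  rw [Finset.card_filter, Finset.card_filter, Fin.sum_univ_castSucc]
  simp only [Fin.snoc_castSucc, Fin.snoc_last, Fin.castSucc_lt_last, true_and,
    lt_self_iff_false, false_and, if_false, add_zero]

lemma kpos (m : ℕ) : (0:ℝ) < (Nat.factorial m : ℝ) := by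
  exact_mod_cast Nat.factorial_pos m

lemma denpos {α : ℝ} (hα : 0 ≤ α) (t : ℕ) : (0:ℝ) < 1 + (t : ℝ) * α := by
  have : (0:ℝ) ≤ (t:ℝ) * α := mul_nonneg (Nat.cast_nonneg _) hα
  linarith

lemma dens_nonneg (m n : ℕ) {α : ℝ} (hα : 0 ≤ α) (s : Fin n → Equiv.Perm (Fin m)) :
    0 ≤ urnDensity m n α s := by
  apply Finset.prod_nonneg
  intro i _
  apply div_nonneg
  · have : (0:ℝ) ≤ α * (Nat.factorial m : ℝ) *
        ((Finset.univ.filter (fun j : Fin n => j < i ∧ s j = s i)).card : ℝ) :=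
      mul_nonneg (mul_nonneg hα (kpos m).le) (Nat.cast_nonneg _)
    linarith
  · exact mul_nonneg (kpos m).le (denpos hα i).le

lemma dens_snoc (m n : ℕ) (α : ℝ) (s : Fin n → Equiv.Perm (Fin m))
    (r : Equiv.Perm (Fin m)) :
    urnDensity m (n+1) α (Fin.snoc s r) =
      urnDensity m n α s *
        ((1 + α * (Nat.factorial m : ℝ) *
            ((Finset.univ.filter (fun j : Fin n => s j = r)).card : ℝ)) /
          ((Nat.factorial m : ℝ) * (1 + (n : ℝ) * α))) := by
  unfold urnDensity
  rw [Fin.prod_univ_castSucc]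
  congr 1
  · apply Finset.prod_congr rfl
    intro i _
    have h := cnt_snoc_castSucc m n s r i
    unfold cnt at h
    rw [h, Fin.coe_castSucc]
  · have h := cnt_snoc_last m n s r
    unfold cnt at h
    rw [h, Fin.val_last]

lemma sum_cnt (m n : ℕ) (s : Fin n → Equiv.Perm (Fin m)) :
    ∑ r : Equiv.Perm (Fin m),
      ((Finset.univ.filter (fun j : Fin n => s j = r)).card : ℝ) = (n : ℝ) := by
  have h := Finset.card_eq_sum_card_fiberwise
    (f := s) (s := (Finset.univ : Finset (Fin n)))
    (t := (Finset.univ : Finset (Equiv.Perm (Fin m)))) (fun x _ => Finset.mem_univ _)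
  have h2 : ∑ r : Equiv.Perm (Fin m),
      ((Finset.univ.filter (fun j : Fin n => s j = r)).card : ℝ)
      = ((Finset.univ : Finset (Fin n)).card : ℝ) := by
    rw [h]; push_cast; rfl
  rw [h2]; simp

lemma card_perm (m : ℕ) : Fintype.card (Equiv.Perm (Fin m)) = Nat.factorial m := by
  rw [Fintype.card_perm, Fintype.card_fin]

lemma sum_factor (m n : ℕ) {α : ℝ} (hα : 0 ≤ α) (s : Fin n → Equiv.Perm (Fin m)) :
    ∑ r : Equiv.Perm (Fin m),
      (1 + α * (Nat.factorial m : ℝ) *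
          ((Finset.univ.filter (fun j : Fin n => s j = r)).card : ℝ)) /
        ((Nat.factorial m : ℝ) * (1 + (n : ℝ) * α)) = 1 := by
  rw [← Finset.sum_div]
  have h1 : ∑ r : Equiv.Perm (Fin m),
      (1 + α * (Nat.factorial m : ℝ) *
        ((Finset.univ.filter (fun j : Fin n => s j = r)).card : ℝ))
      = (Nat.factorial m : ℝ) * (1 + (n : ℝ) * α) := by
    rw [Finset.sum_add_distrib, Finset.sum_const]
    have h2 : ∑ r : Equiv.Perm (Fin m),
        α * (Nat.factorial m : ℝ) *
          ((Finset.univ.filter (fun j : Fin n => s j = r)).card : ℝ)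
        = α * (Nat.factorial m : ℝ) * (n : ℝ) := by
      rw [← Finset.mul_sum, sum_cnt]
    rw [h2]
    simp only [smul_eq_mul, mul_one, Finset.card_univ, card_perm]
    ring
  rw [h1, div_self]
  exact ne_of_gt (mul_pos (kpos m) (denpos hα n))

lemma sum_dens (m : ℕ) {α : ℝ} (hα : 0 ≤ α) :
    ∀ n, ∑ s : Fin n → Equiv.Perm (Fin m), urnDensity m n α s = 1 := by
  intro n
  induction n with
  | zero => simp [urnDensity]
  | succ n ih =>
    rw [← Equiv.sum_comp (Fin.snocEquiv (fun _ => Equiv.Perm (Fin m)))]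
    rw [Fintype.sum_prod_type]
    have he : ∀ x : (Equiv.Perm (Fin m)) × (Fin n → Equiv.Perm (Fin m)),
        (Fin.snocEquiv (fun _ => Equiv.Perm (Fin m))) x = Fin.snoc x.2 x.1 :=
      fun _ => rfl
    simp only [he]
    calc ∑ r : Equiv.Perm (Fin m), ∑ s : Fin n → Equiv.Perm (Fin m),
          urnDensity m (n+1) α (Fin.snoc s r)
        = ∑ s : Fin n → Equiv.Perm (Fin m), urnDensity m n α s *
            ∑ r : Equiv.Perm (Fin m),
              (1 + α * (Nat.factorial m : ℝ) *
                  ((Finset.univ.filter (fun j : Fin n => s j = r)).card : ℝ)) /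
                ((Nat.factorial m : ℝ) * (1 + (n : ℝ) * α)) := by
          rw [Finset.sum_comm]
          refine Finset.sum_congr rfl (fun s _ => ?_)
          rw [Finset.mul_sum]
          refine Finset.sum_congr rfl (fun r _ => ?_)
          rw [dens_snoc]
      _ = 1 := by
          have h := sum_factor m n hα
          simp_rw [sum_factor m n hα, mul_one]
          exact ih

lemma key (m : ℕ) {α : ℝ} (hα : 0 ≤ α) :
    ∀ n (i : Fin n), ∑ s : Fin n → Equiv.Perm (Fin m),
      urnDensity m n α s * g m n i s ≤ 1 / (1 + ((i:ℕ) : ℝ) * α) := by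
  intro n
  induction n with
  | zero => exact fun i => absurd i.2 (Nat.not_lt_zero _)
  | succ n ih =>
    intro i
    rw [← Equiv.sum_comp (Fin.snocEquiv (fun _ => Equiv.Perm (Fin m))), Fintype.sum_prod_type]
    have he : ∀ x : (Equiv.Perm (Fin m)) × (Fin n → Equiv.Perm (Fin m)),
        (Fin.snocEquiv (fun _ => Equiv.Perm (Fin m))) x = Fin.snoc x.2 x.1 :=
      fun _ => rfl
    simp only [he]
    induction i using Fin.lastCases with
    | cast i =>
      have hstep : ∑ r : Equiv.Perm (Fin m), ∑ s : Fin n → Equiv.Perm (Fin m),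
          urnDensity m (n+1) α (Fin.snoc s r) * g m (n+1) i.castSucc (Fin.snoc s r)
          = ∑ s : Fin n → Equiv.Perm (Fin m),
              (urnDensity m n α s * g m n i s) *
              ∑ r : Equiv.Perm (Fin m),
                (1 + α * (Nat.factorial m : ℝ) *
                    ((Finset.univ.filter (fun j : Fin n => s j = r)).card : ℝ)) /
                  ((Nat.factorial m : ℝ) * (1 + (n : ℝ) * α)) := by
        rw [Finset.sum_comm]
        refine Finset.sum_congr rfl (fun s _ => ?_)
        rw [Finset.mul_sum]
        refine Finset.sum_congr rfl (fun r _ => ?_)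
        rw [dens_snoc]
        have hg : g m (n+1) i.castSucc (Fin.snoc s r) = g m n i s := by
          unfold g
          rw [cnt_snoc_castSucc]
        rw [hg]
        ring
      rw [hstep]
      simp_rw [sum_factor m n hα, mul_one]
      have := ih i
      rwa [Fin.coe_castSucc]
    | last =>
      have hstep : ∑ r : Equiv.Perm (Fin m), ∑ s : Fin n → Equiv.Perm (Fin m),
          urnDensity m (n+1) α (Fin.snoc s r) * g m (n+1) (Fin.last n) (Fin.snoc s r)
          = ∑ s : Fin n → Equiv.Perm (Fin m), urnDensity m n α s *
              ∑ r : Equiv.Perm (Fin m),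
                (if (Finset.univ.filter (fun j : Fin n => s j = r)).card = 0 then
                  1 / ((Nat.factorial m : ℝ) * (1 + (n : ℝ) * α)) else 0) := by
        rw [Finset.sum_comm]
        refine Finset.sum_congr rfl (fun s _ => ?_)
        rw [Finset.mul_sum]
        refine Finset.sum_congr rfl (fun r _ => ?_)
        rw [dens_snoc]
        have hg : g m (n+1) (Fin.last n) (Fin.snoc s r)
            = if (Finset.univ.filter (fun j : Fin n => s j = r)).card = 0 then 1 else 0 := by
          unfold g
          rw [cnt_snoc_last]
        rw [hg]
        by_cases hc : (Finset.univ.filter (fun j : Fin n => s j = r)).card = 0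
        · simp [hc]
        · simp [hc]
      rw [hstep, Fin.val_last]
      have hbound : ∀ s : Fin n → Equiv.Perm (Fin m),
          urnDensity m n α s *
            (∑ r : Equiv.Perm (Fin m),
              (if (Finset.univ.filter (fun j : Fin n => s j = r)).card = 0 then
                1 / ((Nat.factorial m : ℝ) * (1 + (n : ℝ) * α)) else 0))
          ≤ urnDensity m n α s * (1 / (1 + (n : ℝ) * α)) := by
        intro s
        apply mul_le_mul_of_nonneg_left _ (dens_nonneg m n hα s)
        have h1 : ∑ r : Equiv.Perm (Fin m),
            (if (Finset.univ.filter (fun j : Fin n => s j = r)).card = 0 then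
              1 / ((Nat.factorial m : ℝ) * (1 + (n : ℝ) * α)) else 0)
            ≤ (Finset.univ : Finset (Equiv.Perm (Fin m))).card •
                (1 / ((Nat.factorial m : ℝ) * (1 + (n : ℝ) * α))) := by
          apply Finset.sum_le_card_nsmul
          intro r _
          split
          · exact le_refl _
          · positivity
        refine h1.trans (le_of_eq ?_)
        rw [Finset.card_univ, card_perm, nsmul_eq_mul]
        have hk := (kpos m).ne'
        have hd := (denpos hα n).ne'
        field_simp
      calc ∑ s : Fin n → Equiv.Perm (Fin m), urnDensity m n α s *
            ∑ r : Equiv.Perm (Fin m),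
              (if (Finset.univ.filter (fun j : Fin n => s j = r)).card = 0 then
                1 / ((Nat.factorial m : ℝ) * (1 + (n : ℝ) * α)) else 0)
          ≤ ∑ s : Fin n → Equiv.Perm (Fin m),
              urnDensity m n α s * (1 / (1 + (n : ℝ) * α)) :=
            Finset.sum_le_sum (fun s _ => hbound s)
        _ = 1 / (1 + (n : ℝ) * α) := by
            rw [← Finset.sum_mul, sum_dens m hα n, one_mul]

lemma card_image (m n : ℕ) (s : Fin n → Equiv.Perm (Fin m)) :
    (Finset.univ.image s).card
      = (Finset.univ.filter (fun i : Fin n => cnt m n s i = 0)).card := by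
  have hfo : ∀ c : Fin n, cnt m n s c = 0 → ∀ j, j < c → s j ≠ s c := by
    intro c hc j hj heq
    rw [cnt, Finset.card_eq_zero, Finset.filter_eq_empty_iff] at hc
    exact hc (Finset.mem_univ j) ⟨hj, heq⟩
  symm
  apply Finset.card_bij (fun a _ => s a)
  · intro a _
    exact Finset.mem_image_of_mem s (Finset.mem_univ a)
  · intro a ha b hb hab
    have ha' := (Finset.mem_filter.mp ha).2
    have hb' := (Finset.mem_filter.mp hb).2
    by_contra hne
    rcases lt_or_gt_of_ne hne with h | h
    · exact hfo b hb' a h hab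
    · exact hfo a ha' b h hab.symm
  · intro v hv
    obtain ⟨j, -, hj⟩ := Finset.mem_image.mp hv
    have hne : (Finset.univ.filter (fun j : Fin n => s j = v)).Nonempty :=
      ⟨j, by simp [hj]⟩
    set a := Finset.min' _ hne with hadef
    have ha : s a = v := (Finset.mem_filter.mp (Finset.min'_mem _ hne)).2
    refine ⟨a, ?_, ha⟩
    simp only [Finset.mem_filter, Finset.mem_univ, true_and]
    rw [cnt, Finset.card_eq_zero, Finset.filter_eq_empty_iff]
    rintro j' - ⟨hlt, heq⟩
    have hle : a ≤ j' := Finset.min'_le _ _ (by simp [heq, ha])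
    exact absurd hlt (not_lt.mpr hle)

lemma card_image_real (m n : ℕ) (s : Fin n → Equiv.Perm (Fin m)) :
    ((Finset.univ.image s).card : ℝ) = ∑ i : Fin n, g m n i s := by
  rw [card_image m n s, Finset.card_filter]
  push_cast
  rfl

end Urn7

/-- In the urn model with contagion parameter α ≥ 0, for n ≤ m!, the expected
number of distinct preference orders among the n drawn votes is at most
Σ_{i=1}^{n} 1/(1+(i−1)α). -/
theorem stmt7 (m n : ℕ) (α : ℝ) (hα : 0 ≤ α) (hn : n ≤ Nat.factorial m) :
    ∑ s : Fin n → Equiv.Perm (Fin m),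
        urnDensity m n α s * ((Finset.univ.image s).card : ℝ)
      ≤ ∑ i ∈ Finset.range n, 1 / (1 + (i : ℝ) * α) := by
  have h1 : ∑ s : Fin n → Equiv.Perm (Fin m),
      urnDensity m n α s * ((Finset.univ.image s).card : ℝ)
      = ∑ i : Fin n, ∑ s : Fin n → Equiv.Perm (Fin m),
          urnDensity m n α s * Urn7.g m n i s := by
    rw [Finset.sum_comm]
    refine Finset.sum_congr rfl (fun s _ => ?_)
    rw [Urn7.card_image_real, Finset.mul_sum]
  rw [h1]
  have h2 : ∑ i ∈ Finset.range n, 1 / (1 + (i : ℝ) * α)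
      = ∑ i : Fin n, 1 / (1 + ((i:ℕ) : ℝ) * α) := by
    rw [Fin.sum_univ_eq_sum_range (fun i => 1 / (1 + (i : ℝ) * α))]
  rw [h2]
  exact Finset.sum_le_sum (fun i _ => Urn7.key m hα n i)

end
end

section
/- For m divisible by 4, the EMD-positionwise distance between the identity frequency matrix ID_m and the uniformity frequency matrix UN_m equals (m²−1)/3. -/
open Finset

noncomputable section
open scoped Classical

/-- The identity frequency matrix: column i is the i-th standard basis vector. -/
def idMat (m : ℕ) : Fin m → Fin m → ℝ := fun i j => if j = i then 1 else 0

/-- The uniformity frequency matrix: all entries 1/m. -/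
def unMat (m : ℕ) : Fin m → Fin m → ℝ := fun _ _ => 1 / (m : ℝ)

/-- The antagonism matrix: AN = (1/2)·ID + (1/2)·rID, where rID reverses the
column order of the identity matrix. -/
def anMat (m : ℕ) : Fin m → Fin m → ℝ := fun i j =>
  (1 / 2) * (if j = i then 1 else 0) +
  (1 / 2) * (if (i : ℕ) + (j : ℕ) = m - 1 then 1 else 0)

/-- The stratification matrix: block-diagonal with two UN_{m/2} blocks. -/
def stMat (m : ℕ) : Fin m → Fin m → ℝ := fun i j =>
  if ((i : ℕ) < m / 2 ∧ (j : ℕ) < m / 2) ∨ (m / 2 ≤ (i : ℕ) ∧ m / 2 ≤ (j : ℕ))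
    then 2 / (m : ℝ) else 0

lemma gaussR (n : ℕ) : ∑ i ∈ Finset.range n, (i : ℝ) = n * ((n : ℝ) - 1) / 2 := by
  induction n with
  | zero => simp
  | succ k ih => rw [Finset.sum_range_succ, ih]; push_cast; ring

lemma sumAbs (n : ℕ) :
    ∑ i ∈ Finset.range n, ∑ j ∈ Finset.range n, |(i : ℝ) - (j : ℝ)|
      = n * ((n : ℝ) ^ 2 - 1) / 3 := by
  induction n with
  | zero => simp
  | succ k ih =>
    rw [Finset.sum_range_succ]
    have hsplit : ∀ i : ℕ, ∑ j ∈ Finset.range (k + 1), |(i : ℝ) - (j : ℝ)|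
        = (∑ j ∈ Finset.range k, |(i : ℝ) - (j : ℝ)|) + |(i : ℝ) - (k : ℝ)| := fun i =>
      Finset.sum_range_succ _ k
    simp_rw [hsplit]
    rw [Finset.sum_add_distrib, ih]
    have e1 : ∑ i ∈ Finset.range k, |(i : ℝ) - (k : ℝ)|
        = ∑ i ∈ Finset.range k, ((k : ℝ) - i) := by
      refine Finset.sum_congr rfl fun i hi => ?_
      have h : (i : ℝ) ≤ k := by exact_mod_cast (Finset.mem_range.mp hi).le
      rw [abs_sub_comm, abs_of_nonneg (sub_nonneg.mpr h)]
    have e2 : ∑ j ∈ Finset.range k, |(k : ℝ) - (j : ℝ)|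
        = ∑ j ∈ Finset.range k, ((k : ℝ) - j) := by
      refine Finset.sum_congr rfl fun j hj => ?_
      have h : (j : ℝ) ≤ k := by exact_mod_cast (Finset.mem_range.mp hj).le
      rw [abs_of_nonneg (sub_nonneg.mpr h)]
    rw [e1, e2, sub_self, abs_zero]
    simp only [Finset.sum_sub_distrib, Finset.sum_const, Finset.card_range, nsmul_eq_mul,
      gaussR]
    push_cast
    ring

lemma emd_id_un (m : ℕ) (hm : 0 < m) (i k : Fin m) :
    emd (idMat m i) (unMat m k)
      = ∑ j : Fin m, (1 / (m : ℝ)) * |((i : ℕ) : ℝ) - ((j : ℕ) : ℝ)| := by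
  have hm' : (m : ℝ) ≠ 0 := Nat.cast_ne_zero.mpr hm.ne'
  have hset : {c | ∃ f, IsPlan (idMat m i) (unMat m k) f ∧ planCost f = c}
      = {∑ j : Fin m, (1 / (m : ℝ)) * |((i : ℕ) : ℝ) - ((j : ℕ) : ℝ)|} := by
    ext c
    simp only [Set.mem_setOf_eq, Set.mem_singleton_iff]
    constructor
    · rintro ⟨f, ⟨hpos, hrow, hcol⟩, rfl⟩
      have hzero : ∀ i' j, i' ≠ i → f i' j = 0 := by
        intro i' j hne
        have h0 : ∑ j, f i' j = 0 := by
          rw [hrow i']; simp [idMat, hne]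
        exact (Finset.sum_eq_zero_iff_of_nonneg
          (fun j _ => hpos i' j)).mp h0 j (Finset.mem_univ j)
      have hfi : ∀ j, f i j = 1 / (m : ℝ) := by
        intro j
        have h := hcol j
        rw [Fintype.sum_eq_single i (fun i' hne => hzero i' j hne)] at h
        simpa [unMat] using h
      unfold planCost
      rw [Fintype.sum_eq_single i
        (fun i' hne => Finset.sum_eq_zero fun j _ => by rw [hzero i' j hne, zero_mul])]
      exact Finset.sum_congr rfl fun j _ => by rw [hfi j]
    · rintro rfl
      refine ⟨fun i' j => if i' = i then 1 / (m : ℝ) else 0, ⟨?_, ?_, ?_⟩, ?_⟩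
      · intro i' j
        dsimp only
        split_ifs with h
        · positivity
        · exact le_rfl
      · intro i'
        dsimp only
        by_cases h : i' = i
        · simp only [h, if_true, idMat, Finset.sum_const, Finset.card_univ,
            Fintype.card_fin, nsmul_eq_mul]
          field_simp
        · simp [idMat, h]
      · intro j
        dsimp only
        rw [Finset.sum_ite_eq' Finset.univ i (fun _ => 1 / (m : ℝ))]
        simp [unMat]
      · unfold planCost
        rw [Fintype.sum_eq_single i
          (fun i' hne => Finset.sum_eq_zero fun j _ => by simp [hne])]
        simp
  unfold emd
  rw [hset]
  exact csInf_singleton _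

/-- For m divisible by 4, the EMD-positionwise distance between the identity and
uniformity frequency matrices equals (m²−1)/3. -/
theorem stmt8 (m : ℕ) (hm : 0 < m) (h4 : 4 ∣ m) :
    dpos (idMat m) (unMat m) = ((m : ℝ) ^ 2 - 1) / 3 := by
  have hm' : (m : ℝ) ≠ 0 := Nat.cast_ne_zero.mpr hm.ne'
  have key : ∀ δ : Equiv.Perm (Fin m),
      ∑ i, emd (idMat m i) (unMat m (δ i)) = ((m : ℝ) ^ 2 - 1) / 3 := by
    intro δ
    rw [Finset.sum_congr rfl (fun i _ => emd_id_un m hm i (δ i))]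
    have h1 : (∑ i : Fin m, ∑ j : Fin m, (1 / (m : ℝ)) * |((i : ℕ) : ℝ) - ((j : ℕ) : ℝ)|)
        = ∑ i ∈ Finset.range m, ∑ j ∈ Finset.range m, (1 / (m : ℝ)) * |(i : ℝ) - (j : ℝ)| := by
      rw [← Fin.sum_univ_eq_sum_range
        (fun i => ∑ j ∈ Finset.range m, (1 / (m : ℝ)) * |(i : ℝ) - (j : ℝ)|) m]
      exact Finset.sum_congr rfl fun i _ =>
        (Fin.sum_univ_eq_sum_range (fun j => (1 / (m : ℝ)) * |((i : ℕ) : ℝ) - (j : ℝ)|) m)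
    rw [h1]
    simp_rw [← Finset.mul_sum]
    rw [sumAbs]
    field_simp
  unfold dpos
  rw [iInf_congr key]
  exact ciInf_const

end
end

section
/- For m divisible by 4, the EMD-positionwise distance between the identity matrix ID_m and the antagonism matrix AN_m equals m²/4, and so does the distance between the uniformity matrix UN_m and the stratification matrix ST_m. -/
open Finset

noncomputable section
open scoped Classical

def MM {n : ℕ} (x : Fin n → ℝ) : ℝ := ∑ j : Fin n, ((j : ℕ) : ℝ) * x j

lemma plan_sum_eq {n : ℕ} {x y : Fin n → ℝ} {f : Fin n → Fin n → ℝ} (hf : IsPlan x y f) :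
    ∑ i, ∑ j, f i j * (((i : ℕ) : ℝ) - ((j : ℕ) : ℝ)) = MM x - MM y := by
  have h1 : ∑ i, ∑ j, f i j * ((i : ℕ) : ℝ) = MM x := by
    unfold MM
    refine Finset.sum_congr rfl fun i _ => ?_
    rw [← Finset.sum_mul, hf.2.1 i, mul_comm]
  have h2 : ∑ i : Fin n, ∑ j : Fin n, f i j * ((j : ℕ) : ℝ) = MM y := by
    rw [Finset.sum_comm]
    unfold MM
    refine Finset.sum_congr rfl fun j _ => ?_
    rw [← Finset.sum_mul, hf.2.2 j, mul_comm]
  calc ∑ i, ∑ j, f i j * (((i : ℕ) : ℝ) - ((j : ℕ) : ℝ))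
      = ∑ i, ∑ j, (f i j * ((i : ℕ) : ℝ) - f i j * ((j : ℕ) : ℝ)) := by
        refine Finset.sum_congr rfl fun i _ => Finset.sum_congr rfl fun j _ => by ring
    _ = MM x - MM y := by simp only [Finset.sum_sub_distrib, h1, h2]

lemma planCost_ge {n : ℕ} {x y : Fin n → ℝ} {f : Fin n → Fin n → ℝ} (hf : IsPlan x y f) :
    |MM x - MM y| ≤ planCost f := by
  rw [abs_sub_le_iff]
  constructor
  · rw [← plan_sum_eq hf]
    refine Finset.sum_le_sum fun i _ => Finset.sum_le_sum fun j _ => ?_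
    exact mul_le_mul_of_nonneg_left (le_abs_self _) (hf.1 i j)
  · have : MM y - MM x = ∑ i, ∑ j, f i j * (((j : ℕ) : ℝ) - ((i : ℕ) : ℝ)) := by
      rw [← neg_sub (MM x), ← plan_sum_eq hf, ← Finset.sum_neg_distrib]
      refine Finset.sum_congr rfl fun i _ => ?_
      rw [← Finset.sum_neg_distrib]
      exact Finset.sum_congr rfl fun j _ => by ring
    rw [this]
    refine Finset.sum_le_sum fun i _ => Finset.sum_le_sum fun j _ => ?_
    calc f i j * (((j : ℕ) : ℝ) - ((i : ℕ) : ℝ)) ≤ f i j * |((j : ℕ) : ℝ) - ((i : ℕ) : ℝ)| :=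
          mul_le_mul_of_nonneg_left (le_abs_self _) (hf.1 i j)
      _ = f i j * |((i : ℕ) : ℝ) - ((j : ℕ) : ℝ)| := by rw [abs_sub_comm]

lemma emd_ge {n : ℕ} {x y : Fin n → ℝ} {f : Fin n → Fin n → ℝ} (hf : IsPlan x y f) :
    |MM x - MM y| ≤ emd x y :=
  le_csInf ⟨planCost f, f, hf, rfl⟩ (by rintro c ⟨g, hg, rfl⟩; exact planCost_ge hg)

lemma emd_le {n : ℕ} {x y : Fin n → ℝ} {f : Fin n → Fin n → ℝ} (hf : IsPlan x y f) :
    emd x y ≤ planCost f :=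
  csInf_le ⟨|MM x - MM y|, by rintro c ⟨g, hg, rfl⟩; exact planCost_ge hg⟩ ⟨f, hf, rfl⟩

lemma emd_eq {n : ℕ} {x y : Fin n → ℝ} {f : Fin n → Fin n → ℝ} (hf : IsPlan x y f)
    (hc : planCost f = |MM x - MM y|) : emd x y = |MM x - MM y| :=
  le_antisymm (hc ▸ emd_le hf) (emd_ge hf)

lemma sum_range_cast (n : ℕ) : ∑ i ∈ range n, (i : ℝ) = ((n : ℝ) ^ 2 - n) / 2 := by
  induction n with
  | zero => simp
  | succ k ih => rw [Finset.sum_range_succ, ih]; push_cast; ring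

lemma sum_range_unique {m c : ℕ} (hc : c < m) (P : ℕ → Prop) [DecidablePred P] (G : ℕ → ℝ)
    (h1 : P c) (h0 : ∀ a, a < m → a ≠ c → ¬ P a) :
    ∑ i ∈ range m, (if P i then G i else 0) = G c := by
  rw [Finset.sum_eq_single c]
  · rw [if_pos h1]
  · intro b hb hbc; rw [if_neg (h0 b (mem_range.mp hb) hbc)]
  · intro h; exact absurd (mem_range.mpr hc) h

lemma sum_range_none {m : ℕ} (P : ℕ → Prop) [DecidablePred P] (G : ℕ → ℝ)
    (h0 : ∀ a, a < m → ¬ P a) :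
    ∑ i ∈ range m, (if P i then G i else 0) = 0 :=
  Finset.sum_eq_zero fun b hb => if_neg (h0 b (mem_range.mp hb))

lemma anMat_nonneg {m : ℕ} (j l : Fin m) : 0 ≤ anMat m j l := by
  unfold anMat; positivity

lemma anMat_rowsum {m : ℕ} (hm : 0 < m) (j : Fin m) : ∑ l : Fin m, anMat m j l = 1 := by
  unfold anMat
  rw [Finset.sum_add_distrib]
  have h1 : ∑ l : Fin m, (1/2 : ℝ) * (if l = j then 1 else 0) = 1/2 := by
    simp [mul_ite, Finset.sum_ite_eq']
  have h2 : ∑ l : Fin m, (1/2 : ℝ) * (if (j : ℕ) + (l : ℕ) = m - 1 then 1 else 0) = 1/2 := by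
    have : ∀ l : Fin m, (1/2 : ℝ) * (if (j : ℕ) + (l : ℕ) = m - 1 then 1 else 0)
        = (if (j : ℕ) + (l : ℕ) = m - 1 then (fun _ : ℕ => (1/2 : ℝ)) (l : ℕ) else 0) := by
      intro l; split_ifs <;> ring
    rw [Finset.sum_congr rfl fun l _ => this l,
      Fin.sum_univ_eq_sum_range (fun a => if (j : ℕ) + a = m - 1 then (1/2 : ℝ) else 0) m,
      sum_range_unique (c := m - 1 - (j : ℕ)) (by omega) _ _ (by omega) (by omega)]
  rw [h1, h2]; norm_num

lemma MM_an {m : ℕ} (hm : 0 < m) (j : Fin m) : MM (anMat m j) = ((m : ℝ) - 1) / 2 := by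
  unfold MM anMat
  have key : ∀ l : Fin m, ((l : ℕ) : ℝ) *
      ((1/2) * (if l = j then 1 else 0) + (1/2) * (if (j : ℕ) + (l : ℕ) = m - 1 then 1 else 0))
      = (if (l : ℕ) = (j : ℕ) then ((l : ℕ) : ℝ)/2 else 0)
        + (if (j : ℕ) + (l : ℕ) = m - 1 then ((l : ℕ) : ℝ)/2 else 0) := by
    intro l
    simp only [Fin.ext_iff]
    split_ifs <;> ring
  rw [Finset.sum_congr rfl fun l _ => key l, Finset.sum_add_distrib,
    Fin.sum_univ_eq_sum_range (fun a => if a = (j : ℕ) then (a : ℝ)/2 else 0) m,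
    Fin.sum_univ_eq_sum_range (fun a => if (j : ℕ) + a = m - 1 then (a : ℝ)/2 else 0) m,
    sum_range_unique (c := (j : ℕ)) j.isLt (fun a => a = (j : ℕ)) _ rfl (by omega),
    sum_range_unique (c := m - 1 - (j : ℕ)) (by omega) _ _ (by omega) (by omega)]
  have : ((m - 1 - (j : ℕ) : ℕ) : ℝ) = (m : ℝ) - 1 - ((j : ℕ) : ℝ) := by
    have hj := j.isLt
    rw [Nat.cast_sub (by omega), Nat.cast_sub (by omega)]
    norm_num
  rw [this]; ring

lemma MM_id {m : ℕ} (i : Fin m) : MM (idMat m i) = ((i : ℕ) : ℝ) := by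
  simp [MM, idMat, mul_ite, Finset.sum_ite_eq']

def planIA (m : ℕ) (i j : Fin m) : Fin m → Fin m → ℝ :=
  fun k l => if k = i then anMat m j l else 0

lemma planIA_isPlan {m : ℕ} (hm : 0 < m) (i j : Fin m) :
    IsPlan (idMat m i) (anMat m j) (planIA m i j) := by
  refine ⟨fun k l => ?_, fun k => ?_, fun l => ?_⟩
  · unfold planIA; split_ifs
    · exact anMat_nonneg j l
    · exact le_refl 0
  · unfold planIA idMat
    by_cases h : k = i
    · subst h; simpa using anMat_rowsum hm j
    · simp [h]
  · unfold planIA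
    rw [Finset.sum_ite_eq' univ i (fun _ => anMat m j l), if_pos (mem_univ i)]

lemma planIA_cost {m : ℕ} (hm : 0 < m) (i : Fin m) :
    planCost (planIA m i i) = |((i : ℕ) : ℝ) - ((m : ℝ) - 1) / 2| := by
  unfold planCost planIA
  rw [Finset.sum_eq_single i]
  · have key : ∀ l : Fin m,
        (if (i : Fin m) = i then anMat m i l else 0) * |((i : ℕ) : ℝ) - ((l : ℕ) : ℝ)|
        = (if (l : ℕ) = (i : ℕ) then (fun a : ℕ => |((i : ℕ) : ℝ) - (a : ℝ)| / 2) (l : ℕ) else 0)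
          + (if (i : ℕ) + (l : ℕ) = m - 1 then (fun a : ℕ => |((i : ℕ) : ℝ) - (a : ℝ)| / 2) (l : ℕ) else 0) := by
      intro l
      unfold anMat
      simp only [if_pos rfl, Fin.ext_iff]
      split_ifs <;> ring
    rw [Finset.sum_congr rfl fun l _ => key l, Finset.sum_add_distrib,
      Fin.sum_univ_eq_sum_range (fun a => if a = (i : ℕ) then |((i : ℕ) : ℝ) - (a : ℝ)| / 2 else 0) m,
      Fin.sum_univ_eq_sum_range (fun a => if (i : ℕ) + a = m - 1 then |((i : ℕ) : ℝ) - (a : ℝ)| / 2 else 0) m,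
      sum_range_unique (c := (i : ℕ)) i.isLt (fun a => a = (i : ℕ)) _ rfl (by omega),
      sum_range_unique (c := m - 1 - (i : ℕ)) (by omega) _ _ (by omega) (by omega)]
    have hcast : ((m - 1 - (i : ℕ) : ℕ) : ℝ) = (m : ℝ) - 1 - ((i : ℕ) : ℝ) := by
      have hj := i.isLt
      rw [Nat.cast_sub (by omega), Nat.cast_sub (by omega)]
      norm_num
    rw [hcast, sub_self, abs_zero]
    rw [show ((i : ℕ) : ℝ) - ((m : ℝ) - 1 - ((i : ℕ) : ℝ)) = 2 * (((i : ℕ) : ℝ) - ((m : ℝ) - 1) / 2) by ring,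
      abs_mul, abs_two]
    ring
  · intro k _ hk
    rw [Finset.sum_eq_zero]
    intro l _
    rw [if_neg hk, zero_mul]
  · intro h; exact absurd (mem_univ i) h

lemma emd_id_an_eq {m : ℕ} (hm : 0 < m) (i : Fin m) :
    emd (idMat m i) (anMat m i) = |((i : ℕ) : ℝ) - ((m : ℝ) - 1) / 2| := by
  have h := emd_eq (planIA_isPlan hm i i) ?_
  · rw [h, MM_id, MM_an hm]
  · rw [planIA_cost hm i, MM_id, MM_an hm]

lemma emd_id_an_ge {m : ℕ} (hm : 0 < m) (i j : Fin m) :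
    |((i : ℕ) : ℝ) - ((m : ℝ) - 1) / 2| ≤ emd (idMat m i) (anMat m j) := by
  have h := emd_ge (planIA_isPlan hm i j)
  rwa [MM_id, MM_an hm] at h

lemma sum_abs_centered (s : ℕ) :
    ∑ i ∈ range (2 * s), |(i : ℝ) - (2 * (s : ℝ) - 1) / 2| = (s : ℝ) ^ 2 := by
  rw [two_mul, Finset.sum_range_add]
  have h1 : ∀ i ∈ range s, |(i : ℝ) - (2 * (s : ℝ) - 1) / 2| = (2 * (s : ℝ) - 1) / 2 - i := by
    intro i hi
    have : (i : ℝ) + 1 ≤ s := by exact_mod_cast mem_range.mp hi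
    rw [abs_of_nonpos (by linarith)]; ring
  have h2 : ∀ i ∈ range s, |((s + i : ℕ) : ℝ) - (2 * (s : ℝ) - 1) / 2|
      = ((s : ℝ) + i) - (2 * (s : ℝ) - 1) / 2 := by
    intro i hi
    have : (0 : ℝ) ≤ i := Nat.cast_nonneg i
    push_cast
    rw [abs_of_nonneg (by linarith)]
  rw [Finset.sum_congr rfl h1, Finset.sum_congr rfl h2, Finset.sum_sub_distrib,
    Finset.sum_sub_distrib, Finset.sum_add_distrib, Finset.sum_const, Finset.sum_const,
    Finset.card_range, sum_range_cast]
  push_cast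
  ring

lemma dpos_part1 {m : ℕ} (hm : 0 < m) (h2 : 2 ∣ m) :
    dpos (idMat m) (anMat m) = (m : ℝ) ^ 2 / 4 := by
  have hsum : ∑ i : Fin m, |((i : ℕ) : ℝ) - ((m : ℝ) - 1) / 2| = (m : ℝ) ^ 2 / 4 := by
    obtain ⟨s, rfl⟩ := h2
    rw [Fin.sum_univ_eq_sum_range (fun a => |(a : ℝ) - (((2 * s : ℕ) : ℝ) - 1) / 2|) (2 * s)]
    have : ∀ a ∈ range (2 * s), |(a : ℝ) - (((2 * s : ℕ) : ℝ) - 1) / 2|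
        = |(a : ℝ) - (2 * (s : ℝ) - 1) / 2| := by intro a _; push_cast; ring_nf
    rw [Finset.sum_congr rfl this, sum_abs_centered]
    push_cast; ring
  have hlow : ∀ δ : Equiv.Perm (Fin m), (m : ℝ) ^ 2 / 4 ≤ ∑ i, emd (idMat m i) (anMat m (δ i)) := by
    intro δ
    rw [← hsum]
    exact Finset.sum_le_sum fun i _ => emd_id_an_ge hm i (δ i)
  refine le_antisymm ?_ (le_ciInf hlow)
  have := ciInf_le (f := fun δ : Equiv.Perm (Fin m) => ∑ i, emd (idMat m i) (anMat m (δ i)))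
    ⟨(m : ℝ) ^ 2 / 4, by rintro _ ⟨δ, rfl⟩; exact hlow δ⟩ 1
  refine this.trans ?_
  rw [← hsum]
  refine le_of_eq (Finset.sum_congr rfl fun i _ => ?_)
  rw [show ((1 : Equiv.Perm (Fin m)) i) = i from rfl]
  exact emd_id_an_eq hm i

lemma sum_range_if_lt {m s : ℕ} (hs : s ≤ m) (G : ℕ → ℝ) :
    ∑ a ∈ range m, (if a < s then G a else 0) = ∑ a ∈ range s, G a := by
  rw [range_eq_Ico, ← Finset.sum_Ico_consecutive _ (Nat.zero_le s) hs]
  have h1 : ∑ a ∈ Finset.Ico 0 s, (if a < s then G a else 0) = ∑ a ∈ Finset.Ico 0 s, G a :=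
    Finset.sum_congr rfl fun a ha => if_pos (Finset.mem_Ico.mp ha).2
  have h2 : ∑ a ∈ Finset.Ico s m, (if a < s then G a else 0) = 0 :=
    Finset.sum_eq_zero fun a ha => if_neg (by have := (Finset.mem_Ico.mp ha).1; omega)
  rw [h1, h2, add_zero, ← range_eq_Ico]

lemma sum_range_if_ge {m s : ℕ} (G : ℕ → ℝ) :
    ∑ a ∈ range m, (if s ≤ a then G a else 0) = ∑ a ∈ Finset.Ico s m, G a := by
  by_cases hs : s ≤ m
  · rw [range_eq_Ico, ← Finset.sum_Ico_consecutive _ (Nat.zero_le s) hs]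
    have h1 : ∑ a ∈ Finset.Ico 0 s, (if s ≤ a then G a else 0) = 0 :=
      Finset.sum_eq_zero fun a ha => if_neg (by have := (Finset.mem_Ico.mp ha).2; omega)
    have h2 : ∑ a ∈ Finset.Ico s m, (if s ≤ a then G a else 0) = ∑ a ∈ Finset.Ico s m, G a :=
      Finset.sum_congr rfl fun a ha => if_pos (Finset.mem_Ico.mp ha).1
    rw [h1, h2, zero_add]
  · rw [Finset.Ico_eq_empty (by omega), Finset.sum_empty]
    exact Finset.sum_eq_zero fun a ha => if_neg (by have := Finset.mem_range.mp ha; omega)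

def planL (m : ℕ) : Fin m → Fin m → ℝ := fun k l =>
  (if (k : ℕ) = 2 * (l : ℕ) then 1 / (m : ℝ) else 0) +
  (if (k : ℕ) = 2 * (l : ℕ) + 1 then 1 / (m : ℝ) else 0)

def planR (m : ℕ) : Fin m → Fin m → ℝ := fun k l =>
  (if (k : ℕ) + m = 2 * (l : ℕ) then 1 / (m : ℝ) else 0) +
  (if (k : ℕ) + m = 2 * (l : ℕ) + 1 then 1 / (m : ℝ) else 0)

lemma planL_row {m : ℕ} (k : Fin m) : ∑ l : Fin m, planL m k l = 1 / (m : ℝ) := by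
  have hk := k.isLt
  unfold planL
  rw [Finset.sum_add_distrib,
    Fin.sum_univ_eq_sum_range (fun a => if (k : ℕ) = 2 * a then 1 / (m : ℝ) else 0) m,
    Fin.sum_univ_eq_sum_range (fun a => if (k : ℕ) = 2 * a + 1 then 1 / (m : ℝ) else 0) m]
  by_cases h : (k : ℕ) % 2 = 0
  · rw [sum_range_unique (c := (k : ℕ) / 2) (by omega) (fun a => (k : ℕ) = 2 * a) _
      (by omega) (by intro a _ h2 h3; omega),
      sum_range_none (fun a => (k : ℕ) = 2 * a + 1) _ (by intro a _ h3; omega)]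
    ring
  · rw [sum_range_none (fun a => (k : ℕ) = 2 * a) _ (by intro a _ h3; omega),
      sum_range_unique (c := (k : ℕ) / 2) (by omega) (fun a => (k : ℕ) = 2 * a + 1) _
      (by omega) (by intro a _ h2 h3; omega)]
    ring

lemma planR_row {m : ℕ} (h2 : 2 ∣ m) (k : Fin m) : ∑ l : Fin m, planR m k l = 1 / (m : ℝ) := by
  have hk := k.isLt
  unfold planR
  rw [Finset.sum_add_distrib,
    Fin.sum_univ_eq_sum_range (fun a => if (k : ℕ) + m = 2 * a then 1 / (m : ℝ) else 0) m,
    Fin.sum_univ_eq_sum_range (fun a => if (k : ℕ) + m = 2 * a + 1 then 1 / (m : ℝ) else 0) m]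
  by_cases h : (k : ℕ) % 2 = 0
  · rw [sum_range_unique (c := ((k : ℕ) + m) / 2) (by omega) (fun a => (k : ℕ) + m = 2 * a) _
      (by omega) (by intro a _ ha hb; omega),
      sum_range_none (fun a => (k : ℕ) + m = 2 * a + 1) _ (by intro a _ h3; omega)]
    ring
  · rw [sum_range_none (fun a => (k : ℕ) + m = 2 * a) _ (by intro a _ h3; omega),
      sum_range_unique (c := ((k : ℕ) + m) / 2) (by omega) (fun a => (k : ℕ) + m = 2 * a + 1) _
      (by omega) (by intro a _ ha hb; omega)]
    ring

lemma planL_col {m : ℕ} (h2 : 2 ∣ m) {j : Fin m} (hj : (j : ℕ) < m / 2) (l : Fin m) :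
    ∑ k : Fin m, planL m k l = stMat m j l := by
  have hl2 := l.isLt
  unfold planL stMat
  rw [Finset.sum_add_distrib,
    Fin.sum_univ_eq_sum_range (fun a => if a = 2 * (l : ℕ) then 1 / (m : ℝ) else 0) m,
    Fin.sum_univ_eq_sum_range (fun a => if a = 2 * (l : ℕ) + 1 then 1 / (m : ℝ) else 0) m]
  by_cases hl : (l : ℕ) < m / 2
  · rw [sum_range_unique (c := 2 * (l : ℕ)) (by omega) (fun a => a = 2 * (l : ℕ)) _
      rfl (by intro a _ ha hb; omega),
      sum_range_unique (c := 2 * (l : ℕ) + 1) (by omega) (fun a => a = 2 * (l : ℕ) + 1) _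
      rfl (by intro a _ ha hb; omega), if_pos (Or.inl ⟨hj, hl⟩)]
    ring
  · rw [sum_range_none (fun a => a = 2 * (l : ℕ)) _ (by intro a _ h3; omega),
      sum_range_none (fun a => a = 2 * (l : ℕ) + 1) _ (by intro a _ h3; omega),
      if_neg (by omega)]
    ring

lemma planR_col {m : ℕ} (h2 : 2 ∣ m) {j : Fin m} (hj : ¬ (j : ℕ) < m / 2) (l : Fin m) :
    ∑ k : Fin m, planR m k l = stMat m j l := by
  have hl2 := l.isLt
  unfold planR stMat
  rw [Finset.sum_add_distrib,
    Fin.sum_univ_eq_sum_range (fun a => if a + m = 2 * (l : ℕ) then 1 / (m : ℝ) else 0) m,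
    Fin.sum_univ_eq_sum_range (fun a => if a + m = 2 * (l : ℕ) + 1 then 1 / (m : ℝ) else 0) m]
  by_cases hl : m / 2 ≤ (l : ℕ)
  · rw [sum_range_unique (c := 2 * (l : ℕ) - m) (by omega) (fun a => a + m = 2 * (l : ℕ)) _
      (by omega) (by intro a _ ha hb; omega),
      sum_range_unique (c := 2 * (l : ℕ) + 1 - m) (by omega) (fun a => a + m = 2 * (l : ℕ) + 1) _
      (by omega) (by intro a _ ha hb; omega), if_pos (Or.inr ⟨by omega, hl⟩)]
    ring
  · rw [sum_range_none (fun a => a + m = 2 * (l : ℕ)) _ (by intro a _ h3; omega),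
      sum_range_none (fun a => a + m = 2 * (l : ℕ) + 1) _ (by intro a _ h3; omega),
      if_neg (by omega)]
    ring

lemma sum_two_mul_add_one (s : ℕ) : ∑ a ∈ range s, (2 * (a : ℝ) + 1) = (s : ℝ) ^ 2 := by
  rw [Finset.sum_add_distrib, ← Finset.mul_sum, sum_range_cast, Finset.sum_const,
    Finset.card_range]
  push_cast
  ring

lemma planL_cost {m : ℕ} (h2 : 2 ∣ m) (hm : 0 < m) : planCost (planL m) = (m : ℝ) / 4 := by
  unfold planCost planL
  rw [Finset.sum_comm]
  have inner : ∀ l : Fin m, (∑ k : Fin m,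
      ((if (k : ℕ) = 2 * (l : ℕ) then 1 / (m : ℝ) else 0) +
       (if (k : ℕ) = 2 * (l : ℕ) + 1 then 1 / (m : ℝ) else 0)) * |((k : ℕ) : ℝ) - ((l : ℕ) : ℝ)|)
      = (if (l : ℕ) < m / 2 then (2 * ((l : ℕ) : ℝ) + 1) / m else 0) := by
    intro l
    have hl2 := l.isLt
    have expand : ∀ k : Fin m,
        ((if (k : ℕ) = 2 * (l : ℕ) then 1 / (m : ℝ) else 0) +
         (if (k : ℕ) = 2 * (l : ℕ) + 1 then 1 / (m : ℝ) else 0)) * |((k : ℕ) : ℝ) - ((l : ℕ) : ℝ)|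
        = (if (k : ℕ) = 2 * (l : ℕ) then (1 / (m : ℝ)) * |((k : ℕ) : ℝ) - ((l : ℕ) : ℝ)| else 0) +
          (if (k : ℕ) = 2 * (l : ℕ) + 1 then (1 / (m : ℝ)) * |((k : ℕ) : ℝ) - ((l : ℕ) : ℝ)| else 0) := by
      intro k; split_ifs <;> ring
    rw [Finset.sum_congr rfl fun k _ => expand k, Finset.sum_add_distrib,
      Fin.sum_univ_eq_sum_range (fun a => if a = 2 * (l : ℕ) then (1 / (m : ℝ)) * |(a : ℝ) - ((l : ℕ) : ℝ)| else 0) m,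
      Fin.sum_univ_eq_sum_range (fun a => if a = 2 * (l : ℕ) + 1 then (1 / (m : ℝ)) * |(a : ℝ) - ((l : ℕ) : ℝ)| else 0) m]
    by_cases hl : (l : ℕ) < m / 2
    · rw [sum_range_unique (c := 2 * (l : ℕ)) (by omega) (fun a => a = 2 * (l : ℕ)) _
        rfl (by intro a _ ha hb; omega),
        sum_range_unique (c := 2 * (l : ℕ) + 1) (by omega) (fun a => a = 2 * (l : ℕ) + 1) _
        rfl (by intro a _ ha hb; omega), if_pos hl]
      have h0 : (0 : ℝ) ≤ ((l : ℕ) : ℝ) := Nat.cast_nonneg _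
      push_cast
      rw [abs_of_nonneg (by linarith), abs_of_nonneg (by linarith)]
      ring
    · rw [sum_range_none (fun a => a = 2 * (l : ℕ)) _ (by intro a _ h3; omega),
        sum_range_none (fun a => a = 2 * (l : ℕ) + 1) _ (by intro a _ h3; omega), if_neg hl]
      ring
  rw [Finset.sum_congr rfl fun l _ => inner l,
    Fin.sum_univ_eq_sum_range (fun a => if a < m / 2 then (2 * (a : ℝ) + 1) / m else 0) m,
    sum_range_if_lt (by omega)]
  obtain ⟨s, rfl⟩ := h2
  have hs : (2 * s) / 2 = s := by omega
  rw [hs, ← Finset.sum_div, sum_two_mul_add_one]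
  have hs0 : (s : ℝ) ≠ 0 := Nat.cast_ne_zero.mpr (by omega)
  push_cast
  field_simp
  ring

lemma sum_aux2 (s : ℕ) : ∑ i ∈ range s, (2 * (s : ℝ) - 2 * (i : ℝ) - 1) = (s : ℝ) ^ 2 := by
  rw [Finset.sum_sub_distrib, Finset.sum_sub_distrib, Finset.sum_const, Finset.sum_const,
    Finset.card_range, ← Finset.mul_sum, sum_range_cast]
  push_cast
  ring

lemma planR_cost {m : ℕ} (h2 : 2 ∣ m) (hm : 0 < m) : planCost (planR m) = (m : ℝ) / 4 := by
  unfold planCost planR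
  rw [Finset.sum_comm]
  have inner : ∀ l : Fin m, (∑ k : Fin m,
      ((if (k : ℕ) + m = 2 * (l : ℕ) then 1 / (m : ℝ) else 0) +
       (if (k : ℕ) + m = 2 * (l : ℕ) + 1 then 1 / (m : ℝ) else 0)) * |((k : ℕ) : ℝ) - ((l : ℕ) : ℝ)|)
      = (if m / 2 ≤ (l : ℕ) then (2 * (m : ℝ) - 2 * ((l : ℕ) : ℝ) - 1) / m else 0) := by
    intro l
    have hl2 := l.isLt
    have expand : ∀ k : Fin m,
        ((if (k : ℕ) + m = 2 * (l : ℕ) then 1 / (m : ℝ) else 0) +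
         (if (k : ℕ) + m = 2 * (l : ℕ) + 1 then 1 / (m : ℝ) else 0)) * |((k : ℕ) : ℝ) - ((l : ℕ) : ℝ)|
        = (if (k : ℕ) + m = 2 * (l : ℕ) then (1 / (m : ℝ)) * |((k : ℕ) : ℝ) - ((l : ℕ) : ℝ)| else 0) +
          (if (k : ℕ) + m = 2 * (l : ℕ) + 1 then (1 / (m : ℝ)) * |((k : ℕ) : ℝ) - ((l : ℕ) : ℝ)| else 0) := by
      intro k; split_ifs <;> ring
    rw [Finset.sum_congr rfl fun k _ => expand k, Finset.sum_add_distrib,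
      Fin.sum_univ_eq_sum_range (fun a => if a + m = 2 * (l : ℕ) then (1 / (m : ℝ)) * |(a : ℝ) - ((l : ℕ) : ℝ)| else 0) m,
      Fin.sum_univ_eq_sum_range (fun a => if a + m = 2 * (l : ℕ) + 1 then (1 / (m : ℝ)) * |(a : ℝ) - ((l : ℕ) : ℝ)| else 0) m]
    by_cases hl : m / 2 ≤ (l : ℕ)
    · rw [sum_range_unique (c := 2 * (l : ℕ) - m) (by omega) (fun a => a + m = 2 * (l : ℕ)) _
        (by omega) (by intro a _ ha hb; omega),
        sum_range_unique (c := 2 * (l : ℕ) + 1 - m) (by omega) (fun a => a + m = 2 * (l : ℕ) + 1) _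
        (by omega) (by intro a _ ha hb; omega), if_pos hl]
      have c1 : ((2 * (l : ℕ) - m : ℕ) : ℝ) = 2 * ((l : ℕ) : ℝ) - m := by
        rw [Nat.cast_sub (by omega)]; push_cast; ring
      have c2 : ((2 * (l : ℕ) + 1 - m : ℕ) : ℝ) = 2 * ((l : ℕ) : ℝ) + 1 - m := by
        rw [Nat.cast_sub (by omega)]; push_cast; ring
      rw [c1, c2]
      have h1 : ((l : ℕ) : ℝ) + 1 ≤ (m : ℝ) := by exact_mod_cast l.isLt
      rw [abs_of_nonpos (by linarith), abs_of_nonpos (by linarith)]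
      ring
    · rw [sum_range_none (fun a => a + m = 2 * (l : ℕ)) _ (by intro a _ h3; omega),
        sum_range_none (fun a => a + m = 2 * (l : ℕ) + 1) _ (by intro a _ h3; omega), if_neg hl]
      ring
  rw [Finset.sum_congr rfl fun l _ => inner l,
    Fin.sum_univ_eq_sum_range (fun a => if m / 2 ≤ a then (2 * (m : ℝ) - 2 * (a : ℝ) - 1) / m else 0) m,
    sum_range_if_ge]
  obtain ⟨s, rfl⟩ := h2
  rw [Finset.sum_Ico_eq_sum_range]
  have hss : 2 * s - s = s := by omega
  have hs : (2 * s) / 2 = s := by omega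
  rw [hs, hss]
  have step : ∀ i ∈ range s,
      (2 * ((2 * s : ℕ) : ℝ) - 2 * ((s + i : ℕ) : ℝ) - 1) / ((2 * s : ℕ) : ℝ)
      = (2 * (s : ℝ) - 2 * (i : ℝ) - 1) / ((2 * s : ℕ) : ℝ) := by
    intro i _; push_cast; ring
  rw [Finset.sum_congr rfl step, ← Finset.sum_div, sum_aux2]
  have hs0 : (s : ℝ) ≠ 0 := Nat.cast_ne_zero.mpr (by omega)
  push_cast
  field_simp
  ring

lemma MM_un {m : ℕ} (hm : 0 < m) (i : Fin m) : MM (unMat m i) = ((m : ℝ) - 1) / 2 := by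
  unfold MM unMat
  rw [Fin.sum_univ_eq_sum_range (fun a => (a : ℝ) * (1 / (m : ℝ))) m, ← Finset.sum_mul,
    sum_range_cast]
  have hm0 : (m : ℝ) ≠ 0 := Nat.cast_ne_zero.mpr (by omega)
  field_simp

lemma MM_stL {m : ℕ} (hm : 0 < m) {j : Fin m} (hj : (j : ℕ) < m / 2) (h2 : 2 ∣ m) :
    MM (stMat m j) = ((m : ℝ) - 2) / 4 := by
  unfold MM stMat
  have key : ∀ l : Fin m, ((l : ℕ) : ℝ) *
      (if ((j : ℕ) < m / 2 ∧ (l : ℕ) < m / 2) ∨ (m / 2 ≤ (j : ℕ) ∧ m / 2 ≤ (l : ℕ))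
        then 2 / (m : ℝ) else 0)
      = (if (l : ℕ) < m / 2 then ((l : ℕ) : ℝ) * (2 / (m : ℝ)) else 0) := by
    intro l
    by_cases hl : (l : ℕ) < m / 2
    · rw [if_pos (Or.inl ⟨hj, hl⟩), if_pos hl]
    · rw [if_neg (by omega), if_neg hl, mul_zero]
  rw [Finset.sum_congr rfl fun l _ => key l,
    Fin.sum_univ_eq_sum_range (fun a => if a < m / 2 then (a : ℝ) * (2 / (m : ℝ)) else 0) m,
    sum_range_if_lt (by omega), ← Finset.sum_mul, sum_range_cast]
  obtain ⟨s, rfl⟩ := h2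
  have hs : (2 * s) / 2 = s := by omega
  rw [hs]
  have hs0 : (s : ℝ) ≠ 0 := Nat.cast_ne_zero.mpr (by omega)
  push_cast
  field_simp
  ring

lemma MM_stR {m : ℕ} (hm : 0 < m) {j : Fin m} (hj : ¬ (j : ℕ) < m / 2) (h2 : 2 ∣ m) :
    MM (stMat m j) = (3 * (m : ℝ) - 2) / 4 := by
  unfold MM stMat
  have key : ∀ l : Fin m, ((l : ℕ) : ℝ) *
      (if ((j : ℕ) < m / 2 ∧ (l : ℕ) < m / 2) ∨ (m / 2 ≤ (j : ℕ) ∧ m / 2 ≤ (l : ℕ))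
        then 2 / (m : ℝ) else 0)
      = (if m / 2 ≤ (l : ℕ) then ((l : ℕ) : ℝ) * (2 / (m : ℝ)) else 0) := by
    intro l
    by_cases hl : m / 2 ≤ (l : ℕ)
    · rw [if_pos (Or.inr ⟨by omega, hl⟩), if_pos hl]
    · rw [if_neg (by omega), if_neg hl, mul_zero]
  rw [Finset.sum_congr rfl fun l _ => key l,
    Fin.sum_univ_eq_sum_range (fun a => if m / 2 ≤ a then (a : ℝ) * (2 / (m : ℝ)) else 0) m,
    sum_range_if_ge]
  obtain ⟨s, rfl⟩ := h2
  rw [Finset.sum_Ico_eq_sum_range]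
  have hss : 2 * s - s = s := by omega
  have hs : (2 * s) / 2 = s := by omega
  rw [hs, hss]
  have step : ∀ i ∈ range s,
      ((s + i : ℕ) : ℝ) * (2 / ((2 * s : ℕ) : ℝ)) = ((s : ℝ) + (i : ℝ)) * (2 / ((2 * s : ℕ) : ℝ)) := by
    intro i _; push_cast; ring
  rw [Finset.sum_congr rfl step, ← Finset.sum_mul, Finset.sum_add_distrib, Finset.sum_const,
    Finset.card_range, sum_range_cast]
  have hs0 : (s : ℝ) ≠ 0 := Nat.cast_ne_zero.mpr (by omega)
  push_cast
  field_simp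
  ring

lemma emd_un_st {m : ℕ} (hm : 0 < m) (h2 : 2 ∣ m) (i j : Fin m) :
    emd (unMat m i) (stMat m j) = (m : ℝ) / 4 := by
  by_cases hj : (j : ℕ) < m / 2
  · have hplan : IsPlan (unMat m i) (stMat m j) (planL m) :=
      ⟨fun k l => by unfold planL; positivity, fun k => planL_row k, fun l => planL_col h2 hj l⟩
    have habs : |MM (unMat m i) - MM (stMat m j)| = (m : ℝ) / 4 := by
      rw [MM_un hm i, MM_stL hm hj h2,
        show ((m : ℝ) - 1) / 2 - ((m : ℝ) - 2) / 4 = (m : ℝ) / 4 by ring,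
        abs_of_nonneg (by positivity)]
    rw [emd_eq hplan (by rw [planL_cost h2 hm, habs]), habs]
  · have hplan : IsPlan (unMat m i) (stMat m j) (planR m) :=
      ⟨fun k l => by unfold planR; positivity, fun k => planR_row h2 k, fun l => planR_col h2 hj l⟩
    have habs : |MM (unMat m i) - MM (stMat m j)| = (m : ℝ) / 4 := by
      rw [MM_un hm i, MM_stR hm hj h2,
        show ((m : ℝ) - 1) / 2 - (3 * (m : ℝ) - 2) / 4 = -((m : ℝ) / 4) by ring,
        abs_neg, abs_of_nonneg (by positivity)]
    rw [emd_eq hplan (by rw [planR_cost h2 hm, habs]), habs]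

lemma dpos_part2 {m : ℕ} (hm : 0 < m) (h2 : 2 ∣ m) :
    dpos (unMat m) (stMat m) = (m : ℝ) ^ 2 / 4 := by
  have hval : ∀ δ : Equiv.Perm (Fin m),
      ∑ i, emd (unMat m i) (stMat m (δ i)) = (m : ℝ) ^ 2 / 4 := by
    intro δ
    rw [Finset.sum_congr rfl fun i _ => emd_un_st hm h2 i (δ i), Finset.sum_const,
      Finset.card_univ, Fintype.card_fin, nsmul_eq_mul]
    ring
  refine le_antisymm ?_ (le_ciInf fun δ => (hval δ).ge)
  exact (ciInf_le ⟨(m : ℝ) ^ 2 / 4, by rintro _ ⟨δ, rfl⟩; exact (hval δ).ge⟩ 1).trans (hval 1).le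

/-- For m divisible by 4, the EMD-positionwise distance between identity and
antagonism equals m²/4, and so does the distance between uniformity and
stratification. -/
theorem stmt9 (m : ℕ) (hm : 0 < m) (h4 : 4 ∣ m) :
    dpos (idMat m) (anMat m) = (m : ℝ) ^ 2 / 4 ∧
    dpos (unMat m) (stMat m) = (m : ℝ) ^ 2 / 4 := by
  have h2 : 2 ∣ m := dvd_trans (by norm_num) h4
  exact ⟨dpos_part1 hm h2, dpos_part2 hm h2⟩

end
end

section
/- For m divisible by 4, the EMD-positionwise distance between the antagonism matrix AN_m and the stratification matrix ST_m equals (13/48)m² − 1/3. -/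
open Finset

noncomputable section
open scoped Classical

lemma gauss (n : ℕ) : ∑ k ∈ Finset.range n, (k:ℝ) = n*(n-1)/2 := by
  induction n with
  | zero => simp
  | succ n ih => rw [Finset.sum_range_succ, ih]; push_cast; ring

lemma gauss2 (n : ℕ) : ∑ k ∈ Finset.range n, (k:ℝ)^2 = n*(n-1)*(2*n-1)/6 := by
  induction n with
  | zero => simp
  | succ n ih => rw [Finset.sum_range_succ, ih]; push_cast; ring

def step {n : ℕ} (i k : Fin n) : ℝ := if (i:ℕ) ≤ (k:ℕ) then 1 else 0

lemma sum_ind_range (n a b : ℕ) (hb : b ≤ n) :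
    ∑ k ∈ Finset.range n, (if a ≤ k ∧ k < b then (1:ℝ) else 0) = ((b - a : ℕ) : ℝ) := by
  rw [← Finset.sum_filter]
  have : Finset.filter (fun k => a ≤ k ∧ k < b) (Finset.range n) = Finset.Ico a b := by
    ext k; simp [Finset.mem_Ico]; omega
  rw [this]
  simp [Nat.card_Ico]

lemma abs_sub_eq_sum_step {n : ℕ} (i j : Fin n) :
    |((i : ℕ) : ℝ) - ((j : ℕ) : ℝ)| = ∑ k : Fin n, |step i k - step j k| := by
  wlog h : (i:ℕ) ≤ (j:ℕ) with H
  · rw [abs_sub_comm, H j i (le_of_not_ge h)]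
    exact Finset.sum_congr rfl fun k _ => (abs_sub_comm _ _)
  · have hterm : ∀ k : Fin n, |step i k - step j k|
        = if (i:ℕ) ≤ (k:ℕ) ∧ (k:ℕ) < (j:ℕ) then 1 else 0 := by
      intro k
      unfold step
      split_ifs with h1 h2 h3 h2 <;> simp_all <;> omega
    rw [Finset.sum_congr rfl (fun k _ => hterm k),
      Fin.sum_univ_eq_sum_range (fun k => if (i:ℕ) ≤ k ∧ k < (j:ℕ) then (1:ℝ) else 0),
      sum_ind_range n i j j.isLt.le]
    rw [abs_sub_comm, abs_of_nonneg (sub_nonneg.2 (by exact_mod_cast h))]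
    have : ((j:ℕ) - (i:ℕ) : ℕ) = (j:ℕ) - (i:ℕ) := rfl
    push_cast [h]
    ring

def cdf {n : ℕ} (x : Fin n → ℝ) (k : Fin n) : ℝ := ∑ a : Fin n, if (a:ℕ) ≤ (k:ℕ) then x a else 0

lemma lb_le_planCost {n : ℕ} (x y : Fin n → ℝ) (f : Fin n → Fin n → ℝ) (hf : IsPlan x y f) :
    ∑ k : Fin n, |cdf x k - cdf y k| ≤ planCost f := by
  obtain ⟨hpos, hrow, hcol⟩ := hf
  have hcost : planCost f = ∑ k : Fin n, ∑ i : Fin n, ∑ j : Fin n, f i j * |step i k - step j k| := by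
    unfold planCost
    have e1 : ∀ i : Fin n, ∑ j : Fin n, f i j * |((i : ℕ) : ℝ) - ((j : ℕ) : ℝ)|
        = ∑ k : Fin n, ∑ j : Fin n, f i j * |step i k - step j k| := by
      intro i
      rw [Finset.sum_comm]
      apply Finset.sum_congr rfl; intro j _
      rw [abs_sub_eq_sum_step, Finset.mul_sum]
    rw [Finset.sum_congr rfl (fun i _ => e1 i), Finset.sum_comm]
  rw [hcost]
  apply Finset.sum_le_sum
  intro k _
  have key : cdf x k - cdf y k = ∑ i : Fin n, ∑ j : Fin n, f i j * (step i k - step j k) := by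
    have h1 : ∑ i : Fin n, ∑ j : Fin n, f i j * step i k = cdf x k := by
      unfold cdf
      apply Finset.sum_congr rfl; intro i _
      rw [← Finset.sum_mul, hrow i]
      unfold step
      split_ifs <;> simp
    have h2 : ∑ i : Fin n, ∑ j : Fin n, f i j * step j k = cdf y k := by
      rw [Finset.sum_comm]
      unfold cdf
      apply Finset.sum_congr rfl; intro j _
      rw [← Finset.sum_mul, hcol j]
      unfold step
      split_ifs <;> simp
    simp only [mul_sub, Finset.sum_sub_distrib, h1, h2]
  rw [key]
  calc |∑ i : Fin n, ∑ j : Fin n, f i j * (step i k - step j k)|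
      ≤ ∑ i : Fin n, |∑ j : Fin n, f i j * (step i k - step j k)| :=
        Finset.abs_sum_le_sum_abs _ _
    _ ≤ ∑ i : Fin n, ∑ j : Fin n, |f i j * (step i k - step j k)| :=
        Finset.sum_le_sum fun i _ => Finset.abs_sum_le_sum_abs _ _
    _ = ∑ i : Fin n, ∑ j : Fin n, f i j * |step i k - step j k| := by
        apply Finset.sum_congr rfl; intro i _
        apply Finset.sum_congr rfl; intro j _
        rw [abs_mul, abs_of_nonneg (hpos i j)]

lemma emd_eq_of {n : ℕ} (x y : Fin n → ℝ) (C : ℝ) (f : Fin n → Fin n → ℝ)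
    (hf : IsPlan x y f) (hc : planCost f = C)
    (hlb : ∀ g, IsPlan x y g → C ≤ planCost g) : emd x y = C := by
  unfold emd
  apply le_antisymm
  · exact csInf_le ⟨C, fun c ⟨g, hg, hgc⟩ => hgc ▸ hlb g hg⟩ ⟨f, hf, hc⟩
  · exact le_csInf ⟨C, f, hf, hc⟩ (fun c ⟨g, hg, hgc⟩ => hgc ▸ hlb g hg)


lemma sum_rev {n : ℕ} (g : Fin n → ℝ) : ∑ i : Fin n, g (Fin.rev i) = ∑ i : Fin n, g i :=
  Fintype.sum_equiv Fin.revPerm _ _ (fun i => rfl)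

lemma abs_rev {n : ℕ} (i j : Fin n) :
    |(((Fin.rev i : Fin n) : ℕ) : ℝ) - (((Fin.rev j : Fin n) : ℕ) : ℝ)| = |((i:ℕ):ℝ) - ((j:ℕ):ℝ)| := by
  rw [Fin.val_rev, Fin.val_rev, Nat.cast_sub (by omega : (i:ℕ)+1 ≤ n), Nat.cast_sub (by omega : (j:ℕ)+1 ≤ n)]
  push_cast
  have h : (n:ℝ) - ((i:ℕ)+1) - ((n:ℝ) - ((j:ℕ)+1)) = (j:ℕ) - (i:ℕ) := by ring
  rw [h, abs_sub_comm]

lemma plan_rev {n : ℕ} (x y : Fin n → ℝ) (f : Fin n → Fin n → ℝ) (hf : IsPlan x y f) :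
    IsPlan (fun j => x (Fin.rev j)) (fun j => y (Fin.rev j))
      (fun i j => f (Fin.rev i) (Fin.rev j)) ∧
    planCost (fun i j => f (Fin.rev i) (Fin.rev j)) = planCost f := by
  obtain ⟨hpos, hrow, hcol⟩ := hf
  refine ⟨⟨fun i j => hpos _ _, ?_, ?_⟩, ?_⟩
  · intro i
    rw [sum_rev (fun j => f (Fin.rev i) j)]
    exact hrow _
  · intro j
    rw [sum_rev (fun i => f i (Fin.rev j))]
    exact hcol _
  · unfold planCost
    refine Fintype.sum_equiv Fin.revPerm _ _ (fun i => ?_)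
    refine Fintype.sum_equiv Fin.revPerm _ _ (fun j => ?_)
    show f i.rev j.rev * _ = f (Fin.rev i) (Fin.rev j) * _
    congr 1
    exact (abs_rev i j).symm

lemma emd_rev {n : ℕ} (x y : Fin n → ℝ) :
    emd (fun j => x (Fin.rev j)) (fun j => y (Fin.rev j)) = emd x y := by
  have hsub : ∀ (x y : Fin n → ℝ),
      {c | ∃ f, IsPlan x y f ∧ planCost f = c} ⊆
      {c | ∃ f, IsPlan (fun j => x (Fin.rev j)) (fun j => y (Fin.rev j)) f ∧ planCost f = c} := by
    rintro x y c ⟨f, hf, rfl⟩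
    obtain ⟨h1, h2⟩ := plan_rev x y f hf
    exact ⟨_, h1, h2⟩
  unfold emd
  congr 1
  apply Set.Subset.antisymm
  · have := hsub (fun j => x (Fin.rev j)) (fun j => y (Fin.rev j))
    simpa [Fin.rev_rev] using this
  · exact hsub x y


def wcol (t i : ℕ) : ℝ :=
  if i < t then ((i:ℝ)^2 + (i:ℝ) + 3*(t:ℝ)^2 - (t:ℝ) - 2*(t:ℝ)*(i:ℝ))/(2*(t:ℝ)) else (t:ℝ)

lemma sum_fin_single {m : ℕ} (c : ℕ) (hc : c < m) (g : ℕ → ℝ) :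
    ∑ a : Fin m, (if (a:ℕ) = c then g (a:ℕ) else 0) = g c := by
  rw [Fin.sum_univ_eq_sum_range (fun a => if a = c then g a else 0),
    Finset.sum_ite_eq' (Finset.range m) c g]
  simp [hc]

lemma sumRangeLin (n : ℕ) (p q : ℝ) :
    ∑ k ∈ Finset.range n, (p + q*(k:ℝ)) = (n:ℝ)*p + q*((n:ℝ)*((n:ℝ)-1))/2 := by
  rw [Finset.sum_add_distrib, ← Finset.mul_sum, gauss, Finset.sum_const, Finset.card_range,
    nsmul_eq_mul]
  ring

lemma sumIcoLin (a b : ℕ) (h : a ≤ b) (p q : ℝ) :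
    ∑ k ∈ Finset.Ico a b, (p + q*(k:ℝ))
      = ((b:ℝ) - (a:ℝ))*p + q*((b:ℝ)*((b:ℝ)-1) - (a:ℝ)*((a:ℝ)-1))/2 := by
  rw [Finset.sum_Ico_eq_sub _ h, sumRangeLin, sumRangeLin]
  ring

lemma anCol (t : ℕ) (I : Fin (4*t)) (a : Fin (4*t)) :
    anMat (4*t) I a = (if (a:ℕ) = (I:ℕ) then (1:ℝ)/2 else 0)
      + (if (a:ℕ) = 4*t-1-(I:ℕ) then (1:ℝ)/2 else 0) := by
  unfold anMat
  have h1 : (a = I) ↔ ((a:ℕ) = (I:ℕ)) := Fin.ext_iff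
  have h2 : ((I:ℕ) + (a:ℕ) = 4*t - 1) ↔ ((a:ℕ) = 4*t-1-(I:ℕ)) := by
    have := I.isLt; have := a.isLt; omega
  simp only [h1, h2]
  split_ifs <;> norm_num

lemma stCol (t : ℕ) (C : Fin (4*t)) (hC : (C:ℕ) < 2*t) (j : Fin (4*t)) :
    stMat (4*t) C j = if (j:ℕ) < 2*t then 2/((4*t:ℕ):ℝ) else 0 := by
  unfold stMat
  have hm2 : (4*t)/2 = 2*t := by omega
  rw [hm2]
  split_ifs with h h' h' <;> first | rfl | omega

def planAN (t i : ℕ) : Fin (4*t) → Fin (4*t) → ℝ := fun a j =>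
  (if (a:ℕ) = i ∧ (j:ℕ) < t then 2/((4*t:ℕ):ℝ) else 0) +
  (if (a:ℕ) = 4*t-1-i ∧ t ≤ (j:ℕ) ∧ (j:ℕ) < 2*t then 2/((4*t:ℕ):ℝ) else 0)

lemma planAN_isPlan (t : ℕ) (ht : 0 < t) (I C : Fin (4*t)) (hI : (I:ℕ) < 2*t)
    (hC : (C:ℕ) < 2*t) :
    IsPlan (anMat (4*t) I) (stMat (4*t) C) (planAN t (I:ℕ)) := by
  have hm : ((4*t:ℕ):ℝ) = 4*(t:ℝ) := by push_cast; ring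
  have ht' : (0:ℝ) < (t:ℝ) := by exact_mod_cast ht
  refine ⟨fun a j => ?_, fun a => ?_, fun j => ?_⟩
  · unfold planAN
    apply add_nonneg <;> (split_ifs <;> positivity)
  · -- row sums
    unfold planAN
    rw [Finset.sum_add_distrib]
    have e1 : ∑ j : Fin (4*t), (if (a:ℕ) = (I:ℕ) ∧ (j:ℕ) < t then (2/((4*t:ℕ):ℝ)) else 0)
        = if (a:ℕ) = (I:ℕ) then (1:ℝ)/2 else 0 := by
      by_cases h : (a:ℕ) = (I:ℕ)
      · simp only [h, true_and, if_true]
        rw [Fin.sum_univ_eq_sum_range (fun j => if j < t then (2/((4*t:ℕ):ℝ)) else 0),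
          ← Finset.sum_filter]
        have hfil : (Finset.range (4*t)).filter (fun j => j < t) = Finset.range t := by
          ext j; simp [Finset.mem_filter, Finset.mem_range]; omega
        rw [hfil, Finset.sum_const, Finset.card_range, nsmul_eq_mul, hm]
        field_simp
        ring
      · simp [h]
    have e2 : ∑ j : Fin (4*t), (if (a:ℕ) = 4*t-1-(I:ℕ) ∧ t ≤ (j:ℕ) ∧ (j:ℕ) < 2*t
          then (2/((4*t:ℕ):ℝ)) else 0)
        = if (a:ℕ) = 4*t-1-(I:ℕ) then (1:ℝ)/2 else 0 := by
      by_cases h : (a:ℕ) = 4*t-1-(I:ℕ)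
      · simp only [h, true_and, if_true]
        rw [Fin.sum_univ_eq_sum_range (fun j => if t ≤ j ∧ j < 2*t then (2/((4*t:ℕ):ℝ)) else 0),
          ← Finset.sum_filter]
        have hfil : (Finset.range (4*t)).filter (fun j => t ≤ j ∧ j < 2*t) = Finset.Ico t (2*t) := by
          ext j; simp [Finset.mem_filter, Finset.mem_range, Finset.mem_Ico]; omega
        rw [hfil, Finset.sum_const, Nat.card_Ico, nsmul_eq_mul, hm]
        have h2t : ((2*t - t : ℕ):ℝ) = (t:ℝ) := by
          have : 2*t - t = t := by omega
          rw [this]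
        rw [h2t]
        field_simp
        ring
      · simp [h]
    rw [e1, e2, anCol]
  · -- column sums
    unfold planAN
    rw [Finset.sum_add_distrib]
    simp only [ite_and]
    rw [sum_fin_single (I:ℕ) I.isLt (fun _ => if (j:ℕ) < t then (2/((4*t:ℕ):ℝ)) else 0),
      sum_fin_single (4*t-1-(I:ℕ)) (by omega) (fun _ => if t ≤ (j:ℕ) then if (j:ℕ) < 2*t then (2/((4*t:ℕ):ℝ)) else 0 else 0),
      stCol t C hC]
    split_ifs <;> first | omega | ring

lemma planAN_cost (t : ℕ) (ht : 0 < t) (i : ℕ) (hI : i < 2*t) :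
    planCost (planAN t i) = wcol t i := by
  have hm : ((4*t:ℕ):ℝ) = 4*(t:ℝ) := by push_cast; ring
  have ht' : (0:ℝ) < (t:ℝ) := by exact_mod_cast ht
  have hi2 : (i:ℝ) + 1 ≤ 2*(t:ℝ) := by exact_mod_cast hI
  have hb : ((4*t-1-i:ℕ):ℝ) = 4*(t:ℝ)-1-(i:ℝ) := by
    rw [Nat.cast_sub (by omega), Nat.cast_sub (by omega)]; push_cast; ring
  set v : ℝ := 2/((4*t:ℕ):ℝ) with hv
  have key : ∀ a : Fin (4*t),
      (∑ j : Fin (4*t), (planAN t i) a j * |((a:ℕ):ℝ) - ((j:ℕ):ℝ)|)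
      = (if (a:ℕ) = i then
          ∑ jn ∈ Finset.range (4*t), (if jn < t then v * |((a:ℕ):ℝ) - (jn:ℝ)| else 0) else 0)
      + (if (a:ℕ) = 4*t-1-i then
          ∑ jn ∈ Finset.range (4*t), (if t ≤ jn ∧ jn < 2*t then v * |((a:ℕ):ℝ) - (jn:ℝ)| else 0) else 0) := by
    intro a
    unfold planAN
    simp only [add_mul, ite_mul, zero_mul]
    rw [Finset.sum_add_distrib]
    congr 1
    · by_cases h : (a:ℕ) = i
      · simp only [h, true_and, if_true]
        exact Fin.sum_univ_eq_sum_range (fun jn => if jn < t then v * |(i:ℝ) - (jn:ℝ)| else 0) (4*t)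
      · simp [h]
    · by_cases h : (a:ℕ) = 4*t-1-i
      · simp only [h, true_and, if_true]
        exact Fin.sum_univ_eq_sum_range
          (fun jn => if t ≤ jn ∧ jn < 2*t then v * |((4*t-1-i:ℕ):ℝ) - (jn:ℝ)| else 0) (4*t)
      · simp [h]
  unfold planCost
  rw [Finset.sum_congr rfl (fun a _ => key a), Finset.sum_add_distrib,
    sum_fin_single i (by omega)
      (fun n => ∑ jn ∈ Finset.range (4*t), (if jn < t then v * |(n:ℝ) - (jn:ℝ)| else 0)),
    sum_fin_single (4*t-1-i) (by omega)
      (fun n => ∑ jn ∈ Finset.range (4*t), (if t ≤ jn ∧ jn < 2*t then v * |(n:ℝ) - (jn:ℝ)| else 0))]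
  -- second sum: over Ico t (2t)
  have hfil2 : (Finset.range (4*t)).filter (fun jn => t ≤ jn ∧ jn < 2*t) = Finset.Ico t (2*t) := by
    ext jn; simp [Finset.mem_filter, Finset.mem_range, Finset.mem_Ico]; omega
  have e2 : ∑ jn ∈ Finset.range (4*t),
      (if t ≤ jn ∧ jn < 2*t then v * |((4*t-1-i:ℕ):ℝ) - (jn:ℝ)| else 0)
      = ∑ jn ∈ Finset.Ico t (2*t), ((v*(4*(t:ℝ)-1-(i:ℝ))) + (-v)*(jn:ℝ)) := by
    rw [← Finset.sum_filter, hfil2]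
    apply Finset.sum_congr rfl
    intro jn hjn
    rw [Finset.mem_Ico] at hjn
    have hjn' : (jn:ℝ) + 1 ≤ 2*(t:ℝ) := by exact_mod_cast hjn.2
    rw [hb, abs_of_nonneg (by linarith)]
    ring
  rw [e2, sumIcoLin t (2*t) (by omega)]
  -- first sum
  have hfil1 : (Finset.range (4*t)).filter (fun jn => jn < t) = Finset.range t := by
    ext jn; simp [Finset.mem_filter, Finset.mem_range]; omega
  by_cases hit : i < t
  · have e1 : ∑ jn ∈ Finset.range (4*t), (if jn < t then v * |(i:ℝ) - (jn:ℝ)| else 0)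
        = (∑ jn ∈ Finset.Ico 0 i, ((v*(i:ℝ)) + (-v)*(jn:ℝ)))
          + ∑ jn ∈ Finset.Ico i t, ((-(v*(i:ℝ))) + v*(jn:ℝ)) := by
      rw [← Finset.sum_filter, hfil1, Finset.range_eq_Ico,
        ← Finset.sum_Ico_consecutive _ (Nat.zero_le i) (le_of_lt hit)]
      congr 1
      · apply Finset.sum_congr rfl
        intro jn hjn
        rw [Finset.mem_Ico] at hjn
        have : (jn:ℝ) + 1 ≤ (i:ℝ) := by exact_mod_cast hjn.2
        rw [abs_of_nonneg (by linarith)]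
        ring
      · apply Finset.sum_congr rfl
        intro jn hjn
        rw [Finset.mem_Ico] at hjn
        have : (i:ℝ) ≤ (jn:ℝ) := by exact_mod_cast hjn.1
        rw [abs_of_nonpos (by linarith)]
        ring
    rw [e1, sumIcoLin 0 i (Nat.zero_le i), sumIcoLin i t (le_of_lt hit)]
    unfold wcol
    rw [if_pos hit, hv, hm]
    push_cast
    field_simp
    ring
  · have e1 : ∑ jn ∈ Finset.range (4*t), (if jn < t then v * |(i:ℝ) - (jn:ℝ)| else 0)
        = ∑ jn ∈ Finset.range t, ((v*(i:ℝ)) + (-v)*(jn:ℝ)) := by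
      rw [← Finset.sum_filter, hfil1]
      apply Finset.sum_congr rfl
      intro jn hjn
      rw [Finset.mem_range] at hjn
      have h1 : (jn:ℝ) + 1 ≤ (t:ℝ) := by exact_mod_cast hjn
      have h2 : (t:ℝ) ≤ (i:ℝ) := by exact_mod_cast (le_of_not_gt hit)
      rw [abs_of_nonneg (by linarith)]
      ring
    rw [e1, sumRangeLin]
    unfold wcol
    rw [if_neg hit, hv, hm]
    push_cast
    field_simp
    ring

lemma lbd_eq (t : ℕ) (ht : 0 < t) (I C : Fin (4*t)) (hI : (I:ℕ) < 2*t) (hC : (C:ℕ) < 2*t) :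
    ∑ k : Fin (4*t), |cdf (anMat (4*t) I) k - cdf (stMat (4*t) C) k| = wcol t (I:ℕ) := by
  have hm : ((4*t:ℕ):ℝ) = 4*(t:ℝ) := by push_cast; ring
  have ht' : (0:ℝ) < (t:ℝ) := by exact_mod_cast ht
  set i := (I:ℕ) with hidef
  have hi2 : (i:ℝ) + 1 ≤ 2*(t:ℝ) := by exact_mod_cast hI
  have hb : ((4*t-1-i:ℕ):ℝ) = 4*(t:ℝ)-1-(i:ℝ) := by
    rw [Nat.cast_sub (by omega), Nat.cast_sub (by omega)]; push_cast; ring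
  set v : ℝ := 2/((4*t:ℕ):ℝ) with hv
  have hv0 : 0 ≤ v := by rw [hv]; positivity
  have htv : (t:ℝ) * v = 1/2 := by rw [hv, hm]; field_simp; ring
  have cdfx : ∀ k : Fin (4*t), cdf (anMat (4*t) I) k
      = (if i ≤ (k:ℕ) then (1:ℝ)/2 else 0) + (if 4*t-1-i ≤ (k:ℕ) then (1:ℝ)/2 else 0) := by
    intro k
    unfold cdf
    have hpt : ∀ a : Fin (4*t), (if (a:ℕ) ≤ (k:ℕ) then anMat (4*t) I a else 0)
        = (if (a:ℕ) = i then (if i ≤ (k:ℕ) then (1:ℝ)/2 else 0) else 0)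
        + (if (a:ℕ) = 4*t-1-i then (if 4*t-1-i ≤ (k:ℕ) then (1:ℝ)/2 else 0) else 0) := by
      intro a
      rw [anCol]
      split_ifs <;> first | omega | ring
    rw [Finset.sum_congr rfl (fun a _ => hpt a), Finset.sum_add_distrib,
      sum_fin_single i (by omega) (fun _ => if i ≤ (k:ℕ) then (1:ℝ)/2 else 0),
      sum_fin_single (4*t-1-i) (by omega) (fun _ => if 4*t-1-i ≤ (k:ℕ) then (1:ℝ)/2 else 0)]
  have cdfy : ∀ k : Fin (4*t), cdf (stMat (4*t) C) k
      = ((min ((k:ℕ)+1) (2*t) : ℕ):ℝ) * v := by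
    intro k
    unfold cdf
    have hpt : ∀ a : Fin (4*t), (if (a:ℕ) ≤ (k:ℕ) then stMat (4*t) C a else 0)
        = if (a:ℕ) ≤ (k:ℕ) ∧ (a:ℕ) < 2*t then v else 0 := by
      intro a
      rw [stCol t C hC]
      split_ifs <;> first | rfl | omega
    rw [Finset.sum_congr rfl (fun a _ => hpt a),
      Fin.sum_univ_eq_sum_range (fun a => if a ≤ (k:ℕ) ∧ a < 2*t then v else 0) (4*t),
      ← Finset.sum_filter]
    have hfil : (Finset.range (4*t)).filter (fun a => a ≤ (k:ℕ) ∧ a < 2*t)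
        = Finset.range (min ((k:ℕ)+1) (2*t)) := by
      ext a
      simp [Finset.mem_filter, Finset.mem_range]
      have := k.isLt
      omega
    rw [hfil, Finset.sum_const, Finset.card_range, nsmul_eq_mul]
  set E : ℕ → ℝ := fun kn =>
    |(if i ≤ kn then (1:ℝ)/2 else 0) + (if 4*t-1-i ≤ kn then (1:ℝ)/2 else 0)
      - ((min (kn+1) (2*t) : ℕ):ℝ) * v| with hE
  have hsum : ∑ k : Fin (4*t), |cdf (anMat (4*t) I) k - cdf (stMat (4*t) C) k|
      = ∑ kn ∈ Finset.range (4*t), E kn := by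
    rw [Finset.sum_congr rfl (fun k _ => by rw [cdfx k, cdfy k])]
    exact Fin.sum_univ_eq_sum_range E (4*t)
  rw [hsum]
  have hsplit : ∑ kn ∈ Finset.range (4*t), E kn
      = (∑ kn ∈ Finset.Ico 0 i, E kn) + (∑ kn ∈ Finset.Ico i (2*t), E kn)
        + (∑ kn ∈ Finset.Ico (2*t) (4*t-1-i), E kn)
        + (∑ kn ∈ Finset.Ico (4*t-1-i) (4*t), E kn) := by
    rw [Finset.range_eq_Ico,
      ← Finset.sum_Ico_consecutive E (by omega : (0:ℕ) ≤ 4*t-1-i) (by omega : 4*t-1-i ≤ 4*t),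
      ← Finset.sum_Ico_consecutive E (by omega : (0:ℕ) ≤ 2*t) (by omega : 2*t ≤ 4*t-1-i),
      ← Finset.sum_Ico_consecutive E (by omega : (0:ℕ) ≤ i) (by omega : i ≤ 2*t)]
  rw [hsplit]
  have hA : ∑ kn ∈ Finset.Ico 0 i, E kn = ∑ kn ∈ Finset.Ico 0 i, (v + v*(kn:ℝ)) := by
    apply Finset.sum_congr rfl
    intro kn hkn
    rw [Finset.mem_Ico] at hkn
    rw [hE]
    simp only
    rw [if_neg (by omega), if_neg (by omega), show min (kn+1) (2*t) = kn+1 by omega]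
    rw [abs_of_nonpos (by
      have : (0:ℝ) ≤ ((kn+1:ℕ):ℝ) * v := mul_nonneg (Nat.cast_nonneg _) hv0
      linarith)]
    push_cast
    ring
  have hC' : ∑ kn ∈ Finset.Ico (2*t) (4*t-1-i), E kn
      = ∑ kn ∈ Finset.Ico (2*t) (4*t-1-i), ((1:ℝ)/2 + 0*(kn:ℝ)) := by
    apply Finset.sum_congr rfl
    intro kn hkn
    rw [Finset.mem_Ico] at hkn
    rw [hE]
    simp only
    rw [if_pos (by omega), if_neg (by omega), show min (kn+1) (2*t) = 2*t by omega]
    have h2tv : ((2*t:ℕ):ℝ) * v = 1 := by push_cast; linarith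
    rw [h2tv]
    rw [abs_of_nonpos (by norm_num)]
    ring
  have hD : ∑ kn ∈ Finset.Ico (4*t-1-i) (4*t), E kn
      = ∑ kn ∈ Finset.Ico (4*t-1-i) (4*t), ((0:ℝ) + 0*(kn:ℝ)) := by
    apply Finset.sum_congr rfl
    intro kn hkn
    rw [Finset.mem_Ico] at hkn
    rw [hE]
    simp only
    rw [if_pos (by omega), if_pos (by omega), show min (kn+1) (2*t) = 2*t by omega]
    have h2tv : ((2*t:ℕ):ℝ) * v = 1 := by push_cast; linarith
    rw [h2tv]
    norm_num
  rw [hA, hC', hD, sumIcoLin 0 i (by omega) v v,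
    sumIcoLin (2*t) (4*t-1-i) (by omega) ((1:ℝ)/2) 0,
    sumIcoLin (4*t-1-i) (4*t) (by omega) 0 0]
  by_cases hit : i < t
  · have hB : ∑ kn ∈ Finset.Ico i (2*t), E kn
        = (∑ kn ∈ Finset.Ico i t, ((1:ℝ)/2 - v + (-v)*(kn:ℝ)))
          + ∑ kn ∈ Finset.Ico t (2*t), (v - (1:ℝ)/2 + v*(kn:ℝ)) := by
      rw [← Finset.sum_Ico_consecutive E (by omega : i ≤ t) (by omega : t ≤ 2*t)]
      congr 1
      · apply Finset.sum_congr rfl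
        intro kn hkn
        rw [Finset.mem_Ico] at hkn
        rw [hE]
        simp only
        rw [if_pos (by omega), if_neg (by omega), show min (kn+1) (2*t) = kn+1 by omega]
        have hk1 : ((kn:ℝ)+1) ≤ (t:ℝ) := by exact_mod_cast hkn.2
        have : ((kn:ℝ)+1) * v ≤ (t:ℝ) * v := mul_le_mul_of_nonneg_right hk1 hv0
        rw [abs_of_nonneg (by push_cast; linarith)]
        push_cast
        ring
      · apply Finset.sum_congr rfl
        intro kn hkn
        rw [Finset.mem_Ico] at hkn
        rw [hE]
        simp only
        rw [if_pos (by omega), if_neg (by omega), show min (kn+1) (2*t) = kn+1 by omega]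
        have hk1 : (t:ℝ) ≤ ((kn:ℝ)+1) := by exact_mod_cast Nat.le_succ_of_le hkn.1
        have : (t:ℝ) * v ≤ ((kn:ℝ)+1) * v := mul_le_mul_of_nonneg_right hk1 hv0
        rw [abs_of_nonpos (by push_cast; linarith)]
        push_cast
        ring
    rw [hB, sumIcoLin i t (by omega) _ _, sumIcoLin t (2*t) (by omega) _ _]
    unfold wcol
    rw [if_pos hit, hv, hm, hb]
    push_cast
    field_simp
    ring
  · have hB : ∑ kn ∈ Finset.Ico i (2*t), E kn
        = ∑ kn ∈ Finset.Ico i (2*t), (v - (1:ℝ)/2 + v*(kn:ℝ)) := by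
      apply Finset.sum_congr rfl
      intro kn hkn
      rw [Finset.mem_Ico] at hkn
      rw [hE]
      simp only
      rw [if_pos (by omega), if_neg (by omega), show min (kn+1) (2*t) = kn+1 by omega]
      have hk1 : (t:ℝ) ≤ ((kn:ℝ)+1) := by
        have : t ≤ kn + 1 := by omega
        exact_mod_cast this
      have : (t:ℝ) * v ≤ ((kn:ℝ)+1) * v := mul_le_mul_of_nonneg_right hk1 hv0
      rw [abs_of_nonpos (by push_cast; linarith)]
      push_cast
      ring
    rw [hB, sumIcoLin i (2*t) (by omega) _ _]
    unfold wcol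
    rw [if_neg hit, hv, hm, hb]
    push_cast
    field_simp
    ring

lemma col_emd_base (t : ℕ) (ht : 0 < t) (I C : Fin (4*t)) (hI : (I:ℕ) < 2*t)
    (hC : (C:ℕ) < 2*t) :
    emd (anMat (4*t) I) (stMat (4*t) C) = wcol t (I:ℕ) := by
  apply emd_eq_of _ _ _ (planAN t (I:ℕ)) (planAN_isPlan t ht I C hI hC)
    (planAN_cost t ht (I:ℕ) hI)
  intro g hg
  calc wcol t (I:ℕ)
      = ∑ k : Fin (4*t), |cdf (anMat (4*t) I) k - cdf (stMat (4*t) C) k| :=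
        (lbd_eq t ht I C hI hC).symm
    _ ≤ planCost g := lb_le_planCost _ _ g hg

lemma an_rev (m : ℕ) (I : Fin m) : anMat m (Fin.rev I) = anMat m I := by
  funext a
  unfold anMat
  have hI := I.isLt; have ha := a.isLt
  have h1 : (a = Fin.rev I) ↔ ((I:ℕ) + (a:ℕ) = m - 1) := by
    rw [Fin.ext_iff, Fin.val_rev]; omega
  have h2 : ((Fin.rev I:ℕ) + (a:ℕ) = m - 1) ↔ (a = I) := by
    rw [Fin.ext_iff, Fin.val_rev]; omega
  simp only [h1, h2]
  ring

lemma an_palin (m : ℕ) (I : Fin m) (j : Fin m) : anMat m I (Fin.rev j) = anMat m I j := by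
  unfold anMat
  have hI := I.isLt; have hj := j.isLt
  have h1 : (Fin.rev j = I) ↔ ((I:ℕ) + (j:ℕ) = m - 1) := by
    rw [Fin.ext_iff, Fin.val_rev]; omega
  have h2 : ((I:ℕ) + (Fin.rev j:ℕ) = m - 1) ↔ (j = I) := by
    rw [Fin.val_rev, Fin.ext_iff]; omega
  simp only [h1, h2]
  ring

lemma st_rev (t : ℕ) (C : Fin (4*t)) (hC : 2*t ≤ (C:ℕ)) (j : Fin (4*t)) :
    stMat (4*t) C (Fin.rev j) = stMat (4*t) (Fin.rev C) j := by
  unfold stMat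
  have hC' := C.isLt; have hj := j.isLt
  have hm2 : (4*t)/2 = 2*t := by omega
  rw [hm2, Fin.val_rev, Fin.val_rev]
  split_ifs <;> first | rfl | omega

lemma col_emd1 (t : ℕ) (ht : 0 < t) (I C : Fin (4*t)) (hC : (C:ℕ) < 2*t) :
    emd (anMat (4*t) I) (stMat (4*t) C) = wcol t (min (I:ℕ) (4*t-1-(I:ℕ))) := by
  by_cases hI : (I:ℕ) < 2*t
  · rw [col_emd_base t ht I C hI hC, show min (I:ℕ) (4*t-1-(I:ℕ)) = (I:ℕ) by omega]
  · have hIlt := I.isLt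
    have hI' : ((Fin.rev I : Fin (4*t)):ℕ) < 2*t := by rw [Fin.val_rev]; omega
    rw [← an_rev (4*t) I, col_emd_base t ht (Fin.rev I) C hI' hC,
      show min (I:ℕ) (4*t-1-(I:ℕ)) = ((Fin.rev I : Fin (4*t)):ℕ) by rw [Fin.val_rev]; omega]

lemma col_emd (t : ℕ) (ht : 0 < t) (I C : Fin (4*t)) :
    emd (anMat (4*t) I) (stMat (4*t) C) = wcol t (min (I:ℕ) (4*t-1-(I:ℕ))) := by
  by_cases hC : (C:ℕ) < 2*t
  · exact col_emd1 t ht I C hC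
  · have hClt := C.isLt
    have hC' : ((Fin.rev C : Fin (4*t)):ℕ) < 2*t := by rw [Fin.val_rev]; omega
    rw [← emd_rev (anMat (4*t) I) (stMat (4*t) C)]
    have e1 : (fun j => anMat (4*t) I (Fin.rev j)) = anMat (4*t) I :=
      funext (an_palin (4*t) I)
    have e2 : (fun j => stMat (4*t) C (Fin.rev j)) = stMat (4*t) (Fin.rev C) :=
      funext (st_rev t C (le_of_not_gt hC))
    rw [e1, e2]
    exact col_emd1 t ht I (Fin.rev C) hC'

lemma sumRangeQuad (n : ℕ) (p q r : ℝ) :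
    ∑ k ∈ Finset.range n, (p + q*(k:ℝ) + r*(k:ℝ)^2)
      = (n:ℝ)*p + q*((n:ℝ)*((n:ℝ)-1))/2 + r*((n:ℝ)*((n:ℝ)-1)*(2*(n:ℝ)-1))/6 := by
  rw [Finset.sum_add_distrib, Finset.sum_add_distrib, ← Finset.mul_sum, ← Finset.mul_sum,
    gauss, gauss2, Finset.sum_const, Finset.card_range, nsmul_eq_mul]
  ring

lemma total_sum (t : ℕ) (ht : 0 < t) :
    ∑ i : Fin (4*t), wcol t (min (i:ℕ) (4*t-1-(i:ℕ)))
      = (13/48)*((4*t:ℕ):ℝ)^2 - 1/3 := by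
  have ht' : (0:ℝ) < (t:ℝ) := by exact_mod_cast ht
  rw [Fin.sum_univ_eq_sum_range (fun n => wcol t (min n (4*t-1-n))) (4*t)]
  rw [Finset.range_eq_Ico,
    ← Finset.sum_Ico_consecutive _ (by omega : 0 ≤ 2*t) (by omega : 2*t ≤ 4*t)]
  have hhalf : ∑ n ∈ Finset.range (2*t), wcol t n
      = (7*(t:ℝ)^2 - 1)/6 + (t:ℝ)*(t:ℝ) := by
    rw [Finset.range_eq_Ico,
      ← Finset.sum_Ico_consecutive _ (by omega : 0 ≤ t) (by omega : t ≤ 2*t),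
      ← Finset.range_eq_Ico]
    have e1 : ∑ n ∈ Finset.range t, wcol t n
        = ∑ n ∈ Finset.range t, ((3*(t:ℝ)^2 - t)/(2*t) + ((1 - 2*(t:ℝ))/(2*t))*(n:ℝ)
            + (1/(2*t))*(n:ℝ)^2) := by
      apply Finset.sum_congr rfl
      intro n hn
      rw [Finset.mem_range] at hn
      unfold wcol
      rw [if_pos hn]
      field_simp
      ring
    have e2 : ∑ n ∈ Finset.Ico t (2*t), wcol t n = ∑ n ∈ Finset.Ico t (2*t), (t:ℝ) := by
      apply Finset.sum_congr rfl
      intro n hn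
      rw [Finset.mem_Ico] at hn
      unfold wcol
      rw [if_neg (by omega)]
    rw [e1, e2, sumRangeQuad, Finset.sum_const, Nat.card_Ico, nsmul_eq_mul,
      show (2*t - t : ℕ) = t by omega]
    field_simp
    ring
  have hL : ∑ n ∈ Finset.Ico 0 (2*t), wcol t (min n (4*t-1-n))
      = ∑ n ∈ Finset.range (2*t), wcol t n := by
    rw [← Finset.range_eq_Ico]
    apply Finset.sum_congr rfl
    intro n hn
    rw [Finset.mem_range] at hn
    rw [show min n (4*t-1-n) = n by omega]
  have hR : ∑ n ∈ Finset.Ico (2*t) (4*t), wcol t (min n (4*t-1-n))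
      = ∑ n ∈ Finset.range (2*t), wcol t n := by
    rw [Finset.sum_Ico_eq_sum_range, show (4*t - 2*t : ℕ) = 2*t by omega]
    have e : ∀ n ∈ Finset.range (2*t), wcol t (min (2*t + n) (4*t-1-(2*t+n)))
        = (fun k => wcol t k) (2*t - 1 - n) := by
      intro n hn
      rw [Finset.mem_range] at hn
      simp only
      rw [show min (2*t + n) (4*t-1-(2*t+n)) = 2*t - 1 - n by omega]
    rw [Finset.sum_congr rfl e, Finset.sum_range_reflect (fun k => wcol t k) (2*t)]
  rw [hL, hR, hhalf]
  push_cast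
  field_simp
  ring

/-- For m divisible by 4, the EMD-positionwise distance between the antagonism
and stratification matrices equals (13/48)m² − 1/3. -/
theorem stmt10 (m : ℕ) (hm : 0 < m) (h4 : 4 ∣ m) :
    dpos (anMat m) (stMat m) = (13 / 48) * (m : ℝ) ^ 2 - 1 / 3 := by
  obtain ⟨t, rfl⟩ := h4
  have ht : 0 < t := by omega
  unfold dpos
  have hconst : ∀ δ : Equiv.Perm (Fin (4*t)),
      ∑ i : Fin (4*t), emd (anMat (4*t) i) (stMat (4*t) (δ i))
        = (13/48)*((4*t:ℕ):ℝ)^2 - 1/3 := by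
    intro δ
    rw [Finset.sum_congr rfl (fun i _ => col_emd t ht i (δ i))]
    exact total_sum t ht
  rw [iInf_congr hconst, ciInf_const]

end
end

section
/- For m divisible by 4, the ℓ1-positionwise distance between ID_m and UN_m is 2(m−1); the ℓ1-positionwise distances between UN_m and AN_m, between AN_m and ST_m, and between ID_m and ST_m each equal 2(m−2); and the ℓ1-positionwise distances between UN_m and ST_m and between ID_m and AN_m each equal m. -/
open Finset

noncomputable section
open scoped Classical

/-- ℓ1-positionwise distance between m×m matrices given by their columns:
minimum over column bijections of the sum of ℓ1 distances of matched columns. -/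
def dposL1 {m : ℕ} (X Y : Fin m → Fin m → ℝ) : ℝ :=
  ⨅ δ : Equiv.Perm (Fin m), ∑ i, ∑ j, |X i j - Y (δ i) j|

namespace Aux11

variable {m : ℕ}

lemma an_eq (k j : Fin m) :
    anMat m k j = (if j = k then (1:ℝ)/2 else 0) + (if j = Fin.rev k then (1:ℝ)/2 else 0) := by
  have hj := j.isLt
  have hk := k.isLt
  have h1 : ((k:ℕ) + (j:ℕ) = m - 1) ↔ j = Fin.rev k := by
    rw [Fin.ext_iff, Fin.val_rev]; omega
  unfold anMat
  simp only [h1]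
  split_ifs <;> ring

lemma rev_ne (h4 : 4 ∣ m) (k : Fin m) : k ≠ Fin.rev k := by
  have hk := k.isLt
  rw [Ne, Fin.ext_iff, Fin.val_rev]
  omega

lemma st_eq (k j : Fin m) :
    stMat m k j = if ((j:ℕ) < m / 2 ↔ (k:ℕ) < m / 2) then 2/(m:ℝ) else 0 := by
  unfold stMat
  exact if_congr (by omega) rfl rfl

lemma st_nonneg (k j : Fin m) : 0 ≤ stMat m k j := by
  rw [st_eq]; split_ifs
  · positivity
  · exact le_rfl

lemma sum_an (k : Fin m) : ∑ j, anMat m k j = 1 := by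
  simp only [an_eq]
  rw [Finset.sum_add_distrib, Finset.sum_ite_eq' Finset.univ k,
    Finset.sum_ite_eq' Finset.univ (Fin.rev k)]
  simp
  norm_num

lemma sum_indicator {n : ℕ} (c : ℝ) (P : ℕ → Prop) [DecidablePred P]
    (hcard : ((Finset.range m).filter P).card = n) :
    ∑ j : Fin m, (if P (j:ℕ) then c else 0) = n * c := by
  rw [Fin.sum_univ_eq_sum_range (fun k => if P k then c else 0) m,
    ← Finset.sum_filter, Finset.sum_const, hcard, nsmul_eq_mul]

lemma sum_st (hm : 0 < m) (h4 : 4 ∣ m) (k : Fin m) : ∑ j, stMat m k j = 1 := by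
  have hM0 : (0:ℝ) < m := by exact_mod_cast hm
  have hcast : ((m/2 : ℕ) : ℝ) * 2 = (m:ℝ) := by
    have : m / 2 * 2 = m := by omega
    exact_mod_cast congrArg (Nat.cast : ℕ → ℝ) this
  have hMne : (m:ℝ) ≠ 0 := ne_of_gt hM0
  simp only [st_eq]
  by_cases hk : (k:ℕ) < m / 2
  · have he : ∀ j : Fin m, (if ((j:ℕ) < m/2 ↔ (k:ℕ) < m/2) then 2/(m:ℝ) else 0)
        = if ((j:ℕ) < m/2) then 2/(m:ℝ) else 0 := fun j => if_congr (by tauto) rfl rfl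
    simp only [he]
    have hfil : (Finset.range m).filter (fun n => n < m/2) = Finset.range (m/2) := by
      ext n; simp only [Finset.mem_filter, Finset.mem_range]; omega
    rw [Fin.sum_univ_eq_sum_range (fun n => if n < m/2 then (2:ℝ)/m else 0) m,
      ← Finset.sum_filter, hfil, Finset.sum_const, Finset.card_range, nsmul_eq_mul]
    field_simp
    linarith
  · have he : ∀ j : Fin m, (if ((j:ℕ) < m/2 ↔ (k:ℕ) < m/2) then 2/(m:ℝ) else 0)
        = if ¬((j:ℕ) < m/2) then 2/(m:ℝ) else 0 := fun j => if_congr (by tauto) rfl rfl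
    simp only [he]
    have hfil : (Finset.range m).filter (fun n => ¬ n < m/2) = Finset.Ico (m/2) m := by
      ext n; simp only [Finset.mem_filter, Finset.mem_range, Finset.mem_Ico]; omega
    have hcard : (Finset.Ico (m/2) m).card = m / 2 := by rw [Nat.card_Ico]; omega
    rw [Fin.sum_univ_eq_sum_range (fun n => if ¬ n < m/2 then (2:ℝ)/m else 0) m,
      ← Finset.sum_filter, hfil, Finset.sum_const, hcard, nsmul_eq_mul]
    field_simp
    linarith

lemma st_diag (k : Fin m) : stMat m k k = 2/(m:ℝ) := by
  rw [st_eq, if_pos Iff.rfl]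

lemma st_le (k j : Fin m) : stMat m k j ≤ 2/(m:ℝ) := by
  rw [st_eq]; split_ifs
  · exact le_rfl
  · positivity

lemma an_nonneg (k j : Fin m) : 0 ≤ anMat m k j := by
  rw [an_eq]; split_ifs <;> norm_num

lemma an_le_half (h4 : 4 ∣ m) (k j : Fin m) : anMat m k j ≤ 1/2 := by
  have hne := rev_ne h4 k
  rw [an_eq]
  split_ifs with h1 h2
  · exact absurd (h1.symm.trans h2) hne
  all_goals norm_num

lemma an_diag (h4 : 4 ∣ m) (k : Fin m) : anMat m k k = 1/2 := by
  have := rev_ne h4 k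
  rw [an_eq, if_pos rfl, if_neg this]
  norm_num

lemma st_add_rev (hm : 0 < m) (h4 : 4 ∣ m) (k i : Fin m) :
    stMat m k i + stMat m k (Fin.rev i) = 2/(m:ℝ) := by
  have hi := i.isLt
  rw [st_eq, st_eq, Fin.val_rev]
  have hkey : (i:ℕ) < m/2 ↔ ¬ (m - ((i:ℕ)+1) < m/2) := by omega
  split_ifs with h1 h2 h2
  · exfalso; tauto
  · ring
  · ring
  · exfalso; tauto

/-- generic: ℓ1 distance of an indicator column e_i to a column Y with values in [0,1]. -/
lemma colA (i : Fin m) (Y : Fin m → ℝ) (h0 : ∀ j, 0 ≤ Y j) (h1 : Y i ≤ 1) :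
    ∑ j, |(if j = i then (1:ℝ) else 0) - Y j| = (∑ j, Y j) + 1 - 2 * Y i := by
  have key : ∀ j : Fin m, |(if j = i then (1:ℝ) else 0) - Y j|
      = Y j + (if j = i then 1 - 2 * Y i else 0) := by
    intro j
    by_cases hj : j = i
    · subst hj; rw [if_pos rfl, if_pos rfl, abs_of_nonneg (by linarith)]; ring
    · rw [if_neg hj, if_neg hj, abs_of_nonpos (by linarith [h0 j])]; ring
  simp only [key]
  rw [Finset.sum_add_distrib, Finset.sum_ite_eq' Finset.univ i (fun _ => 1 - 2 * Y i)]
  simp only [Finset.mem_univ, if_true]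
  ring

section cols

variable (hm : 0 < m) (h4 : 4 ∣ m)
include hm h4

lemma basic : (4:ℝ) ≤ m ∧ (0:ℝ) < m ∧ (1:ℝ)/m ≤ 1/4 ∧ (2:ℝ)/m ≤ 1/2 ∧ (4:ℝ)/m ≤ 1 := by
  have hM : (4:ℝ) ≤ m := by exact_mod_cast Nat.le_of_dvd hm h4
  have hM0 : (0:ℝ) < m := by linarith
  refine ⟨hM, hM0, one_div_le_one_div_of_le (by norm_num) hM, ?_, ?_⟩
  · rw [div_le_div_iff₀ hM0 (by norm_num)]; linarith
  · rw [div_le_one hM0]; linarith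

lemma col_ID_UN (i k : Fin m) :
    ∑ j, |idMat m i j - unMat m k j| = 2 - 2/(m:ℝ) := by
  obtain ⟨hM, hM0, h1m, h2m, h4m⟩ := basic hm h4
  have hMne : (m:ℝ) ≠ 0 := ne_of_gt hM0
  unfold idMat unMat
  rw [colA i _ (fun j => by positivity) (by linarith)]
  rw [Finset.sum_const, Finset.card_univ, Fintype.card_fin, nsmul_eq_mul]
  rw [mul_one_div, div_self hMne]
  ring

lemma col_ID_AN (i k : Fin m) :
    ∑ j, |idMat m i j - anMat m k j| = 2 - 2 * anMat m k i := by
  obtain ⟨hM, hM0, h1m, h2m, h4m⟩ := basic hm h4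
  unfold idMat
  rw [colA i _ (fun j => an_nonneg k j) (by linarith [an_le_half h4 k i]), sum_an]
  ring

lemma col_ID_ST (i k : Fin m) :
    ∑ j, |idMat m i j - stMat m k j| = 2 - 2 * stMat m k i := by
  obtain ⟨hM, hM0, h1m, h2m, h4m⟩ := basic hm h4
  unfold idMat
  rw [colA i _ (fun j => st_nonneg k j) (by linarith [st_le k i]), sum_st hm h4]
  ring

lemma col_UN_AN (i k : Fin m) :
    ∑ j, |unMat m i j - anMat m k j| = 2 - 4/(m:ℝ) := by
  obtain ⟨hM, hM0, h1m, h2m, h4m⟩ := basic hm h4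
  have hne := rev_ne h4 k
  have key : ∀ j : Fin m, |unMat m i j - anMat m k j| =
      1/(m:ℝ) + ((if j = k then 1/2 - 2/(m:ℝ) else 0)
        + (if j = Fin.rev k then 1/2 - 2/(m:ℝ) else 0)) := by
    intro j
    rw [an_eq]
    unfold unMat
    by_cases hj : j = k <;> by_cases hj' : j = Fin.rev k
    · exact absurd (hj ▸ hj') hne
    · rw [if_pos hj, if_neg hj', if_pos hj, if_neg hj',
        abs_of_nonpos (by linarith)]; ring
    · rw [if_neg hj, if_pos hj', if_neg hj, if_pos hj',
        abs_of_nonpos (by linarith)]; ring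
    · rw [if_neg hj, if_neg hj', if_neg hj, if_neg hj']
      have he : (1:ℝ)/m - (0 + 0) = 1/m := by ring
      rw [he, abs_of_nonneg (by positivity)]; ring
  simp only [key]
  rw [Finset.sum_add_distrib, Finset.sum_add_distrib,
    Finset.sum_ite_eq' Finset.univ k, Finset.sum_ite_eq' Finset.univ (Fin.rev k),
    Finset.sum_const, Finset.card_univ, Fintype.card_fin, nsmul_eq_mul]
  simp only [Finset.mem_univ, if_true]
  have hMne : (m:ℝ) ≠ 0 := ne_of_gt hM0
  field_simp
  ring

lemma col_UN_ST (i k : Fin m) :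
    ∑ j, |unMat m i j - stMat m k j| = 1 := by
  obtain ⟨hM, hM0, h1m, h2m, h4m⟩ := basic hm h4
  have key : ∀ j : Fin m, |unMat m i j - stMat m k j| = 1/(m:ℝ) := by
    intro j
    rw [st_eq]
    unfold unMat
    split_ifs
    · have he : (1:ℝ)/m - 2/m = -(1/m) := by ring
      rw [he, abs_neg, abs_of_nonneg (by positivity)]
    · rw [sub_zero, abs_of_nonneg (by positivity)]
  simp only [key]
  rw [Finset.sum_const, Finset.card_univ, Fintype.card_fin, nsmul_eq_mul]
  have hMne : (m:ℝ) ≠ 0 := ne_of_gt hM0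
  rw [mul_one_div, div_self hMne]

lemma col_AN_ST (i k : Fin m) :
    ∑ j, |anMat m i j - stMat m k j| = 2 - 4/(m:ℝ) := by
  obtain ⟨hM, hM0, h1m, h2m, h4m⟩ := basic hm h4
  have hne := rev_ne h4 i
  have key : ∀ j : Fin m, |anMat m i j - stMat m k j| =
      stMat m k j + ((if j = i then 1/2 - 2 * stMat m k i else 0)
        + (if j = Fin.rev i then 1/2 - 2 * stMat m k (Fin.rev i) else 0)) := by
    intro j
    rw [an_eq]
    by_cases hj : j = i <;> by_cases hj' : j = Fin.rev i
    · exact absurd (hj ▸ hj') hne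
    · subst hj
      rw [if_pos rfl, if_neg hj', if_pos rfl, if_neg hj',
        abs_of_nonneg (by linarith [st_le k j, st_nonneg k j])]
      ring
    · subst hj'
      rw [if_neg hj, if_pos rfl, if_neg hj, if_pos rfl,
        abs_of_nonneg (by linarith [st_le k (Fin.rev i), st_nonneg k (Fin.rev i)])]
      ring
    · rw [if_neg hj, if_neg hj', if_neg hj, if_neg hj']
      rw [show ((0:ℝ) + 0 - stMat m k j) = -(stMat m k j) by ring, abs_neg,
        abs_of_nonneg (st_nonneg k j)]
      ring
  simp only [key]
  rw [Finset.sum_add_distrib, Finset.sum_add_distrib,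
    Finset.sum_ite_eq' Finset.univ i, Finset.sum_ite_eq' Finset.univ (Fin.rev i),
    sum_st hm h4]
  simp only [Finset.mem_univ, if_true]
  have hsum := st_add_rev hm h4 k i
  have h24 : (4:ℝ)/m = 2 * (2/(m:ℝ)) := by ring
  linarith

end cols

lemma dposL1_eq_const {X Y : Fin m → Fin m → ℝ} {c : ℝ}
    (h : ∀ δ : Equiv.Perm (Fin m), ∑ i, ∑ j, |X i j - Y (δ i) j| = c) :
    dposL1 X Y = c := by
  unfold dposL1
  simp only [h]
  exact ciInf_const

lemma dposL1_eq_min {X Y : Fin m → Fin m → ℝ} {c : ℝ}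
    (h1 : ∑ i, ∑ j, |X i j - Y i j| = c)
    (h2 : ∀ δ : Equiv.Perm (Fin m), c ≤ ∑ i, ∑ j, |X i j - Y (δ i) j|) :
    dposL1 X Y = c := by
  unfold dposL1
  apply le_antisymm
  · have := ciInf_le (f := fun δ : Equiv.Perm (Fin m) => ∑ i, ∑ j, |X i j - Y (δ i) j|)
      (Set.finite_range _).bddBelow (Equiv.refl (Fin m))
    simpa [h1] using this
  · exact le_ciInf h2

end Aux11

/-- For m divisible by 4: ℓ1-positionwise distances between the compass matrices. -/
theorem stmt11 (m : ℕ) (hm : 0 < m) (h4 : 4 ∣ m) :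
    dposL1 (idMat m) (unMat m) = 2 * ((m : ℝ) - 1) ∧
    dposL1 (unMat m) (anMat m) = 2 * ((m : ℝ) - 2) ∧
    dposL1 (anMat m) (stMat m) = 2 * ((m : ℝ) - 2) ∧
    dposL1 (idMat m) (stMat m) = 2 * ((m : ℝ) - 2) ∧
    dposL1 (unMat m) (stMat m) = (m : ℝ) ∧
    dposL1 (idMat m) (anMat m) = (m : ℝ) := by
  obtain ⟨hM, hM0, h1m, h2m, h4m⟩ := Aux11.basic hm h4
  have hMne : (m:ℝ) ≠ 0 := ne_of_gt hM0
  refine ⟨?_, ?_, ?_, ?_, ?_, ?_⟩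
  · apply Aux11.dposL1_eq_const
    intro δ
    rw [Finset.sum_congr rfl (fun i _ => Aux11.col_ID_UN hm h4 i (δ i)),
      Finset.sum_const, Finset.card_univ, Fintype.card_fin, nsmul_eq_mul]
    field_simp
  · apply Aux11.dposL1_eq_const
    intro δ
    rw [Finset.sum_congr rfl (fun i _ => Aux11.col_UN_AN hm h4 i (δ i)),
      Finset.sum_const, Finset.card_univ, Fintype.card_fin, nsmul_eq_mul]
    field_simp
    ring
  · apply Aux11.dposL1_eq_const
    intro δ
    rw [Finset.sum_congr rfl (fun i _ => Aux11.col_AN_ST hm h4 i (δ i)),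
      Finset.sum_const, Finset.card_univ, Fintype.card_fin, nsmul_eq_mul]
    field_simp
    ring
  · apply Aux11.dposL1_eq_min
    · rw [Finset.sum_congr rfl (fun i _ => Aux11.col_ID_ST hm h4 i i)]
      rw [Finset.sum_congr rfl (fun i _ => by rw [Aux11.st_diag i])]
      rw [Finset.sum_const, Finset.card_univ, Fintype.card_fin, nsmul_eq_mul]
      field_simp
    · intro δ
      rw [Finset.sum_congr rfl (fun i _ => Aux11.col_ID_ST hm h4 i (δ i))]
      have : ∀ i : Fin m, 2 - 4/(m:ℝ) ≤ 2 - 2 * stMat m (δ i) i := by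
        intro i
        have := Aux11.st_le (δ i) i
        have h24 : (4:ℝ)/m = 2 * (2/(m:ℝ)) := by ring
        linarith
      calc 2 * ((m:ℝ) - 2) = ∑ _i : Fin m, (2 - 4/(m:ℝ)) := by
            rw [Finset.sum_const, Finset.card_univ, Fintype.card_fin, nsmul_eq_mul]
            field_simp
            ring
        _ ≤ _ := Finset.sum_le_sum (fun i _ => this i)
  · apply Aux11.dposL1_eq_const
    intro δ
    rw [Finset.sum_congr rfl (fun i _ => Aux11.col_UN_ST hm h4 i (δ i)),
      Finset.sum_const, Finset.card_univ, Fintype.card_fin, nsmul_eq_mul]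
    simp
  · apply Aux11.dposL1_eq_min
    · rw [Finset.sum_congr rfl (fun i _ => Aux11.col_ID_AN hm h4 i i)]
      rw [Finset.sum_congr rfl (fun i _ => by rw [Aux11.an_diag h4 i])]
      rw [Finset.sum_const, Finset.card_univ, Fintype.card_fin, nsmul_eq_mul]
      norm_num
    · intro δ
      rw [Finset.sum_congr rfl (fun i _ => Aux11.col_ID_AN hm h4 i (δ i))]
      have : ∀ i : Fin m, (1:ℝ) ≤ 2 - 2 * anMat m (δ i) i := by
        intro i
        have := Aux11.an_le_half h4 (δ i) i
        linarith
      calc (m:ℝ) = ∑ _i : Fin m, (1:ℝ) := by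
            rw [Finset.sum_const, Finset.card_univ, Fintype.card_fin, nsmul_eq_mul]
            ring
        _ ≤ _ := Finset.sum_le_sum (fun i _ => this i)

end
end

section
/- Fix n voters and m candidates with m! dividing n. The swap isomorphism distance between the identity election ID_{m,n} (all n voters share one fixed order) and the uniformity election UN_{m,n} (each of the m! orders appears n/m! times) equals (1/4)·n·(m²−m), and this also equals the swap distance between ID_{m,n} and the antagonism election AN_{m,n} (half the voters have a fixed order v and half its reverse). -/
open Finset

noncomputable section
open scoped Classical

/-- Votes are bijections from candidates to positions. The swap (Kendall tau)
distance counts the pairs of candidates ranked in opposite relative orders. -/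
def dswap {m : ℕ} (u v : Equiv.Perm (Fin m)) : ℕ :=
  (Finset.univ.filter (fun p : Fin m × Fin m => u p.1 < u p.2 ∧ v p.2 < v p.1)).card

/-- Swap isomorphism distance between elections: minimum over candidate
bijections σ and voter matchings ν of the total swap distance. Applying σ to a
vote v (candidate ↦ position) yields the vote c' ↦ v(σ⁻¹ c'). -/
def dswapE {m n : ℕ} (V₁ V₂ : Fin n → Equiv.Perm (Fin m)) : ℝ :=
  ⨅ σ : Equiv.Perm (Fin m), ⨅ ν : Equiv.Perm (Fin n),
    ∑ i, (dswap (σ.symm.trans (V₁ i)) (V₂ (ν i)) : ℝ)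

lemma pairs_card {m : ℕ} (w : Equiv.Perm (Fin m)) :
    2 * (Finset.univ.filter (fun p : Fin m × Fin m => w p.1 < w p.2)).card = m * m - m := by
  set A := Finset.univ.filter (fun p : Fin m × Fin m => w p.1 < w p.2) with hA
  set B := Finset.univ.filter (fun p : Fin m × Fin m => w p.2 < w p.1) with hB
  have hcard : A.card = B.card := by
    apply Finset.card_bij (fun p _ => Prod.swap p)
    · intro p hp
      simp only [hA, hB, Finset.mem_filter, Finset.mem_univ, true_and] at hp ⊢
      exact hp
    · intro p _ q _ h
      exact Prod.swap_injective h
    · intro p hp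
      refine ⟨Prod.swap p, ?_, by simp⟩
      simp only [hA, hB, Finset.mem_filter, Finset.mem_univ, true_and] at hp ⊢
      exact hp
  have hdisj : Disjoint A B := by
    rw [Finset.disjoint_left]
    intro p hp hq
    simp only [hA, hB, Finset.mem_filter, Finset.mem_univ, true_and] at hp hq
    exact absurd hq (not_lt.2 hp.le)
  have hunion : A ∪ B = (Finset.univ : Finset (Fin m)).offDiag := by
    ext p
    simp only [hA, hB, Finset.mem_union, Finset.mem_filter, Finset.mem_univ, true_and,
      Finset.mem_offDiag]
    constructor
    · rintro (h | h)
      · exact fun e => absurd (congrArg w e) (ne_of_lt h)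
      · exact fun e => absurd (congrArg w e) (ne_of_gt h)
    · intro h
      rcases lt_or_gt_of_ne (fun e : w p.1 = w p.2 => h (w.injective e)) with h' | h'
      · exact Or.inl h'
      · exact Or.inr h'
  have := Finset.card_union_of_disjoint hdisj
  rw [hunion, Finset.offDiag_card, Finset.card_univ, Fintype.card_fin] at this
  omega

lemma perm_half {m : ℕ} {a b : Fin m} (hab : a ≠ b) :
    2 * (Finset.univ.filter (fun r : Equiv.Perm (Fin m) => r a < r b)).card = Nat.factorial m := by
  set A := Finset.univ.filter (fun r : Equiv.Perm (Fin m) => r a < r b) with hA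
  set B := Finset.univ.filter (fun r : Equiv.Perm (Fin m) => r b < r a) with hB
  have hcard : A.card = B.card := by
    apply Finset.card_bij (fun r _ => (Equiv.swap a b).trans r)
    · intro r hr
      simp only [hA, hB, Finset.mem_filter, Finset.mem_univ, true_and] at hr ⊢
      simpa [Equiv.trans_apply, Equiv.swap_apply_left, Equiv.swap_apply_right] using hr
    · intro r _ s _ h
      have := congrArg (fun t => (Equiv.swap a b).trans t) h
      simpa [← Equiv.trans_assoc] using this
    · intro r hr
      refine ⟨(Equiv.swap a b).trans r, ?_, by simp [← Equiv.trans_assoc]⟩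
      simp only [hA, hB, Finset.mem_filter, Finset.mem_univ, true_and] at hr ⊢
      simpa [Equiv.trans_apply, Equiv.swap_apply_left, Equiv.swap_apply_right] using hr
  have hdisj : Disjoint A B := by
    rw [Finset.disjoint_left]
    intro r hr hq
    simp only [hA, hB, Finset.mem_filter, Finset.mem_univ, true_and] at hr hq
    exact absurd hq (not_lt.2 hr.le)
  have hunion : A ∪ B = Finset.univ := by
    ext r
    simp only [hA, hB, Finset.mem_union, Finset.mem_filter, Finset.mem_univ, true_and, iff_true]
    rcases lt_or_gt_of_ne (fun e : r a = r b => hab (r.injective e)) with h | h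
    · exact Or.inl h
    · exact Or.inr h
  have := Finset.card_union_of_disjoint hdisj
  rw [hunion, Finset.card_univ, Fintype.card_perm, Fintype.card_fin] at this
  omega

lemma sum_dswap_all {m : ℕ} (w : Equiv.Perm (Fin m)) :
    4 * ∑ r : Equiv.Perm (Fin m), dswap w r = (m * m - m) * Nat.factorial m := by
  set A := Finset.univ.filter (fun p : Fin m × Fin m => w p.1 < w p.2) with hA
  have hswap : ∑ r : Equiv.Perm (Fin m), dswap w r
      = ∑ p ∈ A, (Finset.univ.filter (fun r : Equiv.Perm (Fin m) => r p.2 < r p.1)).card := by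
    calc ∑ r : Equiv.Perm (Fin m), dswap w r
        = ∑ r : Equiv.Perm (Fin m), ∑ p ∈ A, (if r p.2 < r p.1 then 1 else 0) := by
          refine Finset.sum_congr rfl fun r _ => ?_
          rw [dswap, ← Finset.filter_filter, Finset.card_filter]
      _ = ∑ p ∈ A, ∑ r : Equiv.Perm (Fin m), (if r p.2 < r p.1 then 1 else 0) :=
          Finset.sum_comm
      _ = _ := Finset.sum_congr rfl fun p _ => (Finset.card_filter _ _).symm
  have h2 : 2 * ∑ r : Equiv.Perm (Fin m), dswap w r = A.card * Nat.factorial m := by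
    have hval : ∀ p ∈ A, 2 * (Finset.univ.filter
        (fun r : Equiv.Perm (Fin m) => r p.2 < r p.1)).card = Nat.factorial m := by
      intro p hp
      simp only [hA, Finset.mem_filter, Finset.mem_univ, true_and] at hp
      exact perm_half (fun e => absurd (congrArg w e) (ne_of_gt hp))
    rw [hswap, Finset.mul_sum, Finset.sum_congr rfl hval, Finset.sum_const, smul_eq_mul]
  have h3 := pairs_card w
  calc 4 * ∑ r : Equiv.Perm (Fin m), dswap w r
      = 2 * (2 * ∑ r : Equiv.Perm (Fin m), dswap w r) := by ring
    _ = 2 * (A.card * Nat.factorial m) := by rw [h2]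
    _ = (2 * A.card) * Nat.factorial m := by ring
    _ = (m * m - m) * Nat.factorial m := by rw [h3]

lemma dswap_add_rev {m : ℕ} (w u : Equiv.Perm (Fin m)) :
    dswap w u + dswap w (u.trans Fin.revPerm)
      = (Finset.univ.filter (fun p : Fin m × Fin m => w p.1 < w p.2)).card := by
  set A := Finset.univ.filter (fun p : Fin m × Fin m => w p.1 < w p.2) with hA
  have h1 : dswap w u = (A.filter (fun p => u p.2 < u p.1)).card := by
    rw [dswap, hA, Finset.filter_filter]
  have h2 : dswap w (u.trans Fin.revPerm) = (A.filter (fun p => ¬ u p.2 < u p.1)).card := by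
    rw [dswap, hA, Finset.filter_filter]
    congr 1
    apply Finset.filter_congr
    intro p hp
    constructor
    · rintro ⟨hw, hlt⟩
      refine ⟨hw, ?_⟩
      simp only [Equiv.trans_apply, Fin.revPerm_apply, Fin.rev_lt_rev] at hlt
      exact not_lt.2 hlt.le
    · rintro ⟨hw, hnlt⟩
      refine ⟨hw, ?_⟩
      simp only [Equiv.trans_apply, Fin.revPerm_apply, Fin.rev_lt_rev]
      have hpne : p.1 ≠ p.2 := fun e => absurd (congrArg w e) (ne_of_lt hw)
      have hne : u p.1 ≠ u p.2 := fun e => hpne (u.injective e)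
      exact lt_of_le_of_ne (not_lt.1 hnlt) hne
  rw [h1, h2, Finset.card_filter_add_card_filter_not]

lemma sumU {m n : ℕ} (hdvd : Nat.factorial m ∣ n) (w : Equiv.Perm (Fin m))
    (VU : Fin n → Equiv.Perm (Fin m))
    (hVU : ∀ r : Equiv.Perm (Fin m),
      (Finset.univ.filter (fun i : Fin n => VU i = r)).card = n / Nat.factorial m) :
    4 * ∑ i : Fin n, dswap w (VU i) = n * (m * m - m) := by
  have hfib : ∑ i : Fin n, dswap w (VU i)
      = ∑ r : Equiv.Perm (Fin m),
          ∑ _i ∈ Finset.univ.filter (fun i : Fin n => VU i = r), dswap w r :=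
    (Finset.sum_fiberwise' Finset.univ VU (dswap w)).symm
  rw [hfib]
  simp_rw [Finset.sum_const, smul_eq_mul, hVU]
  rw [← Finset.mul_sum]
  have h := sum_dswap_all w
  calc 4 * (n / Nat.factorial m * ∑ r : Equiv.Perm (Fin m), dswap w r)
      = (n / Nat.factorial m) * (4 * ∑ r : Equiv.Perm (Fin m), dswap w r) := by ring
    _ = (n / Nat.factorial m) * ((m * m - m) * Nat.factorial m) := by rw [h]
    _ = (n / Nat.factorial m * Nat.factorial m) * (m * m - m) := by ring
    _ = n * (m * m - m) := by rw [Nat.div_mul_cancel hdvd]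

lemma sumA {m n : ℕ} (hdvd : Nat.factorial m ∣ n) (w v1 : Equiv.Perm (Fin m))
    (VA : Fin n → Equiv.Perm (Fin m))
    (hVA1 : (Finset.univ.filter (fun i : Fin n => VA i = v1)).card = n / 2)
    (hVA2 : ∀ i, VA i = v1 ∨ VA i = v1.trans Fin.revPerm) :
    4 * ∑ i : Fin n, dswap w (VA i) = n * (m * m - m) := by
  set d1 := dswap w v1 with hd1
  set d2 := dswap w (v1.trans Fin.revPerm) with hd2
  set c2 := (Finset.univ.filter (fun i : Fin n => ¬ VA i = v1)).card with hc2
  have hsplit : ∑ i : Fin n, dswap w (VA i) = (n / 2) * d1 + c2 * d2 := by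
    rw [← Finset.sum_filter_add_sum_filter_not Finset.univ (fun i => VA i = v1)]
    congr 1
    · rw [Finset.sum_congr rfl (fun i hi => by rw [(Finset.mem_filter.1 hi).2]),
        Finset.sum_const, smul_eq_mul, hVA1]
    · have hr : ∀ i ∈ Finset.univ.filter (fun i : Fin n => ¬ VA i = v1),
          dswap w (VA i) = d2 := by
        intro i hi
        rcases hVA2 i with h | h
        · exact absurd h (Finset.mem_filter.1 hi).2
        · rw [h]
      rw [Finset.sum_congr rfl hr, Finset.sum_const, smul_eq_mul]
  have hcc : n / 2 + c2 = n := by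
    have := Finset.card_filter_add_card_filter_not
      (s := (Finset.univ : Finset (Fin n))) (p := fun i => VA i = v1)
    rw [hVA1, Finset.card_univ, Fintype.card_fin] at this
    exact this
  have hK : d1 + d2 = (Finset.univ.filter (fun p : Fin m × Fin m => w p.1 < w p.2)).card :=
    dswap_add_rev w v1
  have hK2 : 2 * (Finset.univ.filter (fun p : Fin m × Fin m => w p.1 < w p.2)).card
      = m * m - m := pairs_card w
  rw [hsplit]
  by_cases hm2 : 2 ≤ m
  · have hn2 : 2 ∣ n := dvd_trans (Nat.dvd_factorial two_pos hm2) hdvd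
    have hn : 2 * (n / 2) = n := Nat.mul_div_cancel' hn2
    have hc2' : c2 = n / 2 := by omega
    rw [hc2']
    calc 4 * (n / 2 * d1 + n / 2 * d2)
        = (2 * (n / 2)) * (2 * (d1 + d2)) := by ring
      _ = n * (m * m - m) := by rw [hn, hK, hK2]
  · have hm1 : m ≤ 1 := by omega
    have hle : m * m ≤ m := le_trans (Nat.mul_le_mul_left m hm1) (le_of_eq (mul_one m))
    have hmm : m * m - m = 0 := Nat.sub_eq_zero_of_le hle
    have hd : d1 = 0 ∧ d2 = 0 := by omega
    rw [hmm, hd.1, hd.2]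
    simp

lemma dswapE_const {m n : ℕ} (v0 : Equiv.Perm (Fin m)) (V : Fin n → Equiv.Perm (Fin m))
    (hV : ∀ w : Equiv.Perm (Fin m), 4 * ∑ i : Fin n, dswap w (V i) = n * (m * m - m)) :
    dswapE (fun _ => v0) V = 1 / 4 * (n : ℝ) * ((m : ℝ) ^ 2 - m) := by
  have hcast : ∀ (σ : Equiv.Perm (Fin m)) (ν : Equiv.Perm (Fin n)),
      (∑ i, (dswap (σ.symm.trans v0) (V (ν i)) : ℝ)) = 1 / 4 * (n : ℝ) * ((m : ℝ) ^ 2 - m) := by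
    intro σ ν
    have hre' : (∑ i, (dswap (σ.symm.trans v0) (V (ν i)) : ℝ))
        = ∑ i, (dswap (σ.symm.trans v0) (V i) : ℝ) :=
      Equiv.sum_comp ν (fun i => (dswap (σ.symm.trans v0) (V i) : ℝ))
    have h4 := hV (σ.symm.trans v0)
    have hm : m ≤ m * m := by nlinarith
    rw [hre', sq]
    have := congrArg (fun k : ℕ => (k : ℝ)) h4
    push_cast [Nat.cast_sub hm] at this
    linarith
  have : dswapE (fun _ => v0) V
      = ⨅ _σ : Equiv.Perm (Fin m), ⨅ _ν : Equiv.Perm (Fin n),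
          (1 / 4 * (n : ℝ) * ((m : ℝ) ^ 2 - m)) := by
    unfold dswapE
    simp only [hcast]
  rw [this, ciInf_const, ciInf_const]

/-- With m! dividing n: the swap isomorphism distance between the identity
election (all n voters share the fixed order v0) and the uniformity election
(each of the m! orders appears n/m! times) equals (1/4)·n·(m²−m); and so does
the distance between the identity election and the antagonism election (half the
voters have the fixed order v1 and the other half its reverse). -/
theorem stmt14 {m n : ℕ} (hdvd : Nat.factorial m ∣ n)
    (v0 v1 : Equiv.Perm (Fin m))
    (VU : Fin n → Equiv.Perm (Fin m))
    (hVU : ∀ r : Equiv.Perm (Fin m),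
      (Finset.univ.filter (fun i : Fin n => VU i = r)).card = n / Nat.factorial m)
    (VA : Fin n → Equiv.Perm (Fin m))
    (hVA1 : (Finset.univ.filter (fun i : Fin n => VA i = v1)).card = n / 2)
    (hVA2 : ∀ i, VA i = v1 ∨ VA i = v1.trans Fin.revPerm) :
    dswapE (fun _ => v0) VU = (1 / 4) * (n : ℝ) * ((m : ℝ) ^ 2 - m) ∧
    dswapE (fun _ => v0) VA = (1 / 4) * (n : ℝ) * ((m : ℝ) ^ 2 - m) := by
  exact ⟨dswapE_const v0 VU (fun w => sumU hdvd w VU hVU),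
    dswapE_const v0 VA (fun w => sumA hdvd w v1 VA hVA1 hVA2)⟩

end
end

section
/- Every m×m position matrix (a matrix of nonnegative integers whose rows and columns each sum to n) can be decomposed as a sum of at most m²−2m+2 scaled permutation matrices; equivalently, for every position matrix X there exists an election E with at most m²−2m+2 distinct preference orders whose position matrix equals X. -/
open Finset Module

lemma decompAux {m : ℕ} : ∀ (d : ℕ) (M : Matrix (Fin m) (Fin m) ℕ) (n : ℕ),
    (∀ i, ∑ j, M i j = n) → (∀ j, ∑ i, M i j = n) →
    #{ij : Fin m × Fin m | M ij.1 ij.2 ≠ 0} ≤ d →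
    ∃ (k : ℕ) (w : Fin k → ℕ) (p : Fin k → Equiv.Perm (Fin m))
      (e : Fin k → Fin m × Fin m),
      (∀ i j, M i j = ∑ t, w t * (if p t j = i then 1 else 0)) ∧
      (∀ t, p t (e t).2 = (e t).1) ∧
      (∀ t s, t < s → p s (e t).2 ≠ (e t).1) ∧
      (∀ t j, M (p t j) j ≠ 0) := by
  intro d
  induction d with
  | zero =>
    intro M n hrow hcol hd
    have hM : ∀ i j, M i j = 0 := by
      intro i j
      by_contra h
      have : (i, j) ∈ ({ij : Fin m × Fin m | M ij.1 ij.2 ≠ 0} : Finset _) := by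
        simp [h]
      have := card_pos.2 ⟨_, this⟩
      omega
    exact ⟨0, fun t => 0, fun t => 1, fun t => t.elim0, by simp [hM],
      fun t => t.elim0, fun t => t.elim0, fun t => t.elim0⟩
  | succ d ih =>
    intro M n hrow hcol hd
    rcases isEmpty_or_nonempty (Fin m) with hm | hm
    · exact ⟨0, fun t => 0, fun t => 1, fun t => t.elim0,
        fun i => (hm.false i).elim, fun t => t.elim0, fun t => t.elim0, fun t => t.elim0⟩
    rcases Nat.eq_zero_or_pos n with hn | hn
    · have hM : ∀ i j, M i j = 0 := by
        intro i j
        have := hrow i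
        rw [hn] at this
        have := Finset.sum_eq_zero_iff.1 this j (mem_univ j)
        exact this
      exact ⟨0, fun t => 0, fun t => 1, fun t => t.elim0, by simp [hM],
        fun t => t.elim0, fun t => t.elim0, fun t => t.elim0⟩
    -- Hall step
    · set f : Fin m → Finset (Fin m) := fun j => {i | M i j ≠ 0} with hf
      have hall : ∀ A : Finset (Fin m), #A ≤ #(A.biUnion f) := by
        intro A
        have h1 : ∑ j ∈ A, ∑ i, M i j = #A * n := by
          simp [hcol, mul_comm]
        have h2 : ∀ j, ∑ i, M i j = ∑ i ∈ f j, M i j := by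
          intro j
          refine (Finset.sum_subset (filter_subset _ _) ?_).symm
          intro i _ hi
          simp [hf] at hi
          exact hi
        have h3 : ∀ j ∈ A, ∑ i ∈ f j, M i j ≤ ∑ i ∈ A.biUnion f, M i j := by
          intro j hj
          exact Finset.sum_le_sum_of_subset (fun i hi => Finset.mem_biUnion.2 ⟨j, hj, hi⟩)
        have h4 : ∑ j ∈ A, ∑ i ∈ A.biUnion f, M i j ≤ ∑ i ∈ A.biUnion f, n := by
          rw [Finset.sum_comm]
          refine Finset.sum_le_sum fun i _ => ?_
          rw [← hrow i]
          exact Finset.sum_le_sum_of_subset (Finset.subset_univ A)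
        have : #A * n ≤ #(A.biUnion f) * n := by
          calc #A * n = ∑ j ∈ A, ∑ i, M i j := h1.symm
            _ = ∑ j ∈ A, ∑ i ∈ f j, M i j := by
                exact Finset.sum_congr rfl fun j _ => h2 j
            _ ≤ ∑ j ∈ A, ∑ i ∈ A.biUnion f, M i j := Finset.sum_le_sum h3
            _ ≤ ∑ i ∈ A.biUnion f, n := h4
            _ = #(A.biUnion f) * n := by simp [mul_comm]
        exact Nat.le_of_mul_le_mul_right this hn
      obtain ⟨g, hginj, hg⟩ := (Finset.all_card_le_biUnion_card_iff_exists_injective f).1 hall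
      have hgbij : Function.Bijective g := (Finite.injective_iff_bijective).1 hginj
      set σ : Equiv.Perm (Fin m) := Equiv.ofBijective g hgbij with hσ
      have hσne : ∀ j, M (σ j) j ≠ 0 := by
        intro j
        have := hg j
        simp [hf] at this
        exact this
      obtain ⟨j₀, -, hj₀⟩ := Finset.exists_min_image univ (fun j => M (σ j) j) univ_nonempty
      set c : ℕ := M (σ j₀) j₀ with hc
      have hcpos : 0 < c := Nat.pos_of_ne_zero (hσne j₀)
      have hcle : ∀ j, c ≤ M (σ j) j := fun j => hj₀ j (mem_univ j)
      set N : Matrix (Fin m) (Fin m) ℕ := fun i j => M i j - (if σ j = i then c else 0) with hN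
      have hNM : ∀ i j, M i j = N i j + (if σ j = i then c else 0) := by
        intro i j
        simp only [hN]
        split
        · next h => rw [Nat.sub_add_cancel]; rw [← h]; exact hcle j
        · simp
      have hitesum : ∀ i : Fin m, ∑ j, (if σ j = i then c else 0) = c := by
        intro i
        rw [Finset.sum_congr rfl (fun j _ => by
          rw [show (if σ j = i then c else 0) = (if j = σ.symm i then c else 0) by
            simp [Equiv.eq_symm_apply, eq_comm]])]
        simp
      have hcn : c ≤ n := by
        rw [← hcol j₀]
        exact Finset.single_le_sum (f := fun i => M i j₀) (fun i _ => Nat.zero_le _)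
          (mem_univ (σ j₀))
      have hrowN : ∀ i, ∑ j, N i j = n - c := by
        intro i
        have := hrow i
        rw [Finset.sum_congr rfl (fun j _ => hNM i j), Finset.sum_add_distrib, hitesum i] at this
        omega
      have hcolN : ∀ j, ∑ i, N i j = n - c := by
        intro j
        have := hcol j
        rw [Finset.sum_congr rfl (fun i _ => hNM i j), Finset.sum_add_distrib] at this
        have h5 : ∑ i, (if σ j = i then c else 0) = c := by simp
        rw [h5] at this
        omega
      have hNzero : N (σ j₀) j₀ = 0 := by
        show M (σ j₀) j₀ - (if σ j₀ = σ j₀ then c else 0) = 0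
        rw [if_pos rfl, ← hc, Nat.sub_self]
      have hsub : (univ.filter fun ij : Fin m × Fin m => N ij.1 ij.2 ≠ 0) ⊂
          (univ.filter fun ij : Fin m × Fin m => M ij.1 ij.2 ≠ 0) := by
        constructor
        · intro ij hij
          simp only [mem_filter, mem_univ, true_and] at hij ⊢
          have := hNM ij.1 ij.2
          omega
        · intro hsub'
          have h1 : ((σ j₀, j₀) : Fin m × Fin m) ∈
              (univ.filter fun ij : Fin m × Fin m => M ij.1 ij.2 ≠ 0) := by
            simp [hσne j₀]
          have h2 := hsub' h1
          simp only [mem_filter, mem_univ, true_and] at h2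
          exact h2 hNzero
      have hdN : #{ij : Fin m × Fin m | N ij.1 ij.2 ≠ 0} ≤ d := by
        have := Finset.card_lt_card hsub
        have h6 : #(univ.filter fun ij : Fin m × Fin m => M ij.1 ij.2 ≠ 0) ≤ d + 1 := hd
        show #(univ.filter fun ij : Fin m × Fin m => N ij.1 ij.2 ≠ 0) ≤ d
        omega
      obtain ⟨k', w', p', e', ha', hb', hc', hd'⟩ := ih N (n - c) hrowN hcolN hdN
      refine ⟨k' + 1, Fin.cons c w', Fin.cons σ p', Fin.cons (σ j₀, j₀) e', ?_, ?_, ?_, ?_⟩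
      · intro i j
        rw [Fin.sum_univ_succ]
        simp only [Fin.cons_zero, Fin.cons_succ]
        rw [hNM i j, ha' i j]
        ring_nf
        rcases eq_or_ne (σ j) i with h | h <;> simp [h]
      · intro t
        refine Fin.cases ?_ ?_ t
        · simp
        · intro t'
          simpa using hb' t'
      · intro t s
        induction t using Fin.cases with
        | zero =>
          induction s using Fin.cases with
          | zero => intro h; exact absurd h (lt_irrefl _)
          | succ s' =>
            intro _
            simp only [Fin.cons_zero, Fin.cons_succ]
            intro h
            have h7 := hd' s' j₀
            rw [h] at h7
            exact h7 hNzero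
        | succ t' =>
          induction s using Fin.cases with
          | zero => intro h; exact absurd h (by simp [Fin.lt_def])
          | succ s' =>
            intro hlt
            simp only [Fin.cons_succ]
            exact hc' t' s' (Fin.succ_lt_succ_iff.1 hlt)
      · intro t j
        refine Fin.cases ?_ ?_ t
        · simpa using hσne j
        · intro t'
          simp only [Fin.cons_succ]
          have := hd' t' j
          have := hNM (p' t' j) j
          omega
noncomputable def psiMap (r : ℕ) :
    Matrix (Fin (r + 1)) (Fin (r + 1)) ℚ →ₗ[ℚ] (Fin r → ℚ) × (Fin r → ℚ) where
  toFun A := (fun i => (∑ j, A i.succ j) - ∑ j, A 0 j,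
              fun j => (∑ i, A i j.succ) - ∑ j, A 0 j)
  map_add' A B := by
    ext x <;> simp [Finset.sum_add_distrib] <;> ring
  map_smul' c A := by
    ext x <;> simp [← Finset.mul_sum, mul_sub]

lemma psiMap_surj (r : ℕ) : Function.Surjective (psiMap r) := by
  rintro ⟨u, v⟩
  set A : Matrix (Fin (r+1)) (Fin (r+1)) ℚ := Matrix.of fun i j =>
    Fin.cases (Fin.cases (-(∑ x, v x)) v j) (fun i' => Fin.cases (u i') (fun _ => 0) j) i with hA
  refine ⟨A, ?_⟩
  have hrow0 : (∑ j, A 0 j) = 0 := by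
    simp [hA, Fin.sum_univ_succ]
  ext x
  · simp only [psiMap, LinearMap.coe_mk, AddHom.coe_mk]
    rw [hrow0, Fin.sum_univ_succ]
    simp [hA]
  · simp only [psiMap, LinearMap.coe_mk, AddHom.coe_mk]
    rw [hrow0, Fin.sum_univ_succ]
    simp [hA]

lemma finrank_ker_psi (r : ℕ) :
    finrank ℚ (LinearMap.ker (psiMap r)) = r ^ 2 + 1 := by
  have h1 := LinearMap.finrank_range_add_finrank_ker (psiMap r)
  have h2 : finrank ℚ (LinearMap.range (psiMap r)) = r + r := by
    rw [LinearMap.range_eq_top.2 (psiMap_surj r), finrank_top]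
    simp [Module.finrank_prod, Module.finrank_pi]
  have h3 : finrank ℚ (Matrix (Fin (r+1)) (Fin (r+1)) ℚ) = (r+1) * (r+1) := by
    rw [Module.finrank_matrix]
    simp
  rw [h2, h3] at h1
  have : (r+1)*(r+1) = r^2 + 1 + (r + r) := by ring
  omega

lemma card_le_of_echelon {r k : ℕ} (p : Fin k → Equiv.Perm (Fin (r + 1)))
    (e : Fin k → Fin (r + 1) × Fin (r + 1))
    (hb : ∀ t, p t (e t).2 = (e t).1)
    (hc : ∀ t s, t < s → p s (e t).2 ≠ (e t).1) :
    k ≤ r ^ 2 + 1 := by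
  classical
  set P : Fin k → Matrix (Fin (r+1)) (Fin (r+1)) ℚ :=
    fun t => Matrix.of fun i j => if p t j = i then 1 else 0 with hP
  have hrowP : ∀ t i, ∑ j, P t i j = 1 := by
    intro t i
    rw [Finset.sum_congr rfl (fun j _ => by
      show (if p t j = i then (1:ℚ) else 0) = if j = (p t).symm i then 1 else 0
      simp [Equiv.eq_symm_apply, eq_comm])]
    simp
  have hcolP : ∀ t j, ∑ i, P t i j = 1 := by
    intro t j
    show (∑ i, if p t j = i then (1:ℚ) else 0) = 1
    simp
  have hmem : ∀ t, P t ∈ LinearMap.ker (psiMap r) := by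
    intro t
    rw [LinearMap.mem_ker]
    ext x <;> simp [psiMap, hrowP, hcolP]
  set b : Fin k → LinearMap.ker (psiMap r) := fun t => ⟨P t, hmem t⟩ with hbdef
  have hli : LinearIndependent ℚ b := by
    rw [Fintype.linearIndependent_iff]
    intro g hg
    by_contra hcon
    push_neg at hcon
    have hne : (univ.filter fun t => g t ≠ 0).Nonempty := by
      obtain ⟨t, ht⟩ := hcon
      exact ⟨t, by simp [ht]⟩
    obtain ⟨t₀, ht₀mem, ht₀min⟩ := Finset.exists_min_image _ id hne
    simp only [mem_filter, mem_univ, true_and] at ht₀mem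
    have h9 : (∑ t, g t • P t) = (0 : Matrix (Fin (r+1)) (Fin (r+1)) ℚ) := by
      have h := congrArg ((LinearMap.ker (psiMap r)).subtype) hg
      rw [map_sum] at h
      simpa [hbdef] using h
    have hsum : (∑ t, g t * (if p t (e t₀).2 = (e t₀).1 then 1 else 0)) = (0:ℚ) := by
      have h10 := congrFun (congrFun h9 (e t₀).1) (e t₀).2
      simpa [Matrix.sum_apply, hP] using h10
    have hterm : ∀ t, g t * (if p t (e t₀).2 = (e t₀).1 then 1 else 0) =
        if t = t₀ then g t₀ else if t < t₀ then g t * (if p t (e t₀).2 = (e t₀).1 then 1 else 0) else 0 := by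
      intro t
      rcases lt_trichotomy t t₀ with h | h | h
      · rw [if_neg h.ne, if_pos h]
      · subst h; rw [if_pos rfl, hb t, if_pos rfl, mul_one]
      · rw [if_neg h.ne', if_neg (lt_asymm h), if_neg (hc t₀ t h), mul_zero]
    rw [Finset.sum_congr rfl (fun t _ => hterm t)] at hsum
    have hzero : ∀ t, (if t = t₀ then g t₀ else if t < t₀ then g t * (if p t (e t₀).2 = (e t₀).1 then 1 else 0) else 0) = if t = t₀ then g t₀ else 0 := by
      intro t
      rcases eq_or_ne t t₀ with h | h
      · simp [h]
      · rw [if_neg h, if_neg h]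
        split
        · next hlt =>
          have hgz : g t = 0 := by
            by_contra hgt
            have h11 := ht₀min t (by simp [hgt])
            simp only [id] at h11
            exact absurd h11 (not_le.2 hlt)
          simp [hgz]
        · rfl
    rw [Finset.sum_congr rfl (fun t _ => hzero t)] at hsum
    simp at hsum
    exact ht₀mem hsum
  have := hli.fintype_card_le_finrank
  rw [Fintype.card_fin, finrank_ker_psi] at this
  exact this


/-- Every m×m position matrix (nonnegative integer matrix with all row and
column sums equal to n) is a sum of at most m²−2m+2 scaled permutation matrices;
equivalently, it is the position matrix of an election with at most m²−2m+2
distinct preference orders. Here the permutation matrix of a vote p (candidate ↦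
position) has entry 1 at (position, candidate) pairs (i, j) with p j = i. -/
theorem stmt16 {m n : ℕ} (X : Matrix (Fin m) (Fin m) ℕ)
    (hrow : ∀ i, ∑ j, X i j = n) (hcol : ∀ j, ∑ i, X i j = n) :
    ∃ (k : ℕ) (_ : k ≤ m ^ 2 + 2 - 2 * m)
      (w : Fin k → ℕ) (p : Fin k → Equiv.Perm (Fin m)),
      ∀ i j, X i j = ∑ t, w t * (if p t j = i then 1 else 0) := by
  rcases Nat.eq_zero_or_pos m with hm | hm
  · subst hm
    exact ⟨0, by norm_num, fun t => t.elim0, fun t => t.elim0, fun i => i.elim0⟩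
  · obtain ⟨r, rfl⟩ : ∃ r, m = r + 1 := ⟨m - 1, by omega⟩
    obtain ⟨k, w, p, e, ha, hb, hc, -⟩ :=
      decompAux (m := r + 1) (#{ij : Fin (r+1) × Fin (r+1) | X ij.1 ij.2 ≠ 0}) X n hrow hcol
        le_rfl
    have hk : k ≤ r ^ 2 + 1 := card_le_of_echelon p e hb hc
    have hbound : k ≤ (r + 1) ^ 2 + 2 - 2 * (r + 1) := by
      have h : (r + 1) ^ 2 = r ^ 2 + 2 * r + 1 := by ring
      omega
    exact ⟨k, hbound, w, p, ha⟩
end
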